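/- arXiv:2309.10059 — 13 statements merged into one kernel-verified Lean document; each statement's English description precedes it below -/
import Mathlib

section
/- If P is a monic complex polynomial of degree n ≥ 1 and L(P) = λ·P for some λ ∈ ℂ, then λ = δ_n^{(0)} = Σ_{i=1}^{min(n,N)} C(n,i)·i!·a_{i,i}. -/
/-! Comparing coefficients of `xⁿ` in `L(P) = λP`: since `deg aᵢ ≤ i` and `deg P⁽ⁱ⁾ ≤ n - i`, the
term `aᵢ P⁽ⁱ⁾` contributes `aᵢ,ᵢ · n!/(n-i)!` to it, and `n!/(n-i)! = C(n,i) i!`. -/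

open Polynomial

theorem Polynomial.coeff_mul_iterate_derivative_of_natDegree_le {R : Type*} [CommSemiring R]
    {P Q : R[X]} {i n : ℕ} (hQ : Q.natDegree ≤ i) (hP : P.natDegree ≤ n) :
    (Q * derivative^[i] P).coeff n = Q.coeff i * (n.descFactorial i • P.coeff n) := by
  rcases le_or_gt i n with hin | hni
  · have hD : (derivative^[i] P).natDegree ≤ n - i :=
      (natDegree_iterate_derivative P i).trans (Nat.sub_le_sub_right hP i)
    obtain ⟨m, rfl⟩ := Nat.exists_eq_add_of_le hin
    rw [coeff_mul_add_eq_of_natDegree_le hQ (by simpa using hD), coeff_iterate_derivative,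
      Nat.add_comm m i]
  · rw [iterate_derivative_eq_zero (hP.trans_lt hni), Nat.descFactorial_eq_zero_iff_lt.mpr hni]
    simp

theorem Polynomial.eq_sum_coeff_mul_descFactorial_of_sum_mul_iterate_derivative_eq
    {R : Type*} [CommSemiring R] (s : Finset ℕ) (q : ℕ → R[X])
    (hq : ∀ i ∈ s, (q i).natDegree ≤ i) {P : R[X]} (hP : P.Monic) {lam : R}
    (h : ∑ i ∈ s, q i * derivative^[i] P = C lam * P) :
    lam = ∑ i ∈ s, (q i).coeff i * P.natDegree.descFactorial i := by
  have hlead := congrArg (coeff · P.natDegree) h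
  simp only [finsetSum_coeff, coeff_C_mul, coeff_natDegree, hP.leadingCoeff, mul_one] at hlead
  rw [← hlead]
  refine Finset.sum_congr rfl fun i hi => ?_
  rw [coeff_mul_iterate_derivative_of_natDegree_le (hq i hi) le_rfl, coeff_natDegree,
    hP.leadingCoeff, nsmul_one]

theorem Polynomial.natDegree_sum_range_C_mul_X_pow_le {R : Type*} [Semiring R] (c : ℕ → R)
    (i : ℕ) : (∑ j ∈ Finset.range (i + 1), C (c j) * X ^ j).natDegree ≤ i :=
  natDegree_sum_le_of_forall_le _ _ fun _ hj =>
    (natDegree_C_mul_X_pow_le _ _).trans (Nat.lt_succ_iff.mp (Finset.mem_range.mp hj))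

theorem Polynomial.coeff_sum_range_C_mul_X_pow_self {R : Type*} [Semiring R] (c : ℕ → R)
    (i : ℕ) : (∑ j ∈ Finset.range (i + 1), C (c j) * X ^ j).coeff i = c i := by
  simp

theorem stmt_1_general (N : ℕ) (a : ℕ → ℕ → ℂ)
    (ha : ∀ i j : ℕ, (N < i ∨ i < j) → a i j = 0) (ha0 : a 0 0 = 0)
    (n : ℕ) (P : Polynomial ℂ) (hmonic : P.Monic) (hdeg : P.natDegree = n)
    (lam : ℂ)
    (hL : ∑ i ∈ Finset.Icc 1 N,
        (∑ j ∈ Finset.range (i + 1), Polynomial.C (a i j) * Polynomial.X ^ j) *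
          (⇑Polynomial.derivative)^[i] P = Polynomial.C lam * P) :
    lam = ∑ i ∈ Finset.Icc 0 n, (n.choose i * i.factorial : ℂ) * a i (i - 0) ∧
      lam = ∑ i ∈ Finset.Icc 1 (min n N), (n.choose i * i.factorial : ℂ) * a i i := by
  have hlam := eq_sum_coeff_mul_descFactorial_of_sum_mul_iterate_derivative_eq _ _
    (fun i _ => natDegree_sum_range_C_mul_X_pow_le (a i) i) hmonic hL
  simp only [coeff_sum_range_C_mul_X_pow_self, hdeg] at hlam
  have hterm : ∀ i, (n.choose i * i.factorial : ℂ) * a i i = a i i * n.descFactorial i := by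
    intro i
    rw [Nat.descFactorial_eq_factorial_mul_choose]
    push_cast
    ring
  simp only [Nat.sub_zero, hterm]
  have hmin : lam = ∑ i ∈ Finset.Icc 1 (min n N), a i i * n.descFactorial i := by
    rw [hlam]
    refine (Finset.sum_subset (Finset.Icc_subset_Icc_right (min_le_right n N)) ?_).symm
    intro i hi hi'
    simp only [Finset.mem_Icc] at hi hi'
    rw [Nat.descFactorial_eq_zero_iff_lt.mpr (by omega)]
    simp
  refine ⟨?_, hmin⟩
  rw [hmin]
  refine Finset.sum_subset (Finset.Icc_subset_Icc (Nat.zero_le 1) (min_le_left n N)) ?_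
  intro i hi hi'
  simp only [Finset.mem_Icc] at hi hi'
  rcases Nat.eq_zero_or_pos i with rfl | hi0
  · simp [ha0]
  · simp [ha i i (Or.inl (by omega))]

/-- If `P` is a monic complex polynomial of degree `n ≥ 1` and
`L(P) = λ·P` for some `λ ∈ ℂ`, then `λ = δ_n^{(0)} = Σ_{i=1}^{min(n,N)} C(n,i)·i!·a_{i,i}`. -/
theorem stmt_1 (N : ℕ) (hN : 1 ≤ N) (a : ℕ → ℕ → ℂ)
    (ha : ∀ i j : ℕ, (N < i ∨ i < j) → a i j = 0) (ha0 : a 0 0 = 0)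
    (n : ℕ) (hn : 1 ≤ n) (P : Polynomial ℂ) (hmonic : P.Monic) (hdeg : P.natDegree = n)
    (lam : ℂ)
    (hL : ∑ i ∈ Finset.Icc 1 N,
        (∑ j ∈ Finset.range (i + 1), Polynomial.C (a i j) * Polynomial.X ^ j) *
          (⇑Polynomial.derivative)^[i] P = Polynomial.C lam * P) :
    lam = ∑ i ∈ Finset.Icc 0 n, (n.choose i * i.factorial : ℂ) * a i (i - 0) ∧
      lam = ∑ i ∈ Finset.Icc 1 (min n N), (n.choose i * i.factorial : ℂ) * a i i :=
  stmt_1_general N a ha ha0 n P hmonic hdeg lam hL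
end

section
/- Assume L(P_n) = λ_n·P_n for all n ≥ 0, where λ_n = δ_n^{(0)}, and assume λ_0, λ_1, λ_2, … are pairwise distinct. Then for each n ≥ 1 and each i with 0 ≤ i ≤ n−1, the coefficient b_{n,i} equals the sum, over all compositions (i_1,…,i_k) of n−i (i.e. all finite tuples of positive integers with i_1+⋯+i_k = n−i), of the products ∏_{s=1}^{k} δ^{(i_s)}_{i+i_1+⋯+i_s} / (λ_n − λ_{i+i_1+⋯+i_{s−1}}), where for s = 1 the subscript i+i_1+⋯+i_{s−1} is understood to be i. -/
open Finset Polynomial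

lemma comp_zero_blocks (c : Composition 0) : c.blocks = [] := by
  rcases h : c.blocks with _ | ⟨b, l⟩
  · rfl
  · exfalso
    have hb : 0 < b := c.blocks_pos (by rw [h]; exact List.mem_cons_self)
    have := c.blocks_sum
    rw [h] at this
    simp [List.sum_cons] at this
    omega

lemma comp_sum_zero (f : Composition 0 → ℂ) : (∑ c : Composition 0, f c) = f (Composition.ones 0) := by
  have h : ∀ c : Composition 0, c = Composition.ones 0 := by
    intro c
    ext1
    rw [comp_zero_blocks c, comp_zero_blocks (Composition.ones 0)]
  rw [Finset.sum_eq_single_of_mem (Composition.ones 0) (Finset.mem_univ _)]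
  intro b _ hb
  exact absurd (h b) hb

/-- cons a block onto a composition -/
def consC (m : ℕ) (p : (k : ℕ) × Composition (m - k)) : Composition m :=
  if h : 1 ≤ p.1 ∧ p.1 ≤ m then
    ⟨p.1 :: p.2.blocks, by
      intro i hi
      rcases List.mem_cons.1 hi with rfl | hi
      · exact h.1
      · exact p.2.blocks_pos hi, by
      simp [List.sum_cons, p.2.blocks_sum]
      omega⟩
  else Composition.ones m

def unconsC (m : ℕ) (c : Composition m) : (k : ℕ) × Composition (m - k) :=
  ⟨c.blocks.headI, ⟨c.blocks.tail, by
    intro i hi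
    exact c.blocks_pos (List.mem_of_mem_tail hi), by
    rcases h : c.blocks with _ | ⟨b, l⟩
    · have := c.blocks_sum; rw [h] at this; simp at this ⊢; omega
    · have := c.blocks_sum; rw [h] at this; simp [List.sum_cons] at this ⊢
      omega⟩⟩

lemma comp_prod_eq_range (f : ℕ → ℕ → ℂ) {m : ℕ} (c : Composition m) :
    (∏ s : Fin c.length, f (c.sizeUpTo s) (c.blocksFun s))
      = ∏ s ∈ Finset.range c.length, f (c.sizeUpTo s) (c.blocks.getD s 0) := by
  rw [← Fin.prod_univ_eq_prod_range (fun s => f (c.sizeUpTo s) (c.blocks.getD s 0)) c.length]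
  apply Finset.prod_congr rfl
  intro s _
  congr 1
  show c.blocksFun s = _
  rw [Composition.blocksFun]
  rw [List.getD_eq_getElem _ _ (by exact s.2)]
  simp [List.get_eq_getElem]

lemma prod_cons {m m' : ℕ} (c : Composition m) (c' : Composition m') (k : ℕ)
    (h : c'.blocks = k :: c.blocks) (f : ℕ → ℕ → ℂ) :
    (∏ s : Fin c'.length, f (c'.sizeUpTo s) (c'.blocksFun s))
      = f 0 k * ∏ s : Fin c.length, f (k + c.sizeUpTo s) (c.blocksFun s) := by
  rw [comp_prod_eq_range, comp_prod_eq_range (fun u b => f (k+u) b) c]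
  have hl : c'.length = c.length + 1 := by simp [Composition.length, h]
  rw [hl, Finset.prod_range_succ']
  have h0 : c'.sizeUpTo 0 = 0 := c'.sizeUpTo_zero
  have hg0 : c'.blocks.getD 0 0 = k := by simp [h]
  rw [h0, hg0, mul_comm]
  congr 1
  apply Finset.prod_congr rfl
  intro s _
  congr 1
  · show c'.sizeUpTo (s+1) = k + c.sizeUpTo s
    simp [Composition.sizeUpTo, h, List.sum_cons]
  · simp [h]

lemma comp_decomp (f : ℕ → ℕ → ℂ) (m : ℕ) (hm : 1 ≤ m) :
    (∑ c : Composition m, ∏ s : Fin c.length, f (c.sizeUpTo s) (c.blocksFun s))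
    = ∑ k ∈ Finset.Icc 1 m, f 0 k *
        ∑ c : Composition (m - k), ∏ s : Fin c.length, f (k + c.sizeUpTo s) (c.blocksFun s) := by
  have hr : (∑ k ∈ Finset.Icc 1 m, f 0 k *
        ∑ c : Composition (m - k), ∏ s : Fin c.length, f (k + c.sizeUpTo s) (c.blocksFun s))
      = ∑ p ∈ (Finset.Icc 1 m).sigma (fun k => (Finset.univ : Finset (Composition (m - k)))),
          f 0 p.1 * ∏ s : Fin p.2.length, f (p.1 + p.2.sizeUpTo s) (p.2.blocksFun s) := by
    rw [Finset.sum_sigma]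
    simp [Finset.mul_sum]
  rw [hr]
  symm
  apply Finset.sum_nbij (consC m)
  · intro p _; exact Finset.mem_univ _
  · intro p hp q hq hpq
    simp only [Finset.coe_sigma, Set.mem_sigma_iff, Finset.mem_coe, Finset.mem_Icc,
      Finset.mem_univ] at hp hq
    have hbp : (consC m p).blocks = p.1 :: p.2.blocks := by
      rw [consC, dif_pos ⟨hp.1.1, hp.1.2⟩]
    have hbq : (consC m q).blocks = q.1 :: q.2.blocks := by
      rw [consC, dif_pos ⟨hq.1.1, hq.1.2⟩]
    have hb : p.1 :: p.2.blocks = q.1 :: q.2.blocks := by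
      rw [← hbp, ← hbq, hpq]
    obtain ⟨k, c⟩ := p
    obtain ⟨k', c'⟩ := q
    simp only [List.cons.injEq] at hb
    obtain ⟨rfl, hb2⟩ := hb
    exact congrArg (Sigma.mk k) (Composition.ext hb2)
  · intro c _
    rcases hh : c.blocks with _ | ⟨b, l⟩
    · exfalso
      have := c.blocks_sum
      rw [hh] at this
      simp at this
      omega
    · have hsum := c.blocks_sum
      rw [hh, List.sum_cons] at hsum
      have hk1 : 1 ≤ b := c.blocks_pos (by rw [hh]; exact List.mem_cons_self)
      refine ⟨unconsC m c, ?_, ?_⟩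
      · simp only [Finset.coe_sigma, Set.mem_sigma_iff, Finset.mem_coe, Finset.mem_Icc,
          Finset.mem_univ, and_true, unconsC, hh, List.headI_cons]
        omega
      · symm
        apply Composition.ext
        rw [consC, dif_pos]
        · show c.blocks = c.blocks.headI :: c.blocks.tail
          rw [hh]
          simp
        · show 1 ≤ (unconsC m c).1 ∧ (unconsC m c).1 ≤ m
          simp only [unconsC, hh, List.headI_cons]
          omega
  · intro p hp
    simp only [Finset.mem_sigma, Finset.mem_Icc] at hp
    have hb : (consC m p).blocks = p.1 :: p.2.blocks := by
      rw [consC, dif_pos ⟨hp.1.1, hp.1.2⟩]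
    exact (prod_cons p.2 (consC m p) p.1 hb f).symm

lemma rec_key (N : ℕ) (a : ℕ → ℕ → ℂ)
    (ha : ∀ i j : ℕ, (N < i ∨ i < j) → a i j = 0) (ha0 : a 0 0 = 0)
    (p : Polynomial ℂ) (n : ℕ) (hdeg : p.natDegree = n)
    (lam : ℕ → ℂ)
    (hlam : ∀ n, lam n = ∑ i ∈ Finset.Icc 0 n, (n.choose i * i.factorial : ℂ) * a i (i - 0))
    (hLn : ∑ i ∈ Finset.Icc 1 N,
        (∑ j ∈ Finset.range (i + 1), Polynomial.C (a i j) * Polynomial.X ^ j) *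
          (⇑Polynomial.derivative)^[i] p = Polynomial.C (lam n) * p)
    (r : ℕ) (hr : r < n) :
    (lam n - lam r) * p.coeff r
      = ∑ k ∈ Finset.Icc 1 (n - r),
          (∑ t ∈ Finset.Icc k (r + k), ((r + k).choose t * t.factorial : ℂ) * a t (t - k))
            * p.coeff (r + k) := by
  classical
  set B := N + n with hB
  set T : ℕ → ℕ → ℂ := fun i j =>
    a i j * (if j ≤ r then (((r - j + i).descFactorial i : ℕ) : ℂ) * p.coeff (r - j + i) else 0)
    with hT
  set W : ℕ → ℕ → ℂ := fun k i =>
    if i ≤ r + k then ((r + k).choose i * i.factorial : ℂ) * a i (i - k) * p.coeff (r + k) else 0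
    with hW
  -- coefficient r of the eigen-equation
  have hcoeff : (∑ i ∈ Finset.Icc 1 N, ∑ j ∈ Finset.range (i + 1), T i j) = lam n * p.coeff r := by
    have h0 := congrArg (fun q => Polynomial.coeff q r) hLn
    simp only [Polynomial.finset_sum_coeff, Polynomial.coeff_C_mul] at h0
    rw [← h0]
    apply Finset.sum_congr rfl
    intro i _
    rw [Finset.sum_mul, Polynomial.finset_sum_coeff]
    apply Finset.sum_congr rfl
    intro j _
    have hmul : Polynomial.C (a i j) * Polynomial.X ^ j * (⇑Polynomial.derivative)^[i] p
        = Polynomial.C (a i j) * ((⇑Polynomial.derivative)^[i] p * Polynomial.X ^ j) := by ring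
    rw [hmul, Polynomial.coeff_C_mul, Polynomial.coeff_mul_X_pow', hT]
    simp only []
    split_ifs with hjr
    · rw [Polynomial.coeff_iterate_derivative, nsmul_eq_mul]
    · rw [mul_zero]
  -- extend outer sum
  have e2 : (∑ i ∈ Finset.Icc 1 N, ∑ j ∈ Finset.range (i + 1), T i j)
      = ∑ i ∈ Finset.range (B + 1), ∑ j ∈ Finset.range (i + 1), T i j := by
    apply Finset.sum_subset
    · intro i hi
      simp only [Finset.mem_Icc] at hi
      simp only [Finset.mem_range]
      omega
    · intro i hi hni
      simp only [Finset.mem_range] at hi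
      simp only [Finset.mem_Icc, not_and, not_le] at hni
      apply Finset.sum_eq_zero
      intro j hj
      simp only [Finset.mem_range] at hj
      rw [hT]
      simp only []
      rcases Nat.lt_or_ge N i with hNi | hNi
      · rw [ha i j (Or.inl hNi), zero_mul]
      · have hi0 : i = 0 := by omega
        subst hi0
        have hj0 : j = 0 := by omega
        subst hj0
        rw [ha0, zero_mul]
  -- reflect inner index
  have e3 : ∀ i, (∑ j ∈ Finset.range (i + 1), T i j)
      = ∑ k ∈ Finset.range (i + 1), T i (i - k) := by
    intro i
    rw [← Finset.sum_range_reflect (fun j => T i (i - j)) (i + 1)]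
    apply Finset.sum_congr rfl
    intro k hk
    simp only [Finset.mem_range] at hk
    congr 1
    omega
  -- swap sums
  have e4 : (∑ i ∈ Finset.range (B + 1), ∑ k ∈ Finset.range (i + 1), T i (i - k))
      = ∑ k ∈ Finset.range (B + 1), ∑ i ∈ Finset.Icc k B, T i (i - k) := by
    apply Finset.sum_comm'
    intro i k
    simp only [Finset.mem_range, Finset.mem_Icc]
    omega
  -- per-k evaluation
  have e5 : ∀ k, (∑ i ∈ Finset.Icc k B, T i (i - k))
      = (∑ t ∈ Finset.Icc k (r + k), ((r + k).choose t * t.factorial : ℂ) * a t (t - k))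
          * p.coeff (r + k) := by
    intro k
    have eL : (∑ i ∈ Finset.Icc k B, T i (i - k)) = ∑ i ∈ Finset.Icc k (B + r + k), W k i := by
      rw [show (∑ i ∈ Finset.Icc k B, T i (i - k)) = ∑ i ∈ Finset.Icc k B, W k i from ?_]
      · apply Finset.sum_subset
        · intro i hi
          simp only [Finset.mem_Icc] at hi ⊢
          omega
        · intro i hi hni
          simp only [Finset.mem_Icc] at hi hni
          rw [hW]
          simp only []
          have hai : a i (i - k) = 0 := ha i (i - k) (Or.inl (by omega))
          split_ifs
          · rw [hai, mul_zero, zero_mul]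
          · rfl
      · apply Finset.sum_congr rfl
        intro i hi
        simp only [Finset.mem_Icc] at hi
        rw [hT, hW]
        simp only []
        by_cases hik : i ≤ r + k
        · rw [if_pos (by omega : i - k ≤ r), if_pos hik]
          have h1 : r - (i - k) + i = r + k := by omega
          rw [h1, Nat.descFactorial_eq_factorial_mul_choose]
          push_cast
          ring
        · rw [if_neg (by omega : ¬ i - k ≤ r), if_neg hik, mul_zero]
    have eR : (∑ t ∈ Finset.Icc k (r + k),
        ((r + k).choose t * t.factorial : ℂ) * a t (t - k) * p.coeff (r + k))
        = ∑ t ∈ Finset.Icc k (r + k), W k t := by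
      apply Finset.sum_congr rfl
      intro t ht
      simp only [Finset.mem_Icc] at ht
      rw [hW]
      simp only []
      rw [if_pos ht.2]
    rw [eL, Finset.sum_mul, eR]
    symm
    apply Finset.sum_subset
    · intro t ht
      simp only [Finset.mem_Icc] at ht ⊢
      omega
    · intro t ht hnt
      simp only [Finset.mem_Icc] at ht hnt
      rw [hW]
      simp only []
      rw [if_neg (by omega)]
  -- restrict the outer sum to Icc 0 (n - r)
  have e6 : (∑ k ∈ Finset.range (B + 1),
      (∑ t ∈ Finset.Icc k (r + k), ((r + k).choose t * t.factorial : ℂ) * a t (t - k))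
        * p.coeff (r + k))
      = ∑ k ∈ Finset.Icc 0 (n - r),
      (∑ t ∈ Finset.Icc k (r + k), ((r + k).choose t * t.factorial : ℂ) * a t (t - k))
        * p.coeff (r + k) := by
    symm
    apply Finset.sum_subset
    · intro k hk
      simp only [Finset.mem_Icc] at hk
      simp only [Finset.mem_range]
      omega
    · intro k hk hnk
      simp only [Finset.mem_range] at hk
      simp only [Finset.mem_Icc] at hnk
      have : p.coeff (r + k) = 0 := by
        apply Polynomial.coeff_eq_zero_of_natDegree_lt
        omega
      rw [this, mul_zero]
  -- split off k = 0
  have hsplit : Finset.Icc 0 (n - r) = insert 0 (Finset.Icc 1 (n - r)) := by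
    ext k
    simp only [Finset.mem_Icc, Finset.mem_insert]
    omega
  have e7 : (∑ k ∈ Finset.Icc 0 (n - r),
      (∑ t ∈ Finset.Icc k (r + k), ((r + k).choose t * t.factorial : ℂ) * a t (t - k))
        * p.coeff (r + k))
      = lam r * p.coeff r
        + ∑ k ∈ Finset.Icc 1 (n - r),
          (∑ t ∈ Finset.Icc k (r + k), ((r + k).choose t * t.factorial : ℂ) * a t (t - k))
            * p.coeff (r + k) := by
    rw [hsplit, Finset.sum_insert (by simp)]
    congr 2
    rw [hlam r]
    simp
  -- assemble
  have main : lam n * p.coeff r = lam r * p.coeff r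
      + ∑ k ∈ Finset.Icc 1 (n - r),
          (∑ t ∈ Finset.Icc k (r + k), ((r + k).choose t * t.factorial : ℂ) * a t (t - k))
            * p.coeff (r + k) := by
    rw [← e7, ← e6, ← hcoeff, e2]
    rw [Finset.sum_congr rfl (fun i _ => e3 i), e4]
    exact Finset.sum_congr rfl (fun k _ => e5 k)
  linear_combination main

/-- Assume `L(P_n) = λ_n·P_n` for all `n ≥ 0`, where `λ_n = δ_n^{(0)}`,
and assume `λ_0, λ_1, λ_2, …` are pairwise distinct.  Then for each `n ≥ 1` and each
`i` with `0 ≤ i ≤ n−1`, the coefficient `b_{n,i}` equals the sum, over all compositions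
`(i_1,…,i_k)` of `n−i`, of the products
`∏_{s=1}^{k} δ^{(i_s)}_{i+i_1+⋯+i_s} / (λ_n − λ_{i+i_1+⋯+i_{s−1}})`. -/
theorem stmt_3 (N : ℕ) (hN : 1 ≤ N) (a : ℕ → ℕ → ℂ)
    (ha : ∀ i j : ℕ, (N < i ∨ i < j) → a i j = 0) (ha0 : a 0 0 = 0)
    (P : ℕ → Polynomial ℂ) (hmonic : ∀ n, (P n).Monic)
    (hdeg : ∀ n, (P n).natDegree = n)
    (lam : ℕ → ℂ) (hlam0 : lam 0 = 0)
    (hlam : ∀ n, lam n = ∑ i ∈ Finset.Icc 0 n, (n.choose i * i.factorial : ℂ) * a i (i - 0))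
    (hdistinct : Function.Injective lam)
    (hL : ∀ n, ∑ i ∈ Finset.Icc 1 N,
        (∑ j ∈ Finset.range (i + 1), Polynomial.C (a i j) * Polynomial.X ^ j) *
          (⇑Polynomial.derivative)^[i] (P n) = Polynomial.C (lam n) * P n)
    (n : ℕ) (hn : 1 ≤ n) (i : ℕ) (hi : i ≤ n - 1) :
    (P n).coeff i =
      ∑ c : Composition (n - i), ∏ s : Fin c.length,
        (∑ t ∈ Finset.Icc (c.blocksFun s) (i + c.sizeUpTo ((s : ℕ) + 1)),
            ((i + c.sizeUpTo ((s : ℕ) + 1)).choose t * t.factorial : ℂ) *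
              a t (t - c.blocksFun s))
          / (lam n - lam (i + c.sizeUpTo (s : ℕ))) := by
  classical
  have key : ∀ r, r < n → (lam n - lam r) * (P n).coeff r
      = ∑ k ∈ Finset.Icc 1 (n - r),
          (∑ t ∈ Finset.Icc k (r + k), ((r + k).choose t * t.factorial : ℂ) * a t (t - k))
            * (P n).coeff (r + k) :=
    fun r hr => rec_key N a ha ha0 (P n) n (hdeg n) lam hlam (hL n) r hr
  set g : ℕ → ℕ → ℕ → ℂ := fun i u b =>
    (∑ t ∈ Finset.Icc b (i + u + b), ((i + u + b).choose t * t.factorial : ℂ) * a t (t - b))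
      / (lam n - lam (i + u)) with hg
  have main : ∀ m : ℕ, ∀ i : ℕ, i + m = n →
      (P n).coeff i = ∑ c : Composition m, ∏ s : Fin c.length,
        g i (c.sizeUpTo s) (c.blocksFun s) := by
    intro m
    induction m using Nat.strong_induction_on with
    | _ m IH =>
      intro i him
      rcases Nat.eq_zero_or_pos m with hm0 | hm1
      · subst hm0
        have hin : i = n := by omega
        rw [hin, comp_sum_zero]
        have h1 : (P n).coeff n = 1 := by
          have := (hmonic n).coeff_natDegree
          rwa [hdeg n] at this
        rw [h1]
        symm
        have hl : (Composition.ones 0).length = 0 := by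
          simp [Composition.ones_length]
        haveI : IsEmpty (Fin (Composition.ones 0).length) := by
          rw [hl]
          infer_instance
        apply Finset.prod_of_isEmpty
      · have hin : i < n := by omega
        have hne : lam n - lam i ≠ 0 := by
          rw [sub_ne_zero]
          intro h
          exact absurd (hdistinct h) (by omega)
        have hk := key i hin
        rw [show n - i = m from by omega] at hk
        have harg : ∀ k u b, g i (k + u) b = g (i + k) u b := by
          intro k u b
          rw [hg]
          simp only []
          rw [show i + (k + u) = i + k + u from by omega]
        rw [comp_decomp (g i) m hm1]
        have hinner : ∀ k ∈ Finset.Icc 1 m,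
            (∑ c : Composition (m - k), ∏ s : Fin c.length,
              g i (k + c.sizeUpTo s) (c.blocksFun s)) = (P n).coeff (i + k) := by
          intro k hkm
          simp only [Finset.mem_Icc] at hkm
          rw [IH (m - k) (by omega) (i + k) (by omega)]
          apply Finset.sum_congr rfl
          intro c _
          apply Finset.prod_congr rfl
          intro s _
          exact harg k (c.sizeUpTo s) (c.blocksFun s)
        have hg0 : ∀ k, g i 0 k
            = (∑ t ∈ Finset.Icc k (i + k), ((i + k).choose t * t.factorial : ℂ) * a t (t - k))
                / (lam n - lam i) := by
          intro k
          rw [hg]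
          simp only []
          rw [show i + 0 + k = i + k from by omega, show i + 0 = i from by omega]
        calc (P n).coeff i
            = (∑ k ∈ Finset.Icc 1 m,
                (∑ t ∈ Finset.Icc k (i + k), ((i + k).choose t * t.factorial : ℂ) * a t (t - k))
                  * (P n).coeff (i + k)) / (lam n - lam i) := by
              rw [← hk, mul_comm, mul_div_assoc, div_self hne, mul_one]
          _ = ∑ k ∈ Finset.Icc 1 m, g i 0 k *
                ∑ c : Composition (m - k), ∏ s : Fin c.length,
                  g i (k + c.sizeUpTo s) (c.blocksFun s) := by
              rw [Finset.sum_div]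
              apply Finset.sum_congr rfl
              intro k hkm
              rw [hinner k hkm, hg0 k]
              ring
  have hfin := main (n - i) i (by omega)
  rw [hfin]
  apply Finset.sum_congr rfl
  intro c _
  apply Finset.prod_congr rfl
  intro s _
  rw [Composition.sizeUpTo_succ' c s, hg]
  simp only []
  rw [← add_assoc]
end

section
/- Assume L(P_n) = λ_n·P_n for all n ≥ 0. For n ≥ 1 and 1 ≤ k ≤ n, let G_n^{(k)} be the k×k complex matrix whose (1,j)-entry is (λ_{n−k} − λ_{n−k+j})·b_{n−k+j,n−k} for j = 1,…,k, and whose (i,j)-entry for i ≥ 2 is: 1 if j = i−1, 0 if j < i−1, and b_{n−k+j, n−k+i−1} if j ≥ i. Then (−1)^k·δ_n^{(k)} = det G_n^{(k)}. -/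
open Finset Polynomial

private lemma triangle_swap (M : ℕ) (f : ℕ → ℕ → ℂ) :
    ∑ i ∈ range (M + 1), ∑ j ∈ range (i + 1), f i j
      = ∑ l ∈ range (M + 1), ∑ i ∈ Icc l M, f i (i - l) := by
  rw [Finset.sum_sigma', Finset.sum_sigma']
  refine Finset.sum_nbij' (fun p => ⟨p.1 - p.2, p.1⟩) (fun p => ⟨p.2, p.2 - p.1⟩)
    ?_ ?_ ?_ ?_ ?_
  · rintro ⟨x, y⟩ h
    simp only [Finset.mem_sigma, Finset.mem_range, Finset.mem_Icc] at *
    omega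
  · rintro ⟨x, y⟩ h
    simp only [Finset.mem_sigma, Finset.mem_range, Finset.mem_Icc] at *
    omega
  · rintro ⟨x, y⟩ h
    simp only [Finset.mem_sigma, Finset.mem_range, Finset.mem_Icc] at h
    have e : x - (x - y) = y := by omega
    simp [e]
  · rintro ⟨x, y⟩ h
    simp only [Finset.mem_sigma, Finset.mem_range, Finset.mem_Icc] at h
    have e : y - (y - x) = x := by omega
    simp [e]
  · rintro ⟨x, y⟩ h
    simp only [Finset.mem_sigma, Finset.mem_range, Finset.mem_Icc] at h
    have : x - (x - y) = y := by omega
    simp [this]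

private lemma lemA (N : ℕ) (a : ℕ → ℕ → ℂ)
    (ha : ∀ i j : ℕ, (N < i ∨ i < j) → a i j = 0) (ha0 : a 0 0 = 0)
    (P : ℕ → Polynomial ℂ) (hdeg : ∀ n, (P n).natDegree = n)
    (lam : ℕ → ℂ)
    (hL : ∀ n, ∑ i ∈ Finset.Icc 1 N,
        (∑ j ∈ Finset.range (i + 1), Polynomial.C (a i j) * Polynomial.X ^ j) *
          (⇑Polynomial.derivative)^[i] (P n) = Polynomial.C (lam n) * P n)
    (t s : ℕ) (hst : s ≤ t) :
    lam t * (P t).coeff s =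
      ∑ l ∈ range (t - s + 1), (P t).coeff (s + l) *
        ∑ i ∈ Icc l (s + l), ((s + l).choose i * i.factorial : ℂ) * a i (i - l) := by
  have h := congrArg (fun p => Polynomial.coeff p s) (hL t)
  simp only [finset_sum_coeff, coeff_C_mul] at h
  have h2 : ∀ i ∈ Icc 1 N,
      ((∑ j ∈ range (i + 1), C (a i j) * X ^ j) * (⇑derivative)^[i] (P t)).coeff s
        = ∑ j ∈ range (i + 1), a i j *
            (if j ≤ s then ((s - j + i).descFactorial i : ℂ) * (P t).coeff (s - j + i)
             else 0) := by
    intro i _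
    rw [Finset.sum_mul, finset_sum_coeff]
    refine Finset.sum_congr rfl fun j _ => ?_
    rw [mul_assoc, coeff_C_mul, coeff_X_pow_mul']
    by_cases hjs : j ≤ s
    · rw [if_pos hjs, if_pos hjs, coeff_iterate_derivative, nsmul_eq_mul]
    · rw [if_neg hjs, if_neg hjs, mul_zero]
  rw [Finset.sum_congr rfl h2] at h
  have hins : range (N + 1) = insert 0 (Icc 1 N) := by
    ext x
    simp only [Finset.mem_range, Finset.mem_insert, Finset.mem_Icc]
    omega
  have h3 : ∑ i ∈ range (N + 1), ∑ j ∈ range (i + 1), a i j *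
      (if j ≤ s then ((s - j + i).descFactorial i : ℂ) * (P t).coeff (s - j + i) else 0)
      = lam t * (P t).coeff s := by
    rw [hins, Finset.sum_insert (by simp), Finset.sum_range_one, ha0, zero_mul, zero_add]
    exact h
  rw [triangle_swap] at h3
  rw [← h3]
  -- both sides equal a common big sum
  set B := N + t with hB
  have key :
      (∑ l ∈ range (N + 1), ∑ i ∈ Icc l N, a i (i - l) *
        (if i - l ≤ s then ((s - (i - l) + i).descFactorial i : ℂ) * (P t).coeff (s - (i - l) + i)
         else 0))
      = ∑ l ∈ range (B + 1), ∑ i ∈ Icc l B,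
          (if i ≤ s + l then
            (P t).coeff (s + l) * (((s + l).choose i * i.factorial : ℂ) * a i (i - l))
           else 0) := by
    rw [Finset.sum_subset (Finset.range_subset_range.2 (by omega : N + 1 ≤ B + 1))
      (fun l _ hl => by
        rw [Finset.Icc_eq_empty (by simp only [Finset.mem_range] at hl ⊢; omega),
          Finset.sum_empty])]
    refine Finset.sum_congr rfl fun l _ => ?_
    rw [Finset.sum_subset (Finset.Icc_subset_Icc_right (by omega : N ≤ B))
      (fun i hi hi2 => by
        have : N < i := by
          simp only [Finset.mem_Icc] at hi hi2; omega
        rw [ha i (i - l) (Or.inl this), zero_mul])]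
    refine Finset.sum_congr rfl fun i hi => ?_
    simp only [Finset.mem_Icc] at hi
    by_cases hisl : i ≤ s + l
    · have h4 : i - l ≤ s := by omega
      have h5 : s - (i - l) + i = s + l := by omega
      rw [if_pos h4, if_pos hisl, h5, Nat.descFactorial_eq_factorial_mul_choose]
      push_cast
      ring
    · rw [if_neg (by omega : ¬ i - l ≤ s), if_neg hisl, mul_zero]
  have key2 : (∑ l ∈ range (t - s + 1), (P t).coeff (s + l) *
        ∑ i ∈ Icc l (s + l), ((s + l).choose i * i.factorial : ℂ) * a i (i - l))
      = ∑ l ∈ range (B + 1), ∑ i ∈ Icc l B,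
        (if i ≤ s + l then
          (P t).coeff (s + l) * (((s + l).choose i * i.factorial : ℂ) * a i (i - l))
         else 0) := by
    have step1 : ∀ l ∈ range (t - s + 1), (P t).coeff (s + l) *
        (∑ i ∈ Icc l (s + l), ((s + l).choose i * i.factorial : ℂ) * a i (i - l))
        = ∑ i ∈ Icc l B,
          (if i ≤ s + l then
            (P t).coeff (s + l) * (((s + l).choose i * i.factorial : ℂ) * a i (i - l))
           else 0) := by
      intro l hl
      simp only [Finset.mem_range] at hl
      rw [Finset.mul_sum]
      rw [Finset.sum_congr rfl (fun i hi => (if_pos (Finset.mem_Icc.1 hi).2).symm)]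
      exact Finset.sum_subset (Finset.Icc_subset_Icc_right (by omega : s + l ≤ B))
        (fun i hi hi2 => by
          have : s + l < i := by simp only [Finset.mem_Icc] at hi hi2; omega
          rw [if_neg (by omega)])
    rw [Finset.sum_congr rfl step1]
    refine Finset.sum_subset (Finset.range_subset_range.2 (by omega : t - s + 1 ≤ B + 1))
      (fun l _ hl2 => ?_)
    have hts : t - s < l := by simp only [Finset.mem_range] at hl2 ⊢; omega
    refine Finset.sum_eq_zero fun i _ => ?_
    split_ifs with hc
    · rw [coeff_eq_zero_of_natDegree_lt (by rw [hdeg]; omega), zero_mul]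
    · rfl
  rw [key, key2]

private lemma lemB (N : ℕ) (a : ℕ → ℕ → ℂ)
    (ha : ∀ i j : ℕ, (N < i ∨ i < j) → a i j = 0) (ha0 : a 0 0 = 0)
    (P : ℕ → Polynomial ℂ) (hmonic : ∀ n, (P n).Monic) (hdeg : ∀ n, (P n).natDegree = n)
    (lam : ℕ → ℂ)
    (hL : ∀ n, ∑ i ∈ Finset.Icc 1 N,
        (∑ j ∈ Finset.range (i + 1), Polynomial.C (a i j) * Polynomial.X ^ j) *
          (⇑Polynomial.derivative)^[i] (P n) = Polynomial.C (lam n) * P n)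
    (t : ℕ) :
    lam t = ∑ i ∈ Icc 0 t, (t.choose i * i.factorial : ℂ) * a i (i - 0) := by
  have h := lemA N a ha ha0 P hdeg lam hL t t le_rfl
  rw [Nat.sub_self, Finset.sum_range_one, Nat.add_zero] at h
  have hc : (P t).coeff t = 1 := by
    have := (hmonic t).coeff_natDegree
    rwa [hdeg] at this
  rw [hc, mul_one, one_mul] at h
  exact h

private lemma lemC (N : ℕ) (a : ℕ → ℕ → ℂ)
    (ha : ∀ i j : ℕ, (N < i ∨ i < j) → a i j = 0) (ha0 : a 0 0 = 0)
    (P : ℕ → Polynomial ℂ) (hmonic : ∀ n, (P n).Monic) (hdeg : ∀ n, (P n).natDegree = n)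
    (lam : ℕ → ℂ)
    (hL : ∀ n, ∑ i ∈ Finset.Icc 1 N,
        (∑ j ∈ Finset.range (i + 1), Polynomial.C (a i j) * Polynomial.X ^ j) *
          (⇑Polynomial.derivative)^[i] (P n) = Polynomial.C (lam n) * P n)
    (m t : ℕ) (hmt : m ≤ t) :
    (lam m - lam t) * (P t).coeff m
      = -∑ l ∈ range (t - m), (P t).coeff (m + l + 1) *
          ∑ i ∈ Icc (l + 1) (m + l + 1),
            ((m + l + 1).choose i * i.factorial : ℂ) * a i (i - (l + 1)) := by
  have h := lemA N a ha ha0 P hdeg lam hL t m hmt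
  rw [Finset.sum_range_succ'] at h
  have hB := lemB N a ha ha0 P hmonic hdeg lam hL m
  rw [Nat.add_zero] at h
  have e : ∀ l : ℕ, m + (l + 1) = m + l + 1 := fun l => rfl
  simp only [e] at h
  rw [← hB] at h
  -- h : ∑ ... + (P t).coeff m * lam m = lam t * (P t).coeff m
  linear_combination -h
/-- Assume `L(P_n) = λ_n·P_n` for all `n ≥ 0`.  For `n ≥ 1` and
`1 ≤ k ≤ n`, let `G_n^{(k)}` be the `k×k` complex matrix whose `(1,j)`-entry is
`(λ_{n−k} − λ_{n−k+j})·b_{n−k+j,n−k}` for `j = 1,…,k`, and whose `(i,j)`-entry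
for `i ≥ 2` is: `1` if `j = i−1`, `0` if `j < i−1`, and `b_{n−k+j, n−k+i−1}` if
`j ≥ i`.  Then `(−1)^k·δ_n^{(k)} = det G_n^{(k)}`. -/
theorem stmt_5 (N : ℕ) (hN : 1 ≤ N) (a : ℕ → ℕ → ℂ)
    (ha : ∀ i j : ℕ, (N < i ∨ i < j) → a i j = 0) (ha0 : a 0 0 = 0)
    (P : ℕ → Polynomial ℂ) (hmonic : ∀ n, (P n).Monic)
    (hdeg : ∀ n, (P n).natDegree = n)
    (lam : ℕ → ℂ) (hlam0 : lam 0 = 0)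
    (hL : ∀ n, ∑ i ∈ Finset.Icc 1 N,
        (∑ j ∈ Finset.range (i + 1), Polynomial.C (a i j) * Polynomial.X ^ j) *
          (⇑Polynomial.derivative)^[i] (P n) = Polynomial.C (lam n) * P n)
    (n k : ℕ) (hn : 1 ≤ n) (hk1 : 1 ≤ k) (hkn : k ≤ n) :
    (-1 : ℂ) ^ k * (∑ i ∈ Finset.Icc k n, (n.choose i * i.factorial : ℂ) * a i (i - k)) =
      Matrix.det (Matrix.of fun i j : Fin k =>
        if (i : ℕ) = 0 then
          (lam (n - k) - lam (n - k + (j : ℕ) + 1)) * (P (n - k + (j : ℕ) + 1)).coeff (n - k)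
        else if (j : ℕ) + 1 = (i : ℕ) then 1
        else if (j : ℕ) + 1 < (i : ℕ) then 0
        else (P (n - k + (j : ℕ) + 1)).coeff (n - k + (i : ℕ))) := by
  obtain ⟨k', rfl⟩ : ∃ k', k = k' + 1 := ⟨k - 1, by omega⟩
  set m := n - (k' + 1) with hm
  have hmk : m + k' + 1 = n := by omega
  set G : Matrix (Fin (k' + 1)) (Fin (k' + 1)) ℂ := Matrix.of fun i j : Fin (k' + 1) =>
        if (i : ℕ) = 0 then
          (lam m - lam (m + (j : ℕ) + 1)) * (P (m + (j : ℕ) + 1)).coeff m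
        else if (j : ℕ) + 1 = (i : ℕ) then 1
        else if (j : ℕ) + 1 < (i : ℕ) then 0
        else (P (m + (j : ℕ) + 1)).coeff (m + (i : ℕ)) with hG
  set T : Matrix (Fin (k' + 1)) (Fin (k' + 1)) ℂ := Matrix.of fun l j : Fin (k' + 1) =>
        (P (m + (j : ℕ) + 1)).coeff (m + (l : ℕ) + 1) with hT
  set e := finRotate (k' + 1) with he
  set xn : ℕ → ℂ := fun l => ∑ i ∈ Finset.Icc (l + 1) (m + l + 1),
        ((m + l + 1).choose i * i.factorial : ℂ) * a i (i - (l + 1)) with hxn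
  set M' : Matrix (Fin (k' + 1)) (Fin (k' + 1)) ℂ := G.updateRow 0 (T (Fin.last k')) with hM'
  set c : Fin (k' + 1) → ℂ := fun i => -(xn ((e.symm i : Fin (k' + 1)) : ℕ)) with hc
  -- rows of T are the rotated rows of M'
  have hTrow : ∀ l : Fin (k' + 1), T l = M' (e l) := by
    intro l
    by_cases hl : l = Fin.last k'
    · subst hl
      rw [he, finRotate_last]
      exact (Matrix.updateRow_self).symm
    · have hval : ((e l : Fin (k' + 1)) : ℕ) = (l : ℕ) + 1 := by
        rw [he, finRotate_succ_apply, Fin.val_add_one, if_neg hl]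
      have hne0 : e l ≠ 0 := by
        intro h0
        rw [h0] at hval
        simp at hval
      rw [hM', Matrix.updateRow_ne hne0]
      funext j
      rw [hG]
      simp only [Matrix.of_apply, hT, hval]
      rw [if_neg (show ¬((l : ℕ) + 1 = 0) by omega)]
      rcases lt_trichotomy ((j : ℕ) + 1) ((l : ℕ) + 1) with hjl | hjl | hjl
      · rw [if_neg (show ¬((j : ℕ) + 1 = (l : ℕ) + 1) by omega), if_pos hjl]
        exact Polynomial.coeff_eq_zero_of_natDegree_lt (by rw [hdeg]; omega)
      · rw [if_pos hjl]
        have hj : j = l := Fin.ext (by omega)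
        rw [hj]
        have h4 := (hmonic (m + (l : ℕ) + 1)).coeff_natDegree
        rwa [hdeg] at h4
      · rw [if_neg (show ¬((j : ℕ) + 1 = (l : ℕ) + 1) by omega),
          if_neg (show ¬((j : ℕ) + 1 < (l : ℕ) + 1) by omega), Nat.add_assoc m (l : ℕ) 1]
  have hdetT : T.det = 1 := by
    rw [Matrix.det_of_upperTriangular (by
      intro i j hij
      rw [hT]
      simp only [Matrix.of_apply]
      exact Polynomial.coeff_eq_zero_of_natDegree_lt (by
        rw [hdeg]
        have h2 : (j : ℕ) < (i : ℕ) := hij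
        omega))]
    refine Finset.prod_eq_one fun i _ => ?_
    rw [hT]
    simp only [Matrix.of_apply]
    have h1 := (hmonic (m + (i : ℕ) + 1)).coeff_natDegree
    rwa [hdeg] at h1
  have hdetM' : M'.det = (-1 : ℂ) ^ k' := by
    have hperm := Matrix.det_permute e M'
    have hsub : M'.submatrix e id = T := by
      funext i j
      simp only [Matrix.submatrix_apply, id_eq]
      rw [← hTrow]
    rw [hsub, hdetT, he, sign_finRotate, Nat.add_sub_cancel] at hperm
    have h3 : ((-1 : ℂ) ^ k') * ((-1 : ℂ) ^ k') = 1 := by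
      rw [← pow_add, Even.neg_one_pow ⟨k', rfl⟩]
    have h2 : ((((-1 : ℤˣ) ^ k' : ℤˣ) : ℤ) : ℂ) = (-1 : ℂ) ^ k' := by push_cast; ring
    rw [show (((-1 : ℤˣ) ^ k' : ℤˣ) : ℂ) = (-1 : ℂ) ^ k' from by push_cast; ring] at hperm
    linear_combination (-1 : ℂ) * (-1 : ℂ) ^ k' * hperm - M'.det * h3
  -- the linear combination of rows
  have hsum : (∑ i : Fin (k' + 1), c i • M' i) = ∑ l : Fin (k' + 1), (-(xn (l : ℕ))) • T l := by
    rw [← Equiv.sum_comp e (fun i => c i • M' i)]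
    refine Finset.sum_congr rfl fun l _ => ?_
    rw [hc]
    simp only [Equiv.symm_apply_apply]
    rw [← hTrow]
  have hGrow : G 0 = ∑ i : Fin (k' + 1), c i • M' i := by
    rw [hsum]
    funext j
    rw [Finset.sum_apply]
    simp only [Pi.smul_apply, smul_eq_mul, hT, Matrix.of_apply]
    have hC := lemC N a ha ha0 P hmonic hdeg lam hL m (m + (j : ℕ) + 1) (by omega)
    have ht : m + (j : ℕ) + 1 - m = (j : ℕ) + 1 := by omega
    rw [ht] at hC
    have hr : (∑ l : Fin (k' + 1),
          -(xn (l : ℕ)) * (P (m + (j : ℕ) + 1)).coeff (m + (l : ℕ) + 1))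
        = -∑ l ∈ Finset.range ((j : ℕ) + 1),
            (P (m + (j : ℕ) + 1)).coeff (m + l + 1) * xn l := by
      rw [Fin.sum_univ_eq_sum_range
        (fun l => -(xn l) * (P (m + (j : ℕ) + 1)).coeff (m + l + 1))]
      rw [← Finset.sum_subset (Finset.range_subset_range.2 (by omega : (j : ℕ) + 1 ≤ k' + 1))
        (fun l _ hl => by
          rw [Polynomial.coeff_eq_zero_of_natDegree_lt (by
            rw [hdeg]
            simp only [Finset.mem_range] at hl
            omega), mul_zero])]
      rw [← Finset.sum_neg_distrib]
      exact Finset.sum_congr rfl fun l _ => by ring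
    rw [hr]
    show (if ((0 : Fin (k' + 1)) : ℕ) = 0 then
          (lam m - lam (m + (j : ℕ) + 1)) * (P (m + (j : ℕ) + 1)).coeff m
        else if (j : ℕ) + 1 = ((0 : Fin (k' + 1)) : ℕ) then 1
        else if (j : ℕ) + 1 < ((0 : Fin (k' + 1)) : ℕ) then 0
        else (P (m + (j : ℕ) + 1)).coeff (m + ((0 : Fin (k' + 1)) : ℕ))) = _
    rw [if_pos (by simp)]
    rw [hC]
  have hGeq : G = M'.updateRow 0 (∑ i : Fin (k' + 1), c i • M' i) := by
    apply Matrix.ext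
    intro i j
    by_cases hi : i = 0
    · subst hi
      rw [Matrix.updateRow_self, ← hGrow]
    · rw [Matrix.updateRow_ne hi, hM', Matrix.updateRow_ne hi]
  have hc0 : c 0 = -(xn k') := by
    have hsymm : e.symm 0 = Fin.last k' := by
      rw [Equiv.symm_apply_eq, he, finRotate_last]
    rw [hc]
    simp only [hsymm, Fin.val_last]
  have hS : xn k' = ∑ i ∈ Finset.Icc (k' + 1) n, (n.choose i * i.factorial : ℂ) * a i (i - (k' + 1)) := by
    rw [hxn]
    simp only [hmk]
  rw [show G.det = c 0 • M'.det from by rw [hGeq, Matrix.det_updateRow_sum],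
    hdetM', hc0, hS]
  rw [smul_eq_mul]
  ring
end

section
/- Assume L(P_n) = λ_n·P_n for all n ≥ 0. Then for every n ≥ 1 and every k with 1 ≤ k ≤ n, (−1)^{k+1}·δ_n^{(k)} = Σ_{s=1}^{n} Δ_{k,n,s}·s!·a_{s,s}, where a_{s,s} := 0 for s > N. -/
/-!
Write `b_{r,i}` for the coefficients of `P_r` and `c_l(m)` (`diffOpCoeff`) for the coefficient of
`x^m` in `L(x^(m+l))`. Comparing coefficients of `x^m` in `L(P_r) = λ_r P_r` gives
`Σ_l c_l(m) b_{r,m+l} = λ_r b_{r,m}`; at `m = r` this forces `λ_r = c_0(r) = Σ_s s! a_{s,s} C(r,s)`,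
hence `(c_0(r) - c_0(m)) b_{r,m} = Σ_{l ≥ 1} c_l(m) b_{r,m+l}`. By linearity in the first row,
`Σ_s s! a_{s,s} Δ_{k,n,s}` is one determinant, and by the hockey-stick identity the `j`-th entry
of its first row is the left side for `m = n - k`, `r = m + j`; so that row is the combination
`Σ_{l=1}^k c_l(m) (b_{m+j,m+l})_j`. The terms with
`l < k` repeat the other rows and drop out, and `c_k(m) = δ_n^{(k)}` multiplies the determinant
of a cyclic row permutation of a unitriangular matrix, i.e. `(-1)^(k-1)`.
-/

/-- `Δ_{k,n,s}(Q)`: the determinant of the `k×k` matrix built from the coefficients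
`q m i` of a sequence of monic polynomials, whose `(1,j)`-entry (1-based) is
`[Σ_{t=0}^{j−1} C(n−k+t, s−1)]·q_{n−k+j, n−k}` and whose `(i,j)`-entry for `i ≥ 2`
is `1` if `j = i−1`, `0` if `j < i−1`, and `q_{n−k+j, n−k+i−1}` if `j ≥ i`. -/
noncomputable def DeltaDet (q : ℕ → ℕ → ℂ) (k n s : ℕ) : ℂ :=
  Matrix.det (Matrix.of fun i j : Fin k =>
    if (i : ℕ) = 0 then
      (∑ t ∈ Finset.range ((j : ℕ) + 1), ((n - k + t).choose (s - 1) : ℂ)) *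
        q (n - k + (j : ℕ) + 1) (n - k)
    else if (j : ℕ) + 1 = (i : ℕ) then 1
    else if (j : ℕ) + 1 < (i : ℕ) then 0
    else q (n - k + (j : ℕ) + 1) (n - k + (i : ℕ)))

open Finset Polynomial

theorem Nat.choose_add_sum_range_choose (m s j : ℕ) :
    m.choose (s + 1) + ∑ t ∈ range j, (m + t).choose s = (m + j).choose (s + 1) := by
  induction j with
  | zero => simp
  | succ j ih => rw [sum_range_succ, ← add_assoc, ih, ← add_assoc, Nat.choose_succ_succ', add_comm]

theorem Finset.sum_Icc_eq_sum_Icc_of_eq_zero {M : Type*} [AddCommMonoid M] {f : ℕ → M}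
    (lo : ℕ) {a b : ℕ} (ha : ∀ i, a < i → f i = 0) (hb : ∀ i, b < i → f i = 0) :
    ∑ i ∈ Icc lo a, f i = ∑ i ∈ Icc lo b, f i := by
  wlog hab : a ≤ b generalizing a b
  · exact (this hb ha (by omega)).symm
  refine sum_subset (Icc_subset_Icc_right hab) fun i hi hia => ha i ?_
  simp only [mem_Icc] at hi hia
  omega

theorem Matrix.det_updateRow_finsetSum {n α R : Type*} [Fintype n] [DecidableEq n] [CommRing R]
    (M : Matrix n n R) (j : n) (s : Finset α) (v : α → n → R) :
    (M.updateRow j (∑ x ∈ s, v x)).det = ∑ x ∈ s, (M.updateRow j (v x)).det :=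
  Matrix.detRowAlternating.map_update_sum s j v M

theorem Matrix.det_updateRow_zero_submatrix_finRotate {R : Type*} [CommRing R] {k : ℕ}
    (B : Matrix (Fin (k + 1)) (Fin (k + 1)) R) (c : Fin (k + 1) → R) :
    ((B.submatrix (finRotate (k + 1)).symm id).updateRow 0 (∑ i, c i • B i)).det
      = (-1) ^ k * c (Fin.last k) * B.det := by
  set σ := (finRotate (k + 1)).symm
  have hrow : ∑ i, c i • B i = ∑ i, c (σ i) • (B.submatrix σ id) i :=
    (Equiv.sum_comp σ fun i => c i • B i).symm
  have hσ : σ 0 = Fin.last k := (Equiv.symm_apply_eq _).2 (finRotate_last).symm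
  rw [hrow, det_updateRow_sum, det_permute, hσ, Equiv.Perm.sign_symm, sign_finRotate]
  simp [smul_eq_mul, mul_assoc, mul_left_comm]

section DiffOp

variable {R : Type*} [CommRing R]

noncomputable def diffOp (N : ℕ) (a : ℕ → ℕ → R) (p : R[X]) : R[X] :=
  ∑ i ∈ Icc 1 N, (∑ j ∈ range (i + 1), C (a i j) * X ^ j) * derivative^[i] p

/-- The coefficient of `X ^ m` in `diffOp N a (X ^ (m + l))`. -/
def diffOpCoeff (N : ℕ) (a : ℕ → ℕ → R) (l m : ℕ) : R :=
  ∑ i ∈ Icc (max 1 l) N, a i (i - l) * ((m + l).descFactorial i : R)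

theorem diffOpCoeff_eq_zero_of_lt {N l : ℕ} (a : ℕ → ℕ → R) (m : ℕ) (h : N < l) :
    diffOpCoeff N a l m = 0 := by
  rw [diffOpCoeff, Icc_eq_empty (by omega), sum_empty]

theorem coeff_C_mul_X_pow_mul_iterate_derivative (r : R) (p : R[X]) {i l : ℕ} (m : ℕ)
    (hl : l ≤ i) :
    (C r * X ^ (i - l) * derivative^[i] p).coeff m
      = r * (m + l).descFactorial i * p.coeff (m + l) := by
  rw [mul_right_comm, coeff_mul_X_pow', coeff_C_mul, coeff_iterate_derivative, nsmul_eq_mul]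
  split_ifs with h
  · rw [show m - (i - l) + i = m + l by omega, mul_assoc]
  · rw [Nat.descFactorial_eq_zero_iff_lt.2 (by omega), Nat.cast_zero, mul_zero, zero_mul]

theorem coeff_diffOp (N : ℕ) (a : ℕ → ℕ → R) (p : R[X]) (m : ℕ) :
    (diffOp N a p).coeff m = ∑ l ∈ range (N + 1), diffOpCoeff N a l m * p.coeff (m + l) := by
  calc (diffOp N a p).coeff m
      = ∑ i ∈ Icc 1 N, ∑ l ∈ range (i + 1),
          a i (i - l) * (m + l).descFactorial i * p.coeff (m + l) := by
        simp only [diffOp, finsetSum_coeff, sum_mul]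
        refine sum_congr rfl fun i _ => ?_
        rw [← sum_range_reflect]
        refine sum_congr rfl fun l hl => ?_
        rw [Nat.add_sub_cancel, coeff_C_mul_X_pow_mul_iterate_derivative _ _ _
          (by simpa [Nat.lt_succ_iff] using hl)]
    _ = ∑ l ∈ range (N + 1), ∑ i ∈ Icc (max 1 l) N,
          a i (i - l) * (m + l).descFactorial i * p.coeff (m + l) :=
        sum_comm' fun i l => by simp only [mem_Icc, mem_range, max_le_iff]; omega
    _ = _ := by simp only [diffOpCoeff, sum_mul]

theorem coeff_diffOp_of_natDegree_le (N : ℕ) (a : ℕ → ℕ → R) {p : R[X]} {m K : ℕ}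
    (hK : p.natDegree ≤ m + K) :
    (diffOp N a p).coeff m = ∑ l ∈ range K, diffOpCoeff N a (l + 1) m * p.coeff (m + l + 1)
      + diffOpCoeff N a 0 m * p.coeff m := by
  rw [coeff_diffOp, sum_range_succ', add_zero]
  simp only [← add_assoc]
  rw [eventually_constant_sum (N := min N K) _ (min_le_left _ _),
    eventually_constant_sum (N := min N K) (n := K) _ (min_le_right _ _)]
  all_goals
    intro l hl
    rcases min_le_iff.1 hl with hN | hK'
    · rw [diffOpCoeff_eq_zero_of_lt _ _ (by omega), zero_mul]
    · rw [coeff_eq_zero_of_natDegree_lt (by omega), mul_zero]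

variable {N : ℕ} {a : ℕ → ℕ → R} {p : R[X]} {μ : R}

theorem eq_diffOpCoeff_zero_of_diffOp_eq (hp : p.Monic) (hL : diffOp N a p = C μ * p) :
    μ = diffOpCoeff N a 0 p.natDegree := by
  have h : (diffOp N a p).coeff p.natDegree = (C μ * p).coeff p.natDegree := by rw [hL]
  rw [coeff_diffOp_of_natDegree_le N a (K := 0) (by simp), coeff_C_mul, hp.coeff_natDegree] at h
  simpa using h.symm

theorem diffOpCoeff_sub_mul_coeff (hp : p.Monic) (hL : diffOp N a p = C μ * p) {m K : ℕ}
    (hK : p.natDegree ≤ m + K) :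
    (diffOpCoeff N a 0 p.natDegree - diffOpCoeff N a 0 m) * p.coeff m
      = ∑ l ∈ range K, diffOpCoeff N a (l + 1) m * p.coeff (m + l + 1) := by
  have h : (diffOp N a p).coeff m = (C μ * p).coeff m := by rw [hL]
  rw [coeff_diffOp_of_natDegree_le N a hK, coeff_C_mul] at h
  rw [← eq_diffOpCoeff_zero_of_diffOp_eq hp hL]
  linear_combination -h

theorem sum_Icc_choose_mul_factorial_mul {c : ℕ → R} (hc : ∀ i, N < i → c i = 0) (lo : ℕ)
    {r n : ℕ} (hr : r ≤ n) :
    ∑ i ∈ Icc lo n, (r.choose i * i.factorial : R) * c i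
      = ∑ i ∈ Icc lo N, c i * r.descFactorial i := by
  rw [sum_Icc_eq_sum_Icc_of_eq_zero lo (b := N)]
  · refine sum_congr rfl fun i _ => ?_
    rw [Nat.descFactorial_eq_factorial_mul_choose]
    push_cast
    ring
  · intro i hi
    rw [Nat.choose_eq_zero_of_lt (by omega), Nat.cast_zero, zero_mul, zero_mul]
  · intro i hi
    rw [hc i hi, mul_zero]

theorem diffOpCoeff_zero_eq_sum_choose (ha : ∀ s, N < s → a s s = 0) {r n : ℕ} (hr : r ≤ n) :
    diffOpCoeff N a 0 r = ∑ s ∈ Icc 1 n, (r.choose s * s.factorial : R) * a s s := by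
  rw [sum_Icc_choose_mul_factorial_mul ha 1 hr, diffOpCoeff]
  simp only [max_eq_left zero_le_one, Nat.sub_zero, add_zero]

end DiffOp

section CoeffMatrix

variable {R : Type*} [CommRing R]

def coeffMatrix (q : ℕ → ℕ → R) (m k : ℕ) : Matrix (Fin k) (Fin k) R :=
  Matrix.of fun i j => q (m + j + 1) (m + i + 1)

theorem det_coeffMatrix {q : ℕ → ℕ → R} (hq1 : ∀ r, q r r = 1) (hq0 : ∀ r i, r < i → q r i = 0)
    (m k : ℕ) : (coeffMatrix q m k).det = 1 := by
  have hupper : (coeffMatrix q m k).IsUpperTriangular := fun i j (hij : j < i) =>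
    hq0 _ _ (by simp only [Fin.lt_def] at hij; omega)
  rw [Matrix.det_of_isUpperTriangular hupper]
  exact prod_eq_one fun i _ => hq1 _

end CoeffMatrix

theorem DeltaDet_eq_det_updateRow {q : ℕ → ℕ → ℂ} (hq1 : ∀ r, q r r = 1)
    (hq0 : ∀ r i, r < i → q r i = 0) (m k s : ℕ) :
    DeltaDet q (k + 1) (m + (k + 1)) s
      = (((coeffMatrix q m (k + 1)).submatrix (finRotate (k + 1)).symm id).updateRow 0
          fun j => (∑ t ∈ range (j + 1), ((m + t).choose (s - 1) : ℂ)) * q (m + j + 1) m).det := by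
  rw [DeltaDet, Nat.add_sub_cancel]
  congr 1
  ext i j
  rw [Matrix.updateRow_apply]
  by_cases hi : i = 0
  · simp [hi]
  · have hi' : (i : ℕ) ≠ 0 := fun h => hi (Fin.ext h)
    have hσ := coe_finRotate_symm_of_ne_zero hi
    simp only [Matrix.of_apply, hi, hi', if_false, Matrix.submatrix_apply, id, coeffMatrix, hσ]
    split_ifs with h1 h2
    · rw [show m + ((i : ℕ) - 1) + 1 = m + j + 1 by omega, hq1]
    · rw [hq0 _ _ (by omega)]
    · congr 1
      omega

section Eigenpolynomials

variable {N : ℕ} {a : ℕ → ℕ → ℂ} {P : ℕ → ℂ[X]} {lam : ℕ → ℂ}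

theorem sum_smul_deltaRow_eq (ha : ∀ s, N < s → a s s = 0) (hmonic : ∀ r, (P r).Monic)
    (hdeg : ∀ r, (P r).natDegree = r) (hL : ∀ r, diffOp N a (P r) = C (lam r) * P r)
    {m k n : ℕ} (hn : m + k ≤ n) :
    ∑ s ∈ Icc 1 n, ((s.factorial : ℂ) * a s s) • (fun j : Fin k =>
        (∑ t ∈ range (j + 1), ((m + t).choose (s - 1) : ℂ)) * (P (m + j + 1)).coeff m)
      = ∑ i : Fin k, diffOpCoeff N a (i + 1) m • coeffMatrix (fun r i => (P r).coeff i) m k i := by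
  funext j
  have hockey : ∀ s ∈ Icc 1 n, ∑ t ∈ range (j + 1), ((m + t).choose (s - 1) : ℂ)
      = ((m + j + 1).choose s : ℂ) - (m.choose s : ℂ) := by
    intro s hs
    obtain ⟨s, rfl⟩ : ∃ s', s = s' + 1 := ⟨s - 1, by simp only [mem_Icc] at hs; omega⟩
    rw [eq_sub_iff_add_eq', Nat.add_sub_cancel]
    exact_mod_cast Nat.choose_add_sum_range_choose m s (j + 1)
  simp only [Finset.sum_apply, Pi.smul_apply, smul_eq_mul, coeffMatrix, Matrix.of_apply]
  rw [Fin.sum_univ_eq_sum_range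
      (fun l => diffOpCoeff N a (l + 1) m * (P (m + j + 1)).coeff (m + l + 1)),
    ← diffOpCoeff_sub_mul_coeff (hmonic _) (hL _) (by rw [hdeg]; omega), hdeg,
    diffOpCoeff_zero_eq_sum_choose ha (by omega : m + j + 1 ≤ n),
    diffOpCoeff_zero_eq_sum_choose ha (by omega : m ≤ n), ← sum_sub_distrib, sum_mul]
  refine sum_congr rfl fun s hs => ?_
  rw [hockey s hs]
  ring

theorem sum_DeltaDet_mul_factorial_mul (ha : ∀ s, N < s → a s s = 0) (hmonic : ∀ r, (P r).Monic)
    (hdeg : ∀ r, (P r).natDegree = r) (hL : ∀ r, diffOp N a (P r) = C (lam r) * P r)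
    (m k : ℕ) :
    ∑ s ∈ Icc 1 (m + (k + 1)),
        DeltaDet (fun r i => (P r).coeff i) (k + 1) (m + (k + 1)) s * (s.factorial : ℂ) * a s s
      = (-1) ^ k * diffOpCoeff N a (k + 1) m := by
  have hq1 : ∀ r, (P r).coeff r = 1 := fun r => by
    simpa [hdeg] using (hmonic r).coeff_natDegree
  have hq0 : ∀ r i, r < i → (P r).coeff i = 0 := fun r i h =>
    coeff_eq_zero_of_natDegree_lt (by rwa [hdeg])
  set B := coeffMatrix (fun r i => (P r).coeff i) m (k + 1)
  set v : ℕ → Fin (k + 1) → ℂ := fun s j =>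
    (∑ t ∈ range (j + 1), ((m + t).choose (s - 1) : ℂ)) * (P (m + j + 1)).coeff m
  calc _ = ∑ s ∈ Icc 1 (m + (k + 1)),
        ((B.submatrix (finRotate (k + 1)).symm id).updateRow 0
          (((s.factorial : ℂ) * a s s) • v s)).det := by
        refine sum_congr rfl fun s _ => ?_
        rw [DeltaDet_eq_det_updateRow hq1 hq0, Matrix.det_updateRow_smul]
        ring
    _ = ((B.submatrix (finRotate (k + 1)).symm id).updateRow 0
          (∑ s ∈ Icc 1 (m + (k + 1)), ((s.factorial : ℂ) * a s s) • v s)).det :=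
        (Matrix.det_updateRow_finsetSum _ _ _ _).symm
    _ = _ := by
        rw [sum_smul_deltaRow_eq ha hmonic hdeg hL le_rfl,
          Matrix.det_updateRow_zero_submatrix_finRotate, det_coeffMatrix hq1 hq0]
        simp

end Eigenpolynomials

theorem stmt_6_general (N : ℕ) (a : ℕ → ℕ → ℂ)
    (ha : ∀ i j : ℕ, (N < i ∨ i < j) → a i j = 0)
    (P : ℕ → Polynomial ℂ) (hmonic : ∀ n, (P n).Monic)
    (hdeg : ∀ n, (P n).natDegree = n)
    (lam : ℕ → ℂ)
    (hL : ∀ n, ∑ i ∈ Finset.Icc 1 N,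
        (∑ j ∈ Finset.range (i + 1), Polynomial.C (a i j) * Polynomial.X ^ j) *
          (⇑Polynomial.derivative)^[i] (P n) = Polynomial.C (lam n) * P n)
    (n k : ℕ) (hk1 : 1 ≤ k) (hkn : k ≤ n) :
    (-1 : ℂ) ^ (k + 1) * (∑ i ∈ Finset.Icc k n, (n.choose i * i.factorial : ℂ) * a i (i - k)) =
      ∑ s ∈ Finset.Icc 1 n,
        DeltaDet (fun m i => (P m).coeff i) k n s * (s.factorial : ℂ) * a s s := by
  obtain ⟨k, rfl⟩ : ∃ k', k = k' + 1 := ⟨k - 1, by omega⟩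
  obtain ⟨m, rfl⟩ : ∃ m, n = m + (k + 1) := ⟨n - (k + 1), by omega⟩
  rw [sum_DeltaDet_mul_factorial_mul (fun s hs => ha s s (Or.inl hs)) hmonic hdeg hL,
    sum_Icc_choose_mul_factorial_mul (c := fun i => a i (i - (k + 1)))
      (fun i hi => ha i _ (Or.inl hi)) (k + 1) le_rfl, diffOpCoeff, max_eq_right (by omega)]
  ring

/-- Assume `L(P_n) = λ_n·P_n` for all `n ≥ 0`.  Then for every `n ≥ 1`
and every `k` with `1 ≤ k ≤ n`,
`(−1)^{k+1}·δ_n^{(k)} = Σ_{s=1}^{n} Δ_{k,n,s}·s!·a_{s,s}`, where `a_{s,s} := 0`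
for `s > N`. -/
theorem stmt_6 (N : ℕ) (hN : 1 ≤ N) (a : ℕ → ℕ → ℂ)
    (ha : ∀ i j : ℕ, (N < i ∨ i < j) → a i j = 0) (ha0 : a 0 0 = 0)
    (P : ℕ → Polynomial ℂ) (hmonic : ∀ n, (P n).Monic)
    (hdeg : ∀ n, (P n).natDegree = n)
    (lam : ℕ → ℂ) (hlam0 : lam 0 = 0)
    (hL : ∀ n, ∑ i ∈ Finset.Icc 1 N,
        (∑ j ∈ Finset.range (i + 1), Polynomial.C (a i j) * Polynomial.X ^ j) *
          (⇑Polynomial.derivative)^[i] (P n) = Polynomial.C (lam n) * P n)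
    (n k : ℕ) (hn : 1 ≤ n) (hk1 : 1 ≤ k) (hkn : k ≤ n) :
    (-1 : ℂ) ^ (k + 1) * (∑ i ∈ Finset.Icc k n, (n.choose i * i.factorial : ℂ) * a i (i - k)) =
      ∑ s ∈ Finset.Icc 1 n,
        DeltaDet (fun m i => (P m).coeff i) k n s * (s.factorial : ℂ) * a s s :=
  stmt_6_general N a ha P hmonic hdeg lam hL n k hk1 hkn
end

section
/- For every n ≥ 1, every k with 1 ≤ k ≤ n, and every s ≥ 1: Δ^{(1)}_{k,n,s} = Δ_{k,n,s} + Σ_{j=0}^{k−1} (−1)^j·C(n−k+j, s−1)·b_{n−k+j,n−k}·[ Σ_{r=1}^{k−j} γ_{n−k+j+1}·γ_{n−k+j+2}⋯γ_{n−k+j+r}·E_{k,n,j+r−1} ], where C(m, s−1) := 0 for m < s−1. -/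
/-- `E_{k,n,s}`: the determinant of the `(k−s−1)×(k−s−1)` matrix whose `(i,j)`-entry
(1-based) is `b_{n−k+s+1+j, n−k+s+i}` if `j ≥ i`, `1` if `i ≥ 2` and `j = i−1`, and
`0` if `j < i−1`; by convention `E_{k,n,k−1} = 1` (determinant of the empty matrix). -/
noncomputable def EDet (b : ℕ → ℕ → ℂ) (k n s : ℕ) : ℂ :=
  Matrix.det (Matrix.of fun i j : Fin (k - s - 1) =>
    if (i : ℕ) ≤ (j : ℕ) then b (n - k + s + (j : ℕ) + 2) (n - k + s + (i : ℕ) + 1)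
    else if (j : ℕ) + 1 = (i : ℕ) then 1
    else 0)

open Finset Matrix

/-- `Δ` matrix, in terms of the offset `o = n - k`. -/
private noncomputable def genM (q : ℕ → ℕ → ℂ) (K o s' : ℕ) : Matrix (Fin K) (Fin K) ℂ :=
  Matrix.of fun i j : Fin K =>
    if (i : ℕ) = 0 then
      (∑ t ∈ Finset.range ((j : ℕ) + 1), ((o + t).choose s' : ℂ)) * q (o + (j : ℕ) + 1) o
    else if (j : ℕ) + 1 = (i : ℕ) then 1
    else if (j : ℕ) + 1 < (i : ℕ) then 0
    else q (o + (j : ℕ) + 1) (o + (i : ℕ))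

/-- `E` determinant, in terms of the offset `o = n - k`. -/
private noncomputable def genE (b : ℕ → ℕ → ℂ) (K o s'' : ℕ) : ℂ :=
  Matrix.det (Matrix.of fun i c : Fin (K - s'' - 1) =>
    if (i : ℕ) ≤ (c : ℕ) then b (o + s'' + (c : ℕ) + 2) (o + s'' + (i : ℕ) + 1)
    else if (c : ℕ) + 1 = (i : ℕ) then 1 else 0)

private noncomputable def wfn (b : ℕ → ℕ → ℂ) (γ : ℕ → ℂ) (o s' j : ℕ) : ℂ :=
  ∑ a ∈ Finset.range (j+1), (-1:ℂ)^(j-a) * ((o+a).choose s' : ℂ) * b (o+a) o *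
    ∏ t ∈ Finset.Icc (o+a+1) (o+j+1), γ t

private lemma wfn_zero (b : ℕ → ℕ → ℂ) (γ : ℕ → ℂ) (o s' : ℕ) :
    wfn b γ o s' 0 = ((o).choose s' : ℂ) * b o o * γ (o+1) := by
  simp [wfn]

private lemma wfn_succ (b : ℕ → ℕ → ℂ) (γ : ℕ → ℂ) (o s' j : ℕ) :
    wfn b γ o s' (j+1) = γ (o+j+2) *
      ((((o+j+1).choose s' : ℂ) * b (o+j+1) o) - wfn b γ o s' j) := by
  unfold wfn
  rw [Finset.sum_range_succ]
  have h1 : ∀ a ∈ Finset.range (j+1),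
      (-1:ℂ)^(j+1-a) * ((o+a).choose s' : ℂ) * b (o+a) o *
        ∏ t ∈ Finset.Icc (o+a+1) (o+(j+1)+1), γ t
      = (-(γ (o+j+2))) * ((-1:ℂ)^(j-a) * ((o+a).choose s' : ℂ) * b (o+a) o *
        ∏ t ∈ Finset.Icc (o+a+1) (o+j+1), γ t) := by
    intro a ha
    rw [Finset.mem_range] at ha
    rw [show j+1-a = (j-a)+1 from by omega, pow_succ]
    rw [show o+(j+1)+1 = (o+j+1)+1 from by omega]
    rw [Finset.prod_Icc_succ_top (by omega)]
    rw [show (o+j+1)+1 = o+j+2 from by omega]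
    ring
  rw [Finset.sum_congr rfl h1, ← Finset.mul_sum]
  rw [show j+1-(j+1) = 0 from by omega, pow_zero]
  rw [show o+(j+1)+1 = o+j+2 from by omega]
  rw [show o+(j+1) = o+j+1 from by omega]
  rw [Finset.Icc_self, Finset.prod_singleton]
  ring

private lemma mul_T_apply {K : ℕ} (A : Matrix (Fin K) (Fin K) ℂ) (g : ℕ → ℂ) (i j : Fin K) :
    (A * (Matrix.of fun a c : Fin K =>
      (if a = c then (1:ℂ) else 0) + (if (a:ℕ)+1 = (c:ℕ) then g (c:ℕ) else 0))) i j
    = A i j + (if (j:ℕ) = 0 then 0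
        else g (j:ℕ) * A i ⟨(j:ℕ)-1, lt_of_le_of_lt (Nat.sub_le _ _) j.isLt⟩) := by
  rw [Matrix.mul_apply]
  simp only [Matrix.of_apply, mul_add]
  rw [Finset.sum_add_distrib]
  congr 1
  · simp [mul_ite, Finset.sum_ite_eq']
  · split
    · rename_i hj
      apply Finset.sum_eq_zero; intro a _
      rw [if_neg (by omega), mul_zero]
    · rename_i hj
      rw [Finset.sum_eq_single (⟨(j:ℕ)-1, lt_of_le_of_lt (Nat.sub_le _ _) j.isLt⟩ : Fin K)]
      · rw [if_pos (by simp; omega)]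
        ring
      · intro a _ ha
        rw [if_neg, mul_zero]
        intro hc
        exact ha (Fin.ext (by simp; omega))
      · intro h; exact absurd (Finset.mem_univ _) h

private lemma det_T {K : ℕ} (g : ℕ → ℂ) :
    (Matrix.of fun a c : Fin K =>
      (if a = c then (1:ℂ) else 0) + (if (a:ℕ)+1 = (c:ℕ) then g (c:ℕ) else 0)).det = 1 := by
  have h : (Matrix.of fun a c : Fin K =>
      (if a = c then (1:ℂ) else 0) + (if (a:ℕ)+1 = (c:ℕ) then g (c:ℕ) else 0)).BlockTriangular
        id := by
    intro i j hij
    have hij' : (j:ℕ) < (i:ℕ) := hij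
    simp only [Matrix.of_apply]
    rw [if_neg (fun hh => by subst hh; exact absurd hij' (lt_irrefl _)),
      if_neg (by omega : ¬((i:ℕ)+1 = (j:ℕ))), add_zero]
  rw [Matrix.det_of_upperTriangular h]
  apply Finset.prod_eq_one
  intro i _
  simp only [Matrix.of_apply]
  rw [if_neg (by omega : ¬((i:ℕ)+1 = (i:ℕ))), add_zero]
  simp

private lemma minor_det (b : ℕ → ℕ → ℂ) :
    ∀ (j m o sz : ℕ), j ≤ m → sz = m - j →
    Matrix.det (Matrix.of fun u c : Fin m =>
      if (if (c:ℕ) < j then (c:ℕ) else (c:ℕ)+1) = (u:ℕ) then (1:ℂ)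
      else if (if (c:ℕ) < j then (c:ℕ) else (c:ℕ)+1) < (u:ℕ) then 0
      else b (o + (if (c:ℕ) < j then (c:ℕ) else (c:ℕ)+1) + 1) (o + (u:ℕ) + 1)) =
    Matrix.det (Matrix.of fun i c : Fin sz =>
      if (i:ℕ) ≤ (c:ℕ) then b (o + j + (c:ℕ) + 2) (o + j + (i:ℕ) + 1)
      else if (c:ℕ) + 1 = (i:ℕ) then 1 else 0) := by
  intro j
  induction j with
  | zero =>
    intro m o sz hjm hsz
    rw [Nat.sub_zero] at hsz; subst hsz
    congr 1
    ext u c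
    simp only [Matrix.of_apply, Nat.not_lt_zero, if_false]
    split_ifs <;> first | rfl | omega | (congr 1 <;> omega) | (exfalso; omega)
  | succ j ih =>
    intro m o sz hjm hsz
    obtain ⟨m', rfl⟩ : ∃ m', m = m' + 1 := ⟨m - 1, by omega⟩
    rw [Matrix.det_succ_column_zero]
    rw [Finset.sum_eq_single (0 : Fin (m'+1))]
    · have h00 : (Matrix.of fun u c : Fin (m'+1) =>
          if (if (c:ℕ) < j+1 then (c:ℕ) else (c:ℕ)+1) = (u:ℕ) then (1:ℂ)
          else if (if (c:ℕ) < j+1 then (c:ℕ) else (c:ℕ)+1) < (u:ℕ) then 0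
          else b (o + (if (c:ℕ) < j+1 then (c:ℕ) else (c:ℕ)+1) + 1) (o + (u:ℕ) + 1))
          (0 : Fin (m'+1)) (0 : Fin (m'+1)) = 1 := by
        simp
      rw [h00, Fin.succAbove_zero]
      have hsub : ((Matrix.of fun u c : Fin (m'+1) =>
          if (if (c:ℕ) < j+1 then (c:ℕ) else (c:ℕ)+1) = (u:ℕ) then (1:ℂ)
          else if (if (c:ℕ) < j+1 then (c:ℕ) else (c:ℕ)+1) < (u:ℕ) then 0
          else b (o + (if (c:ℕ) < j+1 then (c:ℕ) else (c:ℕ)+1) + 1) (o + (u:ℕ) + 1)).submatrix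
            Fin.succ Fin.succ)
          = Matrix.of fun u c : Fin m' =>
          if (if (c:ℕ) < j then (c:ℕ) else (c:ℕ)+1) = (u:ℕ) then (1:ℂ)
          else if (if (c:ℕ) < j then (c:ℕ) else (c:ℕ)+1) < (u:ℕ) then 0
          else b ((o+1) + (if (c:ℕ) < j then (c:ℕ) else (c:ℕ)+1) + 1) ((o+1) + (u:ℕ) + 1) := by
        ext u c
        simp only [Matrix.submatrix_apply, Matrix.of_apply, Fin.val_succ]
        split_ifs <;> first | rfl | omega | (congr 1 <;> omega) | (exfalso; omega)
      rw [hsub, ih m' (o+1) sz (by omega) (by omega)]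
      simp only [Fin.val_zero, pow_zero, one_mul]
      congr 1
      ext i c
      simp only [Matrix.of_apply]
      split_ifs <;> first | rfl | (congr 1 <;> omega)
    · intro u _ hu
      have : (Matrix.of fun u c : Fin (m'+1) =>
          if (if (c:ℕ) < j+1 then (c:ℕ) else (c:ℕ)+1) = (u:ℕ) then (1:ℂ)
          else if (if (c:ℕ) < j+1 then (c:ℕ) else (c:ℕ)+1) < (u:ℕ) then 0
          else b (o + (if (c:ℕ) < j+1 then (c:ℕ) else (c:ℕ)+1) + 1) (o + (u:ℕ) + 1))
          u (0 : Fin (m'+1)) = 0 := by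
        have hv : (u:ℕ) ≠ 0 := fun h => hu (Fin.ext (by simpa using h))
        simp only [Matrix.of_apply, Fin.val_zero]
        simp only [show (0:ℕ) < j+1 from by omega, if_true]
        rw [if_neg (by omega), if_pos (by omega)]
      rw [this, mul_zero, zero_mul]
    · intro h; exact absurd (Finset.mem_univ _) h

private lemma succAbove_val {n : ℕ} (p : Fin (n+1)) (i : Fin n) :
    ((p.succAbove i : Fin (n+1)) : ℕ) = if (i:ℕ) < (p:ℕ) then (i:ℕ) else (i:ℕ)+1 := by
  rcases lt_or_ge ((i:ℕ)) ((p:ℕ)) with h | h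
  · rw [Fin.succAbove_of_castSucc_lt p i (by simpa [Fin.lt_def] using h), if_pos h]
    simp
  · rw [Fin.succAbove_of_le_castSucc p i (by simpa [Fin.le_def] using h), if_neg (by omega)]
    simp

private lemma key (b b1 : ℕ → ℕ → ℂ) (γ : ℕ → ℂ) (o s' K : ℕ)
    (hbd : ∀ m, b m m = 1)
    (hb1 : ∀ m i, b1 (m+1) i = b (m+1) i + γ (m+1) * b m i)
    (hK : 1 ≤ K) :
    (genM b1 K o s').det = (genM b K o s').det +
      ∑ j ∈ Finset.range K, (-1:ℂ)^j * ((o+j).choose s' : ℂ) * b (o+j) o *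
        (∑ r ∈ Finset.Icc 1 (K-j), (∏ t ∈ Finset.Icc (o+j+1) (o+j+r), γ t) *
          genE b K o (j+r-1)) := by
  obtain ⟨k', rfl⟩ : ∃ k', K = k'+1 := ⟨K-1, by omega⟩
  set M : Matrix (Fin (k'+1)) (Fin (k'+1)) ℂ := genM b (k'+1) o s' with hM
  set M' : Matrix (Fin (k'+1)) (Fin (k'+1)) ℂ :=
    M.updateRow 0 (fun j : Fin (k'+1) => M 0 j + wfn b γ o s' (j:ℕ)) with hM'
  set g : ℕ → ℂ := fun x => γ (o+x+1) with hg
  -- Step A : the perturbed matrix factors as M' * T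
  have hA : genM b1 (k'+1) o s' = M' * (Matrix.of fun a c : Fin (k'+1) =>
      (if a = c then (1:ℂ) else 0) +
      (if (a:ℕ)+1 = (c:ℕ) then g (c:ℕ) else 0)) := by
    ext i j
    rw [mul_T_apply M' g i j]
    simp only [hg]
    simp only [hM', Matrix.updateRow_apply, hM, genM, Matrix.of_apply]
    by_cases hi : i = (0 : Fin (k'+1))
    · have hiv : (i:ℕ) = 0 := by rw [hi]; rfl
      simp only [hi, hiv, Fin.val_zero, eq_self_iff_true, if_true]
      by_cases hj : (j:ℕ) = 0
      · rw [if_pos hj]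
        simp only [hj, Nat.add_zero, Nat.zero_add, Finset.sum_range_one]
        rw [hb1 o o, wfn_zero]
        ring1
      · rw [if_neg hj]
        obtain ⟨jj, hjj⟩ : ∃ jj, (j:ℕ) = jj+1 := ⟨(j:ℕ)-1, by omega⟩
        simp only [hjj, Nat.add_sub_cancel]
        rw [hb1 (o+(jj+1)) o]
        rw [show (o+(jj+1)) = o+jj+1 from by omega]
        rw [show o+jj+1+1 = o+jj+2 from by omega]
        rw [show wfn b γ o s' (jj+1) = γ (o+jj+2) *
          ((((o+jj+1).choose s' : ℂ) * b (o+jj+1) o) - wfn b γ o s' jj) from wfn_succ b γ o s' jj]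
        rw [Finset.sum_range_succ]
        rw [show o+(jj+1) = o+jj+1 from by omega]
        ring1
    · have hiv : ¬((i:ℕ) = 0) := fun h => hi (Fin.ext (by simpa using h))
      simp only [if_neg hi, if_neg hiv]
      by_cases hj : (j:ℕ) = 0
      · rw [if_pos hj]
        simp only [hj]
        rw [add_zero]
        split_ifs <;> first | rfl | (exfalso; omega) | norm_num
      · rw [if_neg hj]
        obtain ⟨jj, hjj⟩ : ∃ jj, (j:ℕ) = jj+1 := ⟨(j:ℕ)-1, by omega⟩
        simp only [hjj, Nat.add_sub_cancel]
        rw [show (o+(jj+1)+1) = (o+jj+1)+1 from by omega]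
        rw [hb1 (o+jj+1) (o+(i:ℕ))]
        split_ifs <;>
          first
          | rfl
          | (exfalso; omega)
          | ring1
          | (rw [show o+jj+1 = o + (i:ℕ) from by omega, hbd (o + (i:ℕ))]; try ring1)
  -- determinant of the factorization
  have hdet1 : (genM b1 (k'+1) o s').det = M'.det := by
    rw [hA, Matrix.det_mul, det_T, mul_one]
  -- split off the extra row
  have hdet2 : M'.det = M.det +
      (M.updateRow 0 (fun j : Fin (k'+1) => wfn b γ o s' (j:ℕ))).det := by
    rw [hM']
    rw [show (fun j : Fin (k'+1) => M 0 j + wfn b γ o s' (j:ℕ))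
      = (M 0 + fun j : Fin (k'+1) => wfn b γ o s' (j:ℕ)) from rfl]
    rw [Matrix.det_updateRow_add, Matrix.updateRow_eq_self]
  -- expand the extra determinant along row zero
  have hminor : ∀ j : Fin (k'+1),
      (M.submatrix Fin.succ j.succAbove).det = genE b (k'+1) o (j:ℕ) := by
    intro j
    have hsub : M.submatrix Fin.succ j.succAbove
        = Matrix.of (fun u c : Fin k' =>
          if (if (c:ℕ) < (j:ℕ) then (c:ℕ) else (c:ℕ)+1) = (u:ℕ) then (1:ℂ)
          else if (if (c:ℕ) < (j:ℕ) then (c:ℕ) else (c:ℕ)+1) < (u:ℕ) then 0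
          else b (o + (if (c:ℕ) < (j:ℕ) then (c:ℕ) else (c:ℕ)+1) + 1) (o + (u:ℕ) + 1)) := by
      ext u c
      simp only [Matrix.submatrix_apply, hM, genM, Matrix.of_apply, Fin.val_succ, succAbove_val]
      rw [if_neg (by omega : ¬((u:ℕ)+1 = 0))]
      split_ifs <;> first | rfl | omega | (congr 1 <;> omega) | (exfalso; omega)
    rw [hsub, minor_det b (j:ℕ) k' o ((k'+1) - (j:ℕ) - 1) (by omega) (by omega)]
    rfl
  have hdet3 : (M.updateRow 0 (fun j : Fin (k'+1) => wfn b γ o s' (j:ℕ))).det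
      = ∑ j ∈ Finset.range (k'+1), (-1:ℂ)^j * wfn b γ o s' j * genE b (k'+1) o j := by
    rw [Matrix.det_succ_row_zero]
    rw [← Fin.sum_univ_eq_sum_range
      (fun j => (-1:ℂ)^j * wfn b γ o s' j * genE b (k'+1) o j) (k'+1)]
    apply Finset.sum_congr rfl
    intro j _
    have h1 : (M.updateRow 0 (fun j : Fin (k'+1) => wfn b γ o s' (j:ℕ))) 0 j
        = wfn b γ o s' (j:ℕ) := by rw [Matrix.updateRow_self]
    have h2 : (M.updateRow 0 (fun j : Fin (k'+1) => wfn b γ o s' (j:ℕ))).submatrix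
        Fin.succ j.succAbove = M.submatrix Fin.succ j.succAbove := by
      ext u c
      simp only [Matrix.submatrix_apply]
      rw [Matrix.updateRow_ne (Fin.succ_ne_zero u)]
    rw [h1, h2, hminor j]
  -- rearrange the double sum
  have hre : ∑ j ∈ Finset.range (k'+1), (-1:ℂ)^j * wfn b γ o s' j * genE b (k'+1) o j
      = ∑ a ∈ Finset.range (k'+1), (-1:ℂ)^a * ((o+a).choose s' : ℂ) * b (o+a) o *
        (∑ r ∈ Finset.Icc 1 ((k'+1)-a), (∏ t ∈ Finset.Icc (o+a+1) (o+a+r), γ t) *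
          genE b (k'+1) o (a+r-1)) := by
    have h1 : ∀ j ∈ Finset.range (k'+1),
        (-1:ℂ)^j * wfn b γ o s' j * genE b (k'+1) o j
        = ∑ a ∈ Finset.range (j+1), (-1:ℂ)^a * (((o+a).choose s' : ℂ) * b (o+a) o *
            ((∏ t ∈ Finset.Icc (o+a+1) (o+j+1), γ t) * genE b (k'+1) o j)) := by
      intro j _
      unfold wfn
      rw [Finset.mul_sum, Finset.sum_mul]
      apply Finset.sum_congr rfl
      intro a ha
      rw [Finset.mem_range] at ha
      have hs : (-1:ℂ)^j * (-1:ℂ)^(j-a) = (-1:ℂ)^a := by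
        rw [← pow_add, show j + (j-a) = a + 2*(j-a) from by omega, pow_add, pow_mul]
        norm_num
      calc (-1:ℂ)^j * ((-1:ℂ)^(j-a) * ((o+a).choose s' : ℂ) * b (o+a) o *
              ∏ t ∈ Finset.Icc (o+a+1) (o+j+1), γ t) * genE b (k'+1) o j
          = ((-1:ℂ)^j * (-1:ℂ)^(j-a)) * (((o+a).choose s' : ℂ) * b (o+a) o *
              ((∏ t ∈ Finset.Icc (o+a+1) (o+j+1), γ t) * genE b (k'+1) o j)) := by ring
        _ = (-1:ℂ)^a * (((o+a).choose s' : ℂ) * b (o+a) o *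
              ((∏ t ∈ Finset.Icc (o+a+1) (o+j+1), γ t) * genE b (k'+1) o j)) := by rw [hs]
    rw [Finset.sum_congr rfl h1]
    rw [Finset.sum_comm' (t' := Finset.range (k'+1)) (s' := fun a => Finset.Icc a k')
      (by intro x y; simp only [Finset.mem_range, Finset.mem_Icc]; omega)]
    apply Finset.sum_congr rfl
    intro a _
    rw [Finset.mul_sum]
    apply Finset.sum_nbij' (i := fun j => j - a + 1) (j := fun r => a + r - 1)
    · intro j hj; rw [Finset.mem_Icc] at *; omega
    · intro r hr; rw [Finset.mem_Icc] at *; omega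
    · intro j hj; rw [Finset.mem_Icc] at hj; omega
    · intro r hr; rw [Finset.mem_Icc] at hr; omega
    · intro j hj
      rw [Finset.mem_Icc] at hj
      rw [show a + (j-a+1) - 1 = j from by omega, show o+a+(j-a+1) = o+j+1 from by omega]
      ring1
  rw [hdet1, hdet2, hdet3, hre, hM]


/-- For every `n ≥ 1`, every `k` with `1 ≤ k ≤ n`, and every `s ≥ 1`:
`Δ^{(1)}_{k,n,s} = Δ_{k,n,s} + Σ_{j=0}^{k−1} (−1)^j·C(n−k+j, s−1)·b_{n−k+j,n−k}·
[ Σ_{r=1}^{k−j} γ_{n−k+j+1}·γ_{n−k+j+2}⋯γ_{n−k+j+r}·E_{k,n,j+r−1} ]`,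
where `C(m, s−1) := 0` for `m < s−1`. -/
theorem stmt_7 (P : ℕ → Polynomial ℂ) (hmonic : ∀ n, (P n).Monic)
    (hdeg : ∀ n, (P n).natDegree = n)
    (γ : ℕ → ℂ) (P1 : ℕ → Polynomial ℂ)
    (hP10 : P1 0 = P 0)
    (hP1 : ∀ m, 1 ≤ m → P1 m = P m + Polynomial.C (γ m) * P (m - 1))
    (n k s : ℕ) (hn : 1 ≤ n) (hk1 : 1 ≤ k) (hkn : k ≤ n) (hs : 1 ≤ s) :
    DeltaDet (fun m i => (P1 m).coeff i) k n s =
      DeltaDet (fun m i => (P m).coeff i) k n s +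
        ∑ j ∈ Finset.range k,
          (-1 : ℂ) ^ j * ((n - k + j).choose (s - 1) : ℂ) * (P (n - k + j)).coeff (n - k) *
            (∑ r ∈ Finset.Icc 1 (k - j),
              (∏ t ∈ Finset.Icc (n - k + j + 1) (n - k + j + r), γ t) *
                EDet (fun m i => (P m).coeff i) k n (j + r - 1)) := by
  have hbd : ∀ m, (fun m i => (P m).coeff i) m m = 1 := by
    intro m
    simpa [hdeg m] using (hmonic m).coeff_natDegree
  have hb1 : ∀ m i, (fun m i => (P1 m).coeff i) (m+1) i
      = (fun m i => (P m).coeff i) (m+1) i + γ (m+1) * (fun m i => (P m).coeff i) m i := by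
    intro m i
    simp only [hP1 (m+1) (by omega), Nat.add_sub_cancel, Polynomial.coeff_add,
      Polynomial.coeff_C_mul]
  have e1 : DeltaDet (fun m i => (P1 m).coeff i) k n s
      = (genM (fun m i => (P1 m).coeff i) k (n-k) (s-1)).det := rfl
  have e2 : DeltaDet (fun m i => (P m).coeff i) k n s
      = (genM (fun m i => (P m).coeff i) k (n-k) (s-1)).det := rfl
  have hE : ∀ x, EDet (fun m i => (P m).coeff i) k n x
      = genE (fun m i => (P m).coeff i) k (n-k) x := fun _ => rfl
  rw [e1, e2]
  simp only [hE]
  exact key (fun m i => (P m).coeff i) (fun m i => (P1 m).coeff i) γ (n-k) (s-1) k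
    hbd hb1 hk1
end

section
/- Assume L(P_n) = λ_n·P_n for all n ≥ 0, with λ_n = δ_n^{(0)} pairwise distinct, and let P^{(1)}_n := P_n + γ_n·P_{n−1}. Suppose there exist an integer Ñ ≥ N and complex polynomials a^{(1)}_i(x) of degree ≤ i (i = 1,…,Ñ) such that Σ_{i=1}^{Ñ} a^{(1)}_i(x)·(d^i P^{(1)}_n/dx^i)(x) = λ_n·P^{(1)}_n(x) for all n ≥ 0. Then for all integers n, k with n ≥ k > Ñ: Σ_{j=0}^{k−1} (−1)^j·[ Σ_{s=1}^{N} C(n−k+j, s−1)·s!·a_{s,s} ]·b_{n−k+j,n−k}·Σ_{r=1}^{k−j} γ_{n−k+j+1}⋯γ_{n−k+j+r}·E_{k,n,j+r−1} = 0, where C(m, s−1) := 0 for m < s−1. -/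
open Finset Polynomial Matrix

noncomputable def Wdet (f : ℕ → ℕ → ℂ) (s o : ℕ) : ℂ :=
  Matrix.det (Matrix.of fun i j : Fin s => f (o + (j : ℕ) + 1) (o + (i : ℕ)))

lemma Wdet_zero (f : ℕ → ℕ → ℂ) (o : ℕ) : Wdet f 0 o = 1 := Matrix.det_fin_zero

lemma Wdet_rec (f g : ℕ → ℕ → ℂ) (γ : ℕ → ℂ)
    (hg1 : ∀ p, g p p = 1) (hg0 : ∀ p i, p < i → g p i = 0)
    (hfg : ∀ p i, f (p + 1) i = g (p + 1) i + γ (p + 1) * g p i)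
    (s o : ℕ) :
    Wdet f (s + 1) o = Wdet g (s + 1) o + γ (o + 1) * Wdet f s (o + 1) := by
  classical
  set Mix : ℕ → Matrix (Fin (s + 1)) (Fin (s + 1)) ℂ := fun u =>
    Matrix.of fun i j : Fin (s + 1) =>
      if (j : ℕ) < u then g (o + (j : ℕ) + 1) (o + (i : ℕ)) else f (o + (j : ℕ) + 1) (o + (i : ℕ))
    with hMix
  have hentry : ∀ u (i j : Fin (s + 1)), Mix u i j =
      if (j : ℕ) < u then g (o + (j : ℕ) + 1) (o + (i : ℕ)) else f (o + (j : ℕ) + 1) (o + (i : ℕ)) := by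
    intro u i j; rw [hMix]; rfl
  have hstep : ∀ t, 1 ≤ t → t ≤ s → (Mix t).det = (Mix (t + 1)).det := by
    intro t ht1 hts
    have htlt : t < s + 1 := by omega
    set jt : Fin (s + 1) := ⟨t, htlt⟩ with hjt
    have hjtv : (jt : ℕ) = t := rfl
    have h1 : Mix t = (Mix (t + 1)).updateCol jt (fun i => f (o + t + 1) (o + (i : ℕ))) := by
      ext i j
      rw [Matrix.updateCol_apply, hentry]
      by_cases hj : j = jt
      · rw [if_pos hj, hj, hjtv, if_neg (by omega)]
      · have hjv : (j : ℕ) ≠ t := fun h => hj (Fin.ext h)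
        rw [if_neg hj, hentry]
        by_cases h2 : (j : ℕ) < t
        · rw [if_pos h2, if_pos (by omega)]
        · rw [if_neg h2, if_neg (by omega)]
    have hcol : (fun i : Fin (s + 1) => f (o + t + 1) (o + (i : ℕ)))
        = (fun i : Fin (s + 1) => g (o + t + 1) (o + (i : ℕ)))
          + (γ (o + t + 1) • fun i : Fin (s + 1) => g (o + t) (o + (i : ℕ))) := by
      funext i
      have := hfg (o + t) (o + (i : ℕ))
      simpa using this
    rw [h1, hcol, Matrix.det_updateCol_add, Matrix.det_updateCol_smul]
    have h2 : (Mix (t + 1)).updateCol jt (fun i => g (o + t + 1) (o + (i : ℕ))) = Mix (t + 1) := by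
      have : (fun i : Fin (s + 1) => g (o + t + 1) (o + (i : ℕ)))
          = fun i => Mix (t + 1) i jt := by
        funext i; rw [hentry, hjtv, if_pos (by omega)]
      rw [this, Matrix.updateCol_eq_self]
    have h3 : ((Mix (t + 1)).updateCol jt (fun i => g (o + t) (o + (i : ℕ)))).det = 0 := by
      obtain ⟨t', rfl⟩ : ∃ t', t = t' + 1 := ⟨t - 1, by omega⟩
      apply Matrix.det_zero_of_column_eq (i := (⟨t', by omega⟩ : Fin (s + 1))) (j := jt)
      · intro h
        have := congrArg Fin.val h
        simp [hjt] at this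
      · intro i
        rw [Matrix.updateCol_apply, Matrix.updateCol_apply]
        rw [if_neg (by intro h; have := congrArg Fin.val h; simp [hjt] at this),
          if_pos rfl, hentry]
        rw [if_pos (by simp [hjt])]
        rfl
    rw [h2, h3, mul_zero, add_zero]
  have hchain : ∀ d t, 1 ≤ t → t + d = s + 1 → (Mix t).det = (Mix (s + 1)).det := by
    intro d
    induction d with
    | zero =>
      intro t ht1 ht
      have h : t = s + 1 := by omega
      subst h; rfl
    | succ d ih =>
      intro t ht1 ht
      rw [hstep t ht1 (by omega)]
      exact ih (t + 1) (by omega) (by omega)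
  have hM0 : Wdet f (s + 1) o = (Mix 0).det := by
    have hme : (Matrix.of fun i j : Fin (s + 1) => f (o + (j : ℕ) + 1) (o + (i : ℕ))) = Mix 0 := by
      ext i j
      rw [hentry, if_neg (by omega), Matrix.of_apply]
    unfold Wdet
    rw [hme]
  have h1 : Mix 0 = (Mix 1).updateCol 0 (fun i => f (o + 1) (o + (i : ℕ))) := by
    ext i j
    rw [Matrix.updateCol_apply, hentry]
    by_cases hj : j = 0
    · rw [if_pos hj, hj]
      simp only [Fin.val_zero]
      simp only [Nat.lt_irrefl, ↓reduceIte, Nat.add_zero]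
    · have hjv : (j : ℕ) ≠ 0 := fun h => hj (Fin.ext h)
      rw [if_neg hj, hentry, if_neg (by omega), if_neg (by omega)]
  have hcol : (fun i : Fin (s + 1) => f (o + 1) (o + (i : ℕ)))
      = (fun i : Fin (s + 1) => g (o + 1) (o + (i : ℕ)))
        + (γ (o + 1) • fun i : Fin (s + 1) => g o (o + (i : ℕ))) := by
    funext i
    have := hfg o (o + (i : ℕ))
    simpa using this
  rw [hM0, h1, hcol, Matrix.det_updateCol_add, Matrix.det_updateCol_smul]
  have h2 : (Mix 1).updateCol 0 (fun i => g (o + 1) (o + (i : ℕ))) = Mix 1 := by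
    have : (fun i : Fin (s + 1) => g (o + 1) (o + (i : ℕ))) = fun i => Mix 1 i 0 := by
      funext i; rw [hentry]
      simp only [Fin.val_zero]
      simp only [Nat.zero_lt_one, ↓reduceIte, Nat.add_zero]
    rw [this, Matrix.updateCol_eq_self]
  rw [h2, hchain s 1 le_rfl (by omega)]
  have hfinal : (Mix (s + 1)).det = Wdet g (s + 1) o := by
    have hme : (Matrix.of fun i j : Fin (s + 1) => g (o + (j : ℕ) + 1) (o + (i : ℕ))) = Mix (s + 1) := by
      ext i j
      rw [hentry, if_pos (by omega), Matrix.of_apply]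
    unfold Wdet
    rw [hme]
  have hecol : ((Mix 1).updateCol 0 (fun i => g o (o + (i : ℕ)))).det = Wdet f s (o + 1) := by
    rw [Matrix.det_succ_column_zero]
    rw [Finset.sum_eq_single 0]
    · rw [Matrix.updateCol_apply, if_pos rfl]
      simp only [Fin.val_zero, pow_zero, add_zero, one_mul, Fin.succAbove_zero]
      rw [hg1 o, one_mul]
      have hme : ((Mix 1).updateCol 0 (fun i : Fin (s + 1) => g o (o + (i : ℕ)))).submatrix
          Fin.succ Fin.succ = Matrix.of fun i j : Fin s => f (o + 1 + (j : ℕ) + 1) (o + 1 + (i : ℕ)) := by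
        ext i j
        rw [Matrix.submatrix_apply, Matrix.updateCol_apply, if_neg (Fin.succ_ne_zero j), hentry,
          if_neg (by simp [Fin.val_succ])]
        have e1 : o + (j.succ : ℕ) + 1 = o + 1 + (j : ℕ) + 1 := by simp [Fin.val_succ]; omega
        have e2 : o + (i.succ : ℕ) = o + 1 + (i : ℕ) := by simp [Fin.val_succ]; omega
        rw [e1, e2, Matrix.of_apply]
      rw [hme]
      rfl
    · intro i _ hi
      rw [Matrix.updateCol_apply, if_pos rfl]
      have : (i : ℕ) ≠ 0 := fun h => hi (Fin.ext h)
      rw [hg0 o (o + (i : ℕ)) (by omega)]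
      ring
    · simp
  rw [hfinal, hecol]
lemma Wdet_minor (f : ℕ → ℕ → ℂ) (hf1 : ∀ p, f p p = 1) (hf0 : ∀ p i, p < i → f p i = 0) :
    ∀ (r sz o : ℕ), r ≤ sz →
      Matrix.det (Matrix.of fun i j : Fin sz =>
        f (o + (if (i : ℕ) < r then (i : ℕ) else (i : ℕ) + 1)) (o + (j : ℕ)))
      = Wdet f (sz - r) (o + r) := by
  intro r
  induction r with
  | zero =>
    intro sz o _
    have hme : (Matrix.of fun i j : Fin sz =>
        f (o + (if (i : ℕ) < 0 then (i : ℕ) else (i : ℕ) + 1)) (o + (j : ℕ)))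
        = (Matrix.of fun i j : Fin sz => f (o + (j : ℕ) + 1) (o + (i : ℕ)))ᵀ := by
      ext i j
      rw [Matrix.transpose_apply, Matrix.of_apply, Matrix.of_apply, if_neg (by omega),
        ← Nat.add_assoc]
    rw [hme, Matrix.det_transpose]
    rfl
  | succ r ih =>
    intro sz o hrsz
    obtain ⟨sz', rfl⟩ : ∃ sz', sz = sz' + 1 := ⟨sz - 1, by omega⟩
    rw [Matrix.det_succ_row_zero, Finset.sum_eq_single 0]
    · have h00 : (Matrix.of fun i j : Fin (sz' + 1) =>
          f (o + (if (i : ℕ) < r + 1 then (i : ℕ) else (i : ℕ) + 1)) (o + (j : ℕ))) 0 0 = 1 := by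
        rw [Matrix.of_apply]
        simp only [Fin.val_zero, Nat.add_zero]
        simp only [show (0:ℕ) < r + 1 from by omega, ↓reduceIte, Nat.add_zero, hf1]
      rw [h00]
      simp only [Fin.val_zero, pow_zero, one_mul, mul_one, Fin.succAbove_zero]
      have hme : ((Matrix.of fun i j : Fin (sz' + 1) =>
          f (o + (if (i : ℕ) < r + 1 then (i : ℕ) else (i : ℕ) + 1)) (o + (j : ℕ))).submatrix
            Fin.succ Fin.succ)
          = Matrix.of fun i j : Fin sz' =>
            f ((o + 1) + (if (i : ℕ) < r then (i : ℕ) else (i : ℕ) + 1)) ((o + 1) + (j : ℕ)) := by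
        ext i j
        rw [Matrix.submatrix_apply, Matrix.of_apply, Matrix.of_apply]
        congr 1
        · simp only [Fin.val_succ]
          by_cases h : (i : ℕ) < r
          · rw [if_pos (by omega), if_pos h]; omega
          · rw [if_neg (by omega), if_neg h]; omega
        · simp only [Fin.val_succ]; omega
      rw [hme, ih sz' (o + 1) (by omega)]
      congr 1 <;> omega
    · intro j _ hj
      have h0j : (Matrix.of fun i j : Fin (sz' + 1) =>
          f (o + (if (i : ℕ) < r + 1 then (i : ℕ) else (i : ℕ) + 1)) (o + (j : ℕ))) 0 j = 0 := by
        rw [Matrix.of_apply]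
        simp only [Fin.val_zero, Nat.add_zero]
        simp only [show (0:ℕ) < r + 1 from by omega, ↓reduceIte, Nat.add_zero]
        rw [hf0]
        have : (j : ℕ) ≠ 0 := fun h => hj (Fin.ext h)
        omega
      rw [h0j]
      ring
    · simp

lemma EDet_eq_Wdet (f : ℕ → ℕ → ℂ) (hf1 : ∀ p, f p p = 1) (hf0 : ∀ p i, p < i → f p i = 0)
    (k n s : ℕ) :
    Matrix.det (Matrix.of fun i j : Fin (k - s - 1) =>
      if (i : ℕ) ≤ (j : ℕ) then f (n - k + s + (j : ℕ) + 2) (n - k + s + (i : ℕ) + 1)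
      else if (j : ℕ) + 1 = (i : ℕ) then 1
      else 0) = Wdet f (k - s - 1) (n - k + s + 1) := by
  unfold Wdet
  congr 1
  ext i j
  rw [Matrix.of_apply, Matrix.of_apply]
  by_cases h1 : (i : ℕ) ≤ (j : ℕ)
  · rw [if_pos h1]
    congr 1 <;> omega
  · rw [if_neg h1]
    by_cases h2 : (j : ℕ) + 1 = (i : ℕ)
    · rw [if_pos h2]
      have : n - k + s + 1 + (j : ℕ) + 1 = n - k + s + 1 + (i : ℕ) := by omega
      rw [this, hf1]
    · rw [if_neg h2, hf0]
      omega

lemma Jlem (b q : ℕ → ℕ → ℂ) (γ : ℕ → ℂ)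
    (hrec : ∀ s o, Wdet q (s + 1) o = Wdet b (s + 1) o + γ (o + 1) * Wdet q s (o + 1)) :
    ∀ d o, ∑ i ∈ Finset.range (d + 1), (∏ t ∈ Finset.Icc (o + 1) (o + 1 + i), γ t)
        * Wdet b (d - i) (o + 1 + i)
      = γ (o + 1) * Wdet q d (o + 1) := by
  intro d
  induction d with
  | zero =>
    intro o
    rw [Finset.sum_range_one]
    simp [Finset.Icc_self, Wdet_zero]
  | succ d ih =>
    intro o
    rw [Finset.sum_range_succ']
    have hpeel : ∀ i : ℕ, ∏ t ∈ Finset.Icc (o + 1) (o + 1 + (i + 1)), γ t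
        = γ (o + 1) * ∏ t ∈ Finset.Icc (o + 2) (o + 2 + i), γ t := by
      intro i
      rw [show o + 1 + (i + 1) = o + 2 + i from by omega]
      rw [← Finset.Ico_add_one_right_eq_Icc, Finset.prod_eq_prod_Ico_succ_bot (by omega), Finset.Ico_add_one_right_eq_Icc]
    have hterm : ∀ i ∈ Finset.range (d + 1),
        (∏ t ∈ Finset.Icc (o + 1) (o + 1 + (i + 1)), γ t) * Wdet b (d + 1 - (i + 1)) (o + 1 + (i + 1))
        = γ (o + 1) * ((∏ t ∈ Finset.Icc (o + 1 + 1) (o + 1 + 1 + i), γ t) * Wdet b (d - i) (o + 1 + 1 + i)) := by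
      intro i _
      rw [hpeel i]
      rw [show o + 1 + (i + 1) = o + 2 + i from by omega,
        show d + 1 - (i + 1) = d - i from by omega,
        show o + 1 + 1 + i = o + 2 + i from by omega,
        show o + 1 + 1 = o + 2 from rfl]
      ring
    rw [Finset.sum_congr rfl hterm, ← Finset.mul_sum, ih (o + 1)]
    rw [show o + 1 + 0 = o + 1 from rfl, show d + 1 - 0 = d + 1 from rfl]
    rw [Finset.Icc_self, Finset.prod_singleton]
    rw [hrec d (o + 1)]
    rw [show o + 1 + 1 = o + 2 from rfl]
    ring

theorem tdlam (N : ℕ) (a : ℕ → ℕ → ℂ) (lam : ℕ → ℂ) (p : ℕ)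
    (ha : ∀ i j : ℕ, (N < i ∨ i < j) → a i j = 0)
    (hlam : ∀ n, lam n = ∑ i ∈ Finset.Icc 0 n, (n.choose i * i.factorial : ℂ) * a i (i - 0)) :
    (∑ s ∈ Finset.Icc 1 N, ((p.choose (s - 1) * s.factorial : ℂ)) * a s s) = lam (p + 1) - lam p := by
  have hsummand : ∀ (q : ℕ), (fun i => ((q.choose i * i.factorial : ℂ)) * a i (i - 0))
      = fun i => ((q.choose i : ℂ) * (i.factorial : ℂ)) * a i i := by
    intro q; funext i; rw [Nat.sub_zero]
  have h1 : lam p = ∑ i ∈ Finset.Icc 0 (p + 1 + N), ((p.choose i : ℂ) * (i.factorial : ℂ)) * a i i := by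
    rw [hlam p, hsummand p]
    apply Finset.sum_subset (Finset.Icc_subset_Icc_right (by omega))
    intro i hi hni
    have : p < i := by simp only [Finset.mem_Icc] at hi hni; omega
    rw [Nat.choose_eq_zero_of_lt this]
    push_cast; ring
  have h2 : lam (p + 1) = ∑ i ∈ Finset.Icc 0 (p + 1 + N), (((p + 1).choose i : ℂ) * (i.factorial : ℂ)) * a i i := by
    rw [hlam (p + 1), hsummand (p + 1)]
    apply Finset.sum_subset (Finset.Icc_subset_Icc_right (by omega))
    intro i hi hni
    have : p + 1 < i := by simp only [Finset.mem_Icc] at hi hni; omega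
    rw [Nat.choose_eq_zero_of_lt this]
    push_cast; ring
  rw [h1, h2, ← Finset.sum_sub_distrib]
  have h3 : ∑ s ∈ Finset.Icc 1 N, ((p.choose (s - 1) * s.factorial : ℂ)) * a s s
      = ∑ s ∈ Finset.Icc 1 (p + 1 + N), ((p.choose (s - 1) : ℂ) * (s.factorial : ℂ)) * a s s := by
    apply Finset.sum_subset (Finset.Icc_subset_Icc_right (by omega))
    intro i hi hni
    have : N < i := by simp only [Finset.mem_Icc] at hi hni; omega
    rw [ha i i (Or.inl this)]
    ring
  rw [h3]
  have h4 : ∑ i ∈ Finset.Icc 1 (p + 1 + N), ((p.choose (i - 1) : ℂ) * (i.factorial : ℂ)) * a i i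
      = ∑ i ∈ Finset.Icc 0 (p + 1 + N),
        ((((p + 1).choose i : ℂ) * (i.factorial : ℂ)) * a i i - ((p.choose i : ℂ) * (i.factorial : ℂ)) * a i i) := by
    rw [← Finset.sum_subset (show Finset.Icc 1 (p+1+N) ⊆ Finset.Icc 0 (p+1+N) from Finset.Icc_subset_Icc (by omega) le_rfl)]
    · apply Finset.sum_congr rfl
      intro i hi
      have hi1 : 1 ≤ i := (Finset.mem_Icc.mp hi).1
      obtain ⟨i', rfl⟩ : ∃ i', i = i' + 1 := ⟨i - 1, by omega⟩
      rw [Nat.choose_succ_succ p i']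
      push_cast
      ring
    · intro i hi hni
      have : i = 0 := by simp only [Finset.mem_Icc] at hi hni; omega
      subst this
      simp only [Nat.choose_zero_right, Nat.factorial_zero, Nat.cast_one, one_mul, mul_one, sub_self]
  rw [h4]

theorem opfun (k m n : ℕ) (hmk : m + k = n) (T : ℕ) (hT : T < k) (α : ℕ → Polynomial ℂ)
    (hα : ∀ i, 1 ≤ i → i ≤ T → (α i).degree ≤ (i : ℕ)) :
    ∃ c : ℕ → ℂ, ∀ R : Polynomial ℂ, R.natDegree ≤ n →
      (∑ i ∈ Finset.Icc 1 T, α i * (⇑Polynomial.derivative)^[i] R).coeff m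
        = ∑ l ∈ Finset.range k, c l * R.coeff (m + l) := by
  set φ : Polynomial ℂ → ℂ := fun R => (∑ i ∈ Finset.Icc 1 T, α i * (⇑Polynomial.derivative)^[i] R).coeff m with hφ
  have hXt : ∀ t : ℕ, (t < m ∨ m + k ≤ t) → φ ((X : Polynomial ℂ) ^ t) = 0 := by
    intro t ht
    rw [hφ]
    simp only
    rw [Polynomial.finset_sum_coeff]
    apply Finset.sum_eq_zero
    intro i hi
    obtain ⟨hi1, hi2⟩ := Finset.mem_Icc.mp hi
    rw [Polynomial.iterate_derivative_X_pow_eq_smul, mul_smul_comm, Polynomial.coeff_smul,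
      Polynomial.coeff_mul_X_pow', smul_eq_mul]
    rcases ht with ht | ht
    · by_cases hit : t < i
      · rw [Nat.descFactorial_eq_zero_iff_lt.mpr hit]
        simp
      · rw [if_pos (by omega)]
        have hz : (α i).coeff (m - (t - i)) = 0 := by
          apply Polynomial.coeff_eq_zero_of_natDegree_lt
          have hnd : (α i).natDegree ≤ i := Polynomial.natDegree_le_iff_degree_le.mpr (hα i hi1 hi2)
          omega
        rw [hz, mul_zero]
    · rw [if_neg (by omega), mul_zero]
  have hlin : ∀ R : Polynomial ℂ, R.natDegree ≤ n →
      φ R = ∑ t ∈ Finset.range (n + 1), R.coeff t * φ ((X : Polynomial ℂ) ^ t) := by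
    intro R hR
    have hkey : ∀ t : ℕ, φ ((Polynomial.monomial t) (R.coeff t)) = R.coeff t * φ ((X : Polynomial ℂ) ^ t) := by
      intro t
      rw [hφ]
      simp only
      rw [← Polynomial.C_mul_X_pow_eq_monomial]
      rw [Polynomial.finset_sum_coeff, Polynomial.finset_sum_coeff, Finset.mul_sum]
      apply Finset.sum_congr rfl
      intro i _
      rw [Polynomial.iterate_derivative_C_mul, ← mul_assoc, mul_comm (α i) (Polynomial.C (R.coeff t)),
        mul_assoc, Polynomial.coeff_C_mul]
    conv_lhs => rw [R.as_sum_range' (n + 1) (by omega)]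
    rw [hφ]
    simp only
    have hpush : (∑ i ∈ Finset.Icc 1 T, α i * (⇑Polynomial.derivative)^[i]
          (∑ t ∈ Finset.range (n + 1), (Polynomial.monomial t) (R.coeff t))).coeff m
        = ∑ t ∈ Finset.range (n + 1),
            (∑ i ∈ Finset.Icc 1 T, α i * (⇑Polynomial.derivative)^[i]
              ((Polynomial.monomial t) (R.coeff t))).coeff m := by
      simp only [Polynomial.iterate_derivative_sum, Finset.mul_sum, Polynomial.finset_sum_coeff]
      rw [Finset.sum_comm]
    rw [hpush]
    exact Finset.sum_congr rfl fun t _ => hkey t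
  refine ⟨fun l => φ ((X : Polynomial ℂ) ^ (m + l)), ?_⟩
  intro R hR
  show φ R = _
  simp only
  rw [hlin R hR]
  rw [← Finset.sum_subset (show Finset.Ico m (m + k) ⊆ Finset.range (n + 1) by
      intro t ht; simp only [Finset.mem_Ico, Finset.mem_range] at *; omega)]
  · rw [Finset.sum_Ico_eq_sum_range]
    simp only [Nat.add_sub_cancel_left]
    exact Finset.sum_congr rfl fun l _ => mul_comm _ _
  · intro t ht hnt
    simp only [Finset.mem_range, Finset.mem_Ico] at ht hnt
    rw [hXt t (by omega), mul_zero]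

lemma hkeyL (k m n : ℕ) (hmk : m + k = n) (lam : ℕ → ℂ)
    (F : ℕ → ℕ → ℂ) (c : ℕ → ℂ) (hF1 : ∀ p, F p p = 1) (hF0 : ∀ p i, p < i → F p i = 0)
    (hsys : ∀ p, p ≤ n → ∑ l ∈ Finset.range k, c l * F p (m + l) = lam p * F p m) :
    ∑ r ∈ Finset.range (k + 1), (-1 : ℂ) ^ r * (lam (m + r) * F (m + r) m * Wdet F (k - r) (m + r)) = 0 := by
  classical
  set A : Matrix (Fin (k + 1)) (Fin (k + 1)) ℂ := Matrix.of fun r l =>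
    if (l : ℕ) < k then F (m + (r : ℕ)) (m + (l : ℕ)) else lam (m + (r : ℕ)) * F (m + (r : ℕ)) m
    with hA
  have hAentry : ∀ r l, A r l = if (l : ℕ) < k then F (m + (r : ℕ)) (m + (l : ℕ))
      else lam (m + (r : ℕ)) * F (m + (r : ℕ)) m := by
    intro r l; rw [hA]; rfl
  have hdet0 : A.det = 0 := by
    rw [← Matrix.exists_mulVec_eq_zero_iff]
    refine ⟨fun l => if (l : ℕ) < k then c (l : ℕ) else -1, ?_, ?_⟩
    · intro h
      have h2 := congrFun h (Fin.last k)
      simp only [Fin.val_last, lt_irrefl, if_false, Pi.zero_apply] at h2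
      exact absurd h2 (by norm_num)
    · funext r
      show ∑ l, A r l * (if (l : ℕ) < k then c (l : ℕ) else -1) = 0
      rw [Fin.sum_univ_castSucc]
      have hlast : A r (Fin.last k) * (if ((Fin.last k : Fin (k + 1)) : ℕ) < k then c ((Fin.last k : Fin (k+1)) : ℕ) else -1)
          = -(lam (m + (r : ℕ)) * F (m + (r : ℕ)) m) := by
        rw [hAentry]
        simp only [Fin.val_last, lt_irrefl, if_false]
        ring
      rw [hlast]
      have hcs : ∀ l : Fin k, A r l.castSucc * (if ((l.castSucc : Fin (k+1)) : ℕ) < k then c ((l.castSucc : Fin (k+1)) : ℕ) else -1)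
          = F (m + (r : ℕ)) (m + (l : ℕ)) * c (l : ℕ) := by
        intro l
        rw [hAentry]
        simp only [Fin.coe_castSucc]
        rw [if_pos l.isLt, if_pos l.isLt]
      rw [Finset.sum_congr rfl (fun l _ => hcs l)]
      rw [Fin.sum_univ_eq_sum_range (fun l => F (m + (r : ℕ)) (m + l) * c l) k]
      have := hsys (m + (r : ℕ)) (by have := r.is_le; omega)
      rw [Finset.sum_congr rfl (fun l _ => mul_comm (F (m + (r : ℕ)) (m + l)) (c l)), this]
      ring
  have hexp : A.det = ∑ r ∈ Finset.range (k + 1),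
      (-1 : ℂ) ^ (r + k) * (lam (m + r) * F (m + r) m * Wdet F (k - r) (m + r)) := by
    rw [Matrix.det_succ_column A (Fin.last k)]
    rw [← Fin.sum_univ_eq_sum_range
      (fun r => (-1 : ℂ) ^ (r + k) * (lam (m + r) * F (m + r) m * Wdet F (k - r) (m + r))) (k + 1)]
    apply Finset.sum_congr rfl
    intro r _
    have hAl : A r (Fin.last k) = lam (m + (r : ℕ)) * F (m + (r : ℕ)) m := by
      rw [hAentry]
      simp only [Fin.val_last, lt_irrefl, if_false]
    have hsub : (A.submatrix r.succAbove (Fin.last k).succAbove)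
        = Matrix.of fun i j : Fin k =>
            F (m + (if (i : ℕ) < (r : ℕ) then (i : ℕ) else (i : ℕ) + 1)) (m + (j : ℕ)) := by
      rw [Fin.succAbove_last]
      ext i j
      rw [Matrix.submatrix_apply, hAentry, Matrix.of_apply]
      rw [if_pos (by rw [Fin.coe_castSucc]; exact j.isLt)]
      rw [Fin.coe_castSucc]
      congr 2
      rcases lt_or_ge (Fin.castSucc i) r with h | h
      · rw [Fin.lt_def] at h
        simp only [Fin.coe_castSucc] at h
        rw [Fin.succAbove_of_castSucc_lt r i (by rw [Fin.lt_def]; simpa using h),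
          Fin.coe_castSucc, if_pos h]
      · rw [Fin.le_def] at h
        simp only [Fin.coe_castSucc] at h
        rw [Fin.succAbove_of_le_castSucc r i (by rw [Fin.le_def]; simpa using h),
          Fin.val_succ, if_neg (by omega)]
    rw [hAl, hsub, Wdet_minor F hF1 hF0 (r : ℕ) k m r.is_le]
    rw [Fin.val_last]
    ring
  rw [hexp] at hdet0
  have h2 : ∑ r ∈ Finset.range (k + 1),
      (-1 : ℂ) ^ (r + k) * (lam (m + r) * F (m + r) m * Wdet F (k - r) (m + r))
      = (-1 : ℂ) ^ k * ∑ r ∈ Finset.range (k + 1),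
        (-1 : ℂ) ^ r * (lam (m + r) * F (m + r) m * Wdet F (k - r) (m + r)) := by
    rw [Finset.mul_sum]
    apply Finset.sum_congr rfl
    intro r _
    rw [pow_add]
    ring
  rw [h2] at hdet0
  rcases mul_eq_zero.mp hdet0 with h | h
  · exact absurd h (pow_ne_zero k (by norm_num))
  · exact h



/-- Assume `L(P_n) = λ_n·P_n` for all `n ≥ 0`, with `λ_n = δ_n^{(0)}`
pairwise distinct, and let `P^{(1)}_n := P_n + γ_n·P_{n−1}`.  Suppose there exist an
integer `Ñ ≥ N` and complex polynomials `a^{(1)}_i(x)` of degree `≤ i` (`i = 1,…,Ñ`)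
such that `Σ_{i=1}^{Ñ} a^{(1)}_i(x)·(d^i P^{(1)}_n/dx^i)(x) = λ_n·P^{(1)}_n(x)` for all
`n ≥ 0`.  Then for all integers `n, k` with `n ≥ k > Ñ`:
`Σ_{j=0}^{k−1} (−1)^j·[ Σ_{s=1}^{N} C(n−k+j, s−1)·s!·a_{s,s} ]·b_{n−k+j,n−k}·
Σ_{r=1}^{k−j} γ_{n−k+j+1}⋯γ_{n−k+j+r}·E_{k,n,j+r−1} = 0`. -/
theorem stmt_8 (N : ℕ) (hN : 1 ≤ N) (a : ℕ → ℕ → ℂ)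
    (ha : ∀ i j : ℕ, (N < i ∨ i < j) → a i j = 0) (ha0 : a 0 0 = 0)
    (P : ℕ → Polynomial ℂ) (hmonic : ∀ n, (P n).Monic)
    (hdeg : ∀ n, (P n).natDegree = n)
    (lam : ℕ → ℂ)
    (hlam : ∀ n, lam n = ∑ i ∈ Finset.Icc 0 n, (n.choose i * i.factorial : ℂ) * a i (i - 0))
    (hdistinct : Function.Injective lam)
    (hL : ∀ n, ∑ i ∈ Finset.Icc 1 N,
        (∑ j ∈ Finset.range (i + 1), Polynomial.C (a i j) * Polynomial.X ^ j) *
          (⇑Polynomial.derivative)^[i] (P n) = Polynomial.C (lam n) * P n)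
    (γ : ℕ → ℂ) (P1 : ℕ → Polynomial ℂ)
    (hP10 : P1 0 = P 0)
    (hP1 : ∀ m, 1 ≤ m → P1 m = P m + Polynomial.C (γ m) * P (m - 1))
    (Ntilde : ℕ) (hNtilde : N ≤ Ntilde)
    (a1 : ℕ → Polynomial ℂ) (hdeg1 : ∀ i, 1 ≤ i → i ≤ Ntilde → (a1 i).degree ≤ i)
    (hL1 : ∀ n, ∑ i ∈ Finset.Icc 1 Ntilde,
        a1 i * (⇑Polynomial.derivative)^[i] (P1 n) = Polynomial.C (lam n) * P1 n)
    (n k : ℕ) (hkn : k ≤ n) (hk : Ntilde < k) :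
    ∑ j ∈ Finset.range k,
        (-1 : ℂ) ^ j *
          (∑ s ∈ Finset.Icc 1 N, ((n - k + j).choose (s - 1) * s.factorial : ℂ) * a s s) *
            (P (n - k + j)).coeff (n - k) *
              (∑ r ∈ Finset.Icc 1 (k - j),
                (∏ t ∈ Finset.Icc (n - k + j + 1) (n - k + j + r), γ t) *
                  EDet (fun m i => (P m).coeff i) k n (j + r - 1)) = 0 := by
  classical
  have hk1 : 1 ≤ k := by omega
  obtain ⟨m, hm⟩ : ∃ m, n - k = m := ⟨n - k, rfl⟩
  have hmk : m + k = n := by omega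
  rw [hm]
  -- coefficient facts
  have hb1 : ∀ p, (P p).coeff p = 1 := by
    intro p
    have := (hmonic p).coeff_natDegree
    rwa [hdeg] at this
  have hb0 : ∀ p i, p < i → (P p).coeff i = 0 := fun p i h =>
    Polynomial.coeff_eq_zero_of_natDegree_lt (by rw [hdeg]; exact h)
  have hq_eq : ∀ p i, (P1 (p + 1)).coeff i = (P (p + 1)).coeff i + γ (p + 1) * (P p).coeff i := by
    intro p i
    rw [hP1 (p + 1) (by omega)]
    simp [Polynomial.coeff_add, Polynomial.coeff_C_mul]
  have hq1 : ∀ p, (P1 p).coeff p = 1 := by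
    intro p
    cases p with
    | zero => rw [hP10]; exact hb1 0
    | succ p => rw [hq_eq p (p + 1), hb1 (p + 1), hb0 p (p + 1) (by omega)]; ring
  have hq0 : ∀ p i, p < i → (P1 p).coeff i = 0 := by
    intro p i h
    cases p with
    | zero => rw [hP10]; exact hb0 0 i h
    | succ p => rw [hq_eq p i, hb0 (p + 1) i h, hb0 p i (by omega)]; ring
  have hrec : ∀ s o, Wdet (fun p i => (P1 p).coeff i) (s + 1) o
      = Wdet (fun p i => (P p).coeff i) (s + 1) o
        + γ (o + 1) * Wdet (fun p i => (P1 p).coeff i) s (o + 1) :=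
    Wdet_rec _ _ γ hb1 hb0 hq_eq
  -- linear systems
  have hdegP1 : ∀ p, p ≤ n → (P1 p).natDegree ≤ n := by
    intro p hp
    cases p with
    | zero => rw [hP10, hdeg]; omega
    | succ p =>
      rw [hP1 (p + 1) (by omega)]
      apply le_trans (Polynomial.natDegree_add_le _ _)
      simp only [Nat.add_sub_cancel]
      apply max_le (by rw [hdeg]; omega)
      exact le_trans (Polynomial.natDegree_C_mul_le _ _) (by rw [hdeg]; omega)
  obtain ⟨cq, hcq0⟩ := opfun k m n hmk Ntilde hk a1 hdeg1
  have hcq : ∀ p, p ≤ n → ∑ l ∈ Finset.range k, cq l * (P1 p).coeff (m + l)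
      = lam p * (P1 p).coeff m := by
    intro p hp
    rw [← hcq0 (P1 p) (hdegP1 p hp), hL1 p, Polynomial.coeff_C_mul]
  have hdegα : ∀ i, 1 ≤ i → i ≤ N →
      (∑ j ∈ Finset.range (i + 1), Polynomial.C (a i j) * Polynomial.X ^ j).degree ≤ (i : WithBot ℕ) := by
    intro i _ _
    apply le_trans (Polynomial.degree_sum_le _ _)
    apply Finset.sup_le
    intro j hj
    apply le_trans (Polynomial.degree_C_mul_X_pow_le j (a i j))
    exact_mod_cast Nat.le_of_lt_succ (Finset.mem_range.mp hj)
  obtain ⟨cb, hcb0⟩ := opfun k m n hmk N (by omega) _ hdegα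
  have hcb : ∀ p, p ≤ n → ∑ l ∈ Finset.range k, cb l * (P p).coeff (m + l)
      = lam p * (P p).coeff m := by
    intro p hp
    rw [← hcb0 (P p) (by rw [hdeg]; exact hp), hL p, Polynomial.coeff_C_mul]
  -- key determinant identity
  have hQ0 := hkeyL k m n hmk lam (fun p i => (P1 p).coeff i) cq hq1 hq0 hcq
  have hB0 := hkeyL k m n hmk lam (fun p i => (P p).coeff i) cb hb1 hb0 hcb
  -- abbreviations
  obtain ⟨Aq, hAq⟩ : ∃ f : ℕ → ℂ, ∀ r, f r
      = lam (m + r) * (P1 (m + r)).coeff m * Wdet (fun p i => (P1 p).coeff i) (k - r) (m + r) :=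
    ⟨_, fun r => rfl⟩
  obtain ⟨Ab, hAb⟩ : ∃ f : ℕ → ℂ, ∀ r, f r
      = lam (m + r) * (P (m + r)).coeff m * Wdet (fun p i => (P p).coeff i) (k - r) (m + r) :=
    ⟨_, fun r => rfl⟩
  obtain ⟨Xf, hXf⟩ : ∃ f : ℕ → ℂ, ∀ j, f j
      = if j < k then lam (m + j) * (P (m + j)).coeff m * γ (m + j + 1)
          * Wdet (fun p i => (P1 p).coeff i) (k - j - 1) (m + j + 1) else 0 :=
    ⟨_, fun j => rfl⟩
  -- rewrite the inner sums of the goal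
  have hEW : ∀ j, j < k →
      (∑ r ∈ Finset.Icc 1 (k - j), (∏ t ∈ Finset.Icc (m + j + 1) (m + j + r), γ t) *
          EDet (fun p i => (P p).coeff i) k n (j + r - 1))
      = γ (m + j + 1) * Wdet (fun p i => (P1 p).coeff i) (k - j - 1) (m + j + 1) := by
    intro j hj
    rw [← Finset.Ico_add_one_right_eq_Icc, Finset.sum_Ico_eq_sum_range]
    have hJ := Jlem (fun p i => (P p).coeff i) (fun p i => (P1 p).coeff i) γ hrec (k - j - 1) (m + j)
    rw [show k - j - 1 + 1 = k - j from by omega] at hJ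
    rw [show k - j + 1 - 1 = k - j from by omega]
    rw [← hJ]
    apply Finset.sum_congr rfl
    intro i hi
    have hik : i < k - j := Finset.mem_range.mp hi
    have e1 : m + j + (1 + i) = m + j + 1 + i := by omega
    have e2 : j + (1 + i) - 1 = j + i := by omega
    rw [e1, e2]
    congr 1
    have hED : EDet (fun p i => (P p).coeff i) k n (j + i)
        = Wdet (fun p i => (P p).coeff i) (k - (j + i) - 1) (n - k + (j + i) + 1) :=
      EDet_eq_Wdet (fun p i => (P p).coeff i) hb1 hb0 k n (j + i)
    rw [hED]
    congr 1
    · omega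
    · omega
  have hdl : ∀ j : ℕ,
      (∑ s ∈ Finset.Icc 1 N, ((m + j).choose (s - 1) * s.factorial : ℂ) * a s s)
      = lam (m + j + 1) - lam (m + j) := fun j => tdlam N a lam (m + j) ha hlam
  have hgoal : ∀ j ∈ Finset.range k,
      (-1 : ℂ) ^ j * (∑ s ∈ Finset.Icc 1 N, ((m + j).choose (s - 1) * s.factorial : ℂ) * a s s) *
        (P (m + j)).coeff m *
        (∑ r ∈ Finset.Icc 1 (k - j), (∏ t ∈ Finset.Icc (m + j + 1) (m + j + r), γ t) *
          EDet (fun p i => (P p).coeff i) k n (j + r - 1))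
      = (-1 : ℂ) ^ j * (Aq (j + 1) - Ab (j + 1)) - (-1 : ℂ) ^ j * (Xf (j + 1) + Xf j) := by
    intro j hjm
    have hj : j < k := Finset.mem_range.mp hjm
    rw [hEW j hj, hdl j]
    have hγb : γ (m + j + 1) * (P (m + j)).coeff m
        = (P1 (m + j + 1)).coeff m - (P (m + j + 1)).coeff m := by
      rw [hq_eq (m + j) m]; ring
    have hAq1 : Aq (j + 1) = lam (m + j + 1) * (P1 (m + j + 1)).coeff m
        * Wdet (fun p i => (P1 p).coeff i) (k - j - 1) (m + j + 1) := by
      rw [hAq (j + 1)]; rfl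
    have hAb1 : Ab (j + 1) = lam (m + j + 1) * (P (m + j + 1)).coeff m
        * Wdet (fun p i => (P p).coeff i) (k - j - 1) (m + j + 1) := by
      rw [hAb (j + 1)]; rfl
    have hXfj : Xf j = lam (m + j) * (P (m + j)).coeff m * γ (m + j + 1)
        * Wdet (fun p i => (P1 p).coeff i) (k - j - 1) (m + j + 1) := by
      rw [hXf j, if_pos hj]
    by_cases hj1 : j + 1 < k
    · have hXfj1 : Xf (j + 1) = lam (m + j + 1) * (P (m + j + 1)).coeff m * γ (m + j + 2)
          * Wdet (fun p i => (P1 p).coeff i) (k - j - 2) (m + j + 2) := by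
        rw [hXf (j + 1), if_pos hj1]; rfl
      have hrecj : Wdet (fun p i => (P1 p).coeff i) (k - j - 1) (m + j + 1)
          = Wdet (fun p i => (P p).coeff i) (k - j - 1) (m + j + 1)
            + γ (m + j + 2) * Wdet (fun p i => (P1 p).coeff i) (k - j - 2) (m + j + 2) := by
        have h := hrec (k - j - 2) (m + j + 1)
        rw [show k - j - 2 + 1 = k - j - 1 from by omega] at h
        exact h
      rw [hAq1, hAb1, hXfj, hXfj1]
      linear_combination
        ((-1 : ℂ) ^ j * lam (m + j + 1)
          * Wdet (fun p i => (P1 p).coeff i) (k - j - 1) (m + j + 1)) * hγb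
        - ((-1 : ℂ) ^ j * lam (m + j + 1) * (P (m + j + 1)).coeff m) * hrecj
    · have hjk : j + 1 = k := by omega
      have hXfj1 : Xf (j + 1) = 0 := by rw [hXf (j + 1), if_neg (by omega)]
      have hW1 : Wdet (fun p i => (P1 p).coeff i) (k - j - 1) (m + j + 1) = 1 := by
        rw [show k - j - 1 = 0 from by omega]; exact Wdet_zero _ _
      have hW2 : Wdet (fun p i => (P p).coeff i) (k - j - 1) (m + j + 1) = 1 := by
        rw [show k - j - 1 = 0 from by omega]; exact Wdet_zero _ _
      rw [hAq1, hAb1, hXfj, hXfj1, hW1, hW2]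
      linear_combination ((-1 : ℂ) ^ j * lam (m + j + 1)) * hγb
  rw [Finset.sum_congr rfl hgoal, Finset.sum_sub_distrib]
  -- hsum1
  have hQA : ∑ r ∈ Finset.range (k + 1), (-1 : ℂ) ^ r * Aq r = 0 := by
    rw [← hQ0]; exact Finset.sum_congr rfl fun r _ => by rw [hAq r]
  have hBA : ∑ r ∈ Finset.range (k + 1), (-1 : ℂ) ^ r * Ab r = 0 := by
    rw [← hB0]; exact Finset.sum_congr rfl fun r _ => by rw [hAb r]
  have hQB : ∑ r ∈ Finset.range (k + 1), (-1 : ℂ) ^ r * (Aq r - Ab r) = 0 := by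
    have : ∀ r ∈ Finset.range (k + 1), (-1 : ℂ) ^ r * (Aq r - Ab r)
        = (-1 : ℂ) ^ r * Aq r - (-1 : ℂ) ^ r * Ab r := fun r _ => by ring
    rw [Finset.sum_congr rfl this, Finset.sum_sub_distrib, hQA, hBA, sub_zero]
  rw [Finset.sum_range_succ'] at hQB
  have hflip : ∑ j ∈ Finset.range k, (-1 : ℂ) ^ (j + 1) * (Aq (j + 1) - Ab (j + 1))
      = - ∑ j ∈ Finset.range k, (-1 : ℂ) ^ j * (Aq (j + 1) - Ab (j + 1)) := by
    rw [← Finset.sum_neg_distrib]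
    exact Finset.sum_congr rfl fun j _ => by ring
  rw [hflip] at hQB
  have hsum1 : ∑ j ∈ Finset.range k, (-1 : ℂ) ^ j * (Aq (j + 1) - Ab (j + 1)) = Aq 0 - Ab 0 := by
    have h0 : ((-1 : ℂ)) ^ 0 * (Aq 0 - Ab 0) = Aq 0 - Ab 0 := by ring
    rw [h0] at hQB
    linear_combination -hQB
  -- telescoping
  have htelgen : ∀ (Y : ℕ → ℂ) (K : ℕ), Y (K + 1) = 0 →
      ∑ j ∈ Finset.range (K + 1), (-1 : ℂ) ^ j * (Y (j + 1) + Y j) = Y 0 := by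
    intro Y K hY
    have h1 : ∑ j ∈ Finset.range (K + 1), (-1 : ℂ) ^ j * (Y (j + 1) + Y j)
        = ∑ j ∈ Finset.range (K + 1), (-1 : ℂ) ^ j * Y (j + 1)
          + ∑ j ∈ Finset.range (K + 1), (-1 : ℂ) ^ j * Y j := by
      rw [← Finset.sum_add_distrib]
      exact Finset.sum_congr rfl fun j _ => by ring
    rw [h1, Finset.sum_range_succ, hY, mul_zero, add_zero, Finset.sum_range_succ']
    have h2 : ∑ j ∈ Finset.range K, (-1 : ℂ) ^ (j + 1) * Y (j + 1)
        = - ∑ j ∈ Finset.range K, (-1 : ℂ) ^ j * Y (j + 1) := by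
      rw [← Finset.sum_neg_distrib]
      exact Finset.sum_congr rfl fun j _ => by ring
    rw [h2]
    ring
  have htel : ∑ j ∈ Finset.range k, (-1 : ℂ) ^ j * (Xf (j + 1) + Xf j) = Xf 0 := by
    have h := htelgen Xf (k - 1) (by rw [hXf (k - 1 + 1), if_neg (by omega)])
    rw [show k - 1 + 1 = k from by omega] at h
    exact h
  rw [hsum1, htel]
  -- Aq 0 - Ab 0 = Xf 0
  have hA0 : Aq 0 - Ab 0 = Xf 0 := by
    have hAq0 : Aq 0 = lam m * Wdet (fun p i => (P1 p).coeff i) k m := by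
      rw [hAq 0, show m + 0 = m from rfl, show k - 0 = k from rfl, hq1 m]
      ring
    have hAb0 : Ab 0 = lam m * Wdet (fun p i => (P p).coeff i) k m := by
      rw [hAb 0, show m + 0 = m from rfl, show k - 0 = k from rfl, hb1 m]
      ring
    have hrec0 : Wdet (fun p i => (P1 p).coeff i) k m
        = Wdet (fun p i => (P p).coeff i) k m
          + γ (m + 1) * Wdet (fun p i => (P1 p).coeff i) (k - 1) (m + 1) := by
      have h := hrec (k - 1) m
      rw [show k - 1 + 1 = k from by omega] at h
      exact h
    have hXf0 : Xf 0 = lam m * γ (m + 1) * Wdet (fun p i => (P1 p).coeff i) (k - 1) (m + 1) := by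
      rw [hXf 0, if_pos (by omega), show m + 0 = m from rfl, show k - 0 - 1 = k - 1 from rfl,
        hb1 m]
      ring
    rw [hAq0, hAb0, hrec0, hXf0]
    ring
  rw [hA0]
  ring
end

section
/- Let {γ_n}_{n≥1} ⊂ ℂ with γ_n ≠ 0 for all n ≥ 1 and γ_m = γ_2 + 1/(2γ_1) − (m−1)/(2γ_{m−1}) for every m ≥ 2, and set H^{(1)}_0 := H_0 and H^{(1)}_n := H_n + γ_n·H_{n−1} for n ≥ 1. Then {H^{(1)}_n} satisfies the three-term recurrence x·H^{(1)}_n(x) = H^{(1)}_{n+1}(x) + (γ_n − γ_{n+1})·H^{(1)}_n(x) + (n/2 − γ_n(γ_n − γ_{n+1}))·H^{(1)}_{n−1}(x) for all n ≥ 1. -/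
/-- The monic Hermite polynomials: `H_0 = 1`, `H_1(x) = x`, and
`H_n(x) = x·H_{n−1}(x) − ((n−1)/2)·H_{n−2}(x)` for `n ≥ 2`. -/
noncomputable def hermiteMonic : ℕ → Polynomial ℂ
  | 0 => 1
  | 1 => Polynomial.X
  | n + 2 =>
      Polynomial.X * hermiteMonic (n + 1) -
        Polynomial.C (((n : ℂ) + 1) / 2) * hermiteMonic n

theorem hkey_aux (γ : ℕ → ℂ) (hγ : ∀ n, 1 ≤ n → γ n ≠ 0)
    (hγrec : ∀ m, 2 ≤ m → γ m = γ 2 + 1 / (2 * γ 1) - ((m : ℂ) - 1) / (2 * γ (m - 1)))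
    (k : ℕ) :
    γ (k+1) * (((k:ℂ)+2)/2 - γ (k+2) * (γ (k+2) - γ (k+3))) = ((k:ℂ)+1)/2 * γ (k+2) := by
  have h2 := hγrec (k+2) (by omega)
  have h3 := hγrec (k+3) (by omega)
  have n1 := hγ (k+1) (by omega)
  have n2 := hγ (k+2) (by omega)
  simp only [show k+2-1 = k+1 from rfl, show k+3-1 = k+2 from rfl] at h2 h3
  push_cast at h2 h3
  have hd : γ (k+2) - γ (k+3) = ((k:ℂ)+2)/(2*γ (k+2)) - ((k:ℂ)+1)/(2*γ (k+1)) := by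
    linear_combination h2 - h3
  rw [hd]
  field_simp
  ring

/-- Let `{γ_n}_{n≥1} ⊂ ℂ` with `γ_n ≠ 0` for all `n ≥ 1` and
`γ_m = γ_2 + 1/(2γ_1) − (m−1)/(2γ_{m−1})` for every `m ≥ 2`, and set `H^{(1)}_0 := H_0`
and `H^{(1)}_n := H_n + γ_n·H_{n−1}` for `n ≥ 1`.  Then `{H^{(1)}_n}` satisfies the
three-term recurrence
`x·H^{(1)}_n(x) = H^{(1)}_{n+1}(x) + (γ_n − γ_{n+1})·H^{(1)}_n(x)
  + (n/2 − γ_n(γ_n − γ_{n+1}))·H^{(1)}_{n−1}(x)` for all `n ≥ 1`. -/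
theorem stmt_10 (γ : ℕ → ℂ) (hγ : ∀ n, 1 ≤ n → γ n ≠ 0)
    (hγrec : ∀ m, 2 ≤ m → γ m = γ 2 + 1 / (2 * γ 1) - ((m : ℂ) - 1) / (2 * γ (m - 1)))
    (H1 : ℕ → Polynomial ℂ)
    (hH10 : H1 0 = hermiteMonic 0)
    (hH1 : ∀ n, 1 ≤ n → H1 n = hermiteMonic n + Polynomial.C (γ n) * hermiteMonic (n - 1)) :
    ∀ n, 1 ≤ n →
      Polynomial.X * H1 n =
        H1 (n + 1) + Polynomial.C (γ n - γ (n + 1)) * H1 n +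
          Polynomial.C ((n : ℂ) / 2 - γ n * (γ n - γ (n + 1))) * H1 (n - 1) := by
  intro n hn
  match n, hn with
  | 1, _ =>
    rw [hH10, hH1 1 (by norm_num), hH1 2 (by norm_num)]
    show _ = (Polynomial.X * hermiteMonic 1
        - Polynomial.C (((0:ℕ) + 1 : ℂ)/2) * hermiteMonic 0 + _) + _ + _
    simp only [hermiteMonic, show hermiteMonic 0 = 1 from rfl, show hermiteMonic 1 = Polynomial.X from rfl, map_sub, map_mul, map_one, map_add]
    push_cast
    ring
  | (k+2), _ =>
    simp only [show k+2+1 = k+3 from rfl, show k+2-1 = k+1 from rfl]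
    rw [hH1 (k+1) (by omega), hH1 (k+2) (by omega), hH1 (k+3) (by omega)]
    simp only [show k+1-1 = k from rfl, show k+2-1 = k+1 from rfl, show k+3-1 = k+2 from rfl]
    have hX2 : hermiteMonic (k+3) =
        Polynomial.X * hermiteMonic (k+2)
          - Polynomial.C ((((k+1:ℕ)) + 1 : ℂ)/2) * hermiteMonic (k+1) := rfl
    have hX1 : Polynomial.X * hermiteMonic (k+1) =
        hermiteMonic (k+2) + Polynomial.C (((k:ℕ) + 1 : ℂ)/2) * hermiteMonic k := by
      have h : hermiteMonic (k+2) =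
          Polynomial.X * hermiteMonic (k+1)
            - Polynomial.C (((k:ℕ) + 1 : ℂ)/2) * hermiteMonic k := rfl
      rw [h]; ring
    have e := congrArg Polynomial.C (hkey_aux γ hγ hγrec k)
    have hCdiv : ∀ x : ℂ, Polynomial.C (x/2) = Polynomial.C x * Polynomial.C ((2:ℂ)⁻¹) :=
      fun x => by rw [div_eq_mul_inv, map_mul]
    rw [hX2]
    simp only [map_sub, map_mul, map_add, hCdiv, map_natCast, map_one, map_ofNat] at e hX1 ⊢
    push_cast at e hX1 ⊢
    linear_combination Polynomial.C (γ (k+2)) * hX1 - hermiteMonic k * e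
end

section
/- For every M ≥ 0: S_M(1) = ∏_{j=1}^{M} (2j−3) / (M!·2^M), where the empty product (M = 0) equals 1. -/
/-- `S_M(m) := Σ_{r=0}^{M} (−1/4)^r · (2m+2r−1)! / (r!·(m+r−1)!) · C(m−1+M, m−1+r)`. -/
def Sdef (M m : ℕ) : ℚ :=
  ∑ r ∈ Finset.range (M + 1),
    (-1 / 4 : ℚ) ^ r * ((2 * m + 2 * r - 1).factorial : ℚ) /
        ((r.factorial : ℚ) * ((m + r - 1).factorial : ℚ)) *
      ((m - 1 + M).choose (m - 1 + r) : ℚ)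

/-!
With `term M r` the `r`-th summand of `S_M(1)`, the certificate below (found by Zeilberger's
algorithm) satisfies
`term (M+1) r - (2M-1)/(2M+2) · term M r = certificate M (r+1) - certificate M r`.
Summing over `r` telescopes to `S_{M+1}(1) = (2M-1)/(2M+2) · S_M(1)`, which is also the ratio of
consecutive values of the closed form; induction on `M` from `S_0(1) = 1` finishes.
-/

open Finset Nat

namespace Nat

theorem cast_choose_succ_right_mul {R : Type*} [CommRing R] (n k : ℕ) :
    (n.choose (k + 1) : R) * (k + 1) = n.choose k * (n - k) := by
  rcases le_or_gt k n with h | h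
  · rw [← Nat.cast_sub h]
    exact_mod_cast congrArg (Nat.cast : ℕ → R) (choose_succ_right_eq n k)
  · simp [choose_eq_zero_of_lt h, choose_eq_zero_of_lt (Nat.lt_succ_of_lt h)]

theorem cast_choose_mul_succ {R : Type*} [CommRing R] (n k : ℕ) :
    (n.choose k : R) * (n + 1) = (n + 1).choose k * (n + 1 - k) := by
  rcases le_or_gt k (n + 1) with h | h
  · rw [← Nat.cast_one, ← Nat.cast_add, ← Nat.cast_sub h]
    exact_mod_cast congrArg (Nat.cast : ℕ → R) (choose_mul_succ_eq n k)
  · simp [choose_eq_zero_of_lt h, choose_eq_zero_of_lt (Nat.lt_of_succ_lt h)]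

end Nat

namespace Sdef

def term (M r : ℕ) : ℚ :=
  (-1 / 4 : ℚ) ^ r * (2 * r + 1)! / (r ! * r !) * M.choose r

def certificate (M r : ℕ) : ℚ :=
  -(r : ℚ) ^ 2 * (M + 1).choose r / ((M : ℚ) + 1) ^ 2 *
    (-1 / 4 : ℚ) ^ r * (2 * r + 1)! / (r ! * r !)

theorem one_eq_sum_term (M : ℕ) : Sdef M 1 = ∑ r ∈ range (M + 1), term M r := by
  refine sum_congr rfl fun r _ => ?_
  rw [term, show 2 * 1 + 2 * r - 1 = 2 * r + 1 by omega, show 1 + r - 1 = r by omega,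
    Nat.sub_self, zero_add, zero_add]

theorem term_of_lt {M r : ℕ} (h : M < r) : term M r = 0 := by
  simp [term, Nat.choose_eq_zero_of_lt h]

theorem certificate_zero (M : ℕ) : certificate M 0 = 0 := by
  simp [certificate]

theorem certificate_of_lt {M r : ℕ} (h : M + 1 < r) : certificate M r = 0 := by
  simp [certificate, Nat.choose_eq_zero_of_lt h]

theorem term_succ_sub_eq_certificate_sub (M r : ℕ) :
    term (M + 1) r - (2 * M - 1) / (2 * M + 2) * term M r =
      certificate M (r + 1) - certificate M r := by
  have hchoose_succ := Nat.cast_choose_succ_right_mul (R := ℚ) (M + 1) r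
  have hchoose := Nat.cast_choose_mul_succ (R := ℚ) M r
  have hfac : ((2 * (r + 1) + 1)! : ℚ) = (2 * r + 3) * (2 * r + 2) * (2 * r + 1)! := by
    rw [show 2 * (r + 1) + 1 = 2 * r + 1 + 1 + 1 by ring, Nat.factorial_succ,
      Nat.factorial_succ]
    push_cast; ring
  rw [term, term, certificate, certificate, hfac, Nat.factorial_succ r, Nat.cast_mul]
  rw [← eq_div_iff (by positivity)] at hchoose_succ hchoose
  rw [hchoose_succ, hchoose]
  push_cast
  field_simp
  ring

theorem succ_one_eq_mul (M : ℕ) :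
    Sdef (M + 1) 1 = (2 * M - 1) / (2 * M + 2) * Sdef M 1 := by
  have htelescope : ∑ r ∈ range (M + 2),
      (term (M + 1) r - (2 * M - 1) / (2 * M + 2) * term M r) = 0 := by
    simp only [term_succ_sub_eq_certificate_sub, sum_range_sub, certificate_zero,
      certificate_of_lt (Nat.lt_succ_self (M + 1)), sub_zero]
  rw [sum_sub_distrib, ← mul_sum, sum_range_succ (term M), term_of_lt (Nat.lt_succ_self M),
    add_zero, sub_eq_zero] at htelescope
  rw [one_eq_sum_term, one_eq_sum_term, htelescope]

end Sdef

/-- For every `M ≥ 0`: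
`S_M(1) = ∏_{j=1}^{M} (2j−3) / (M!·2^M)`, where the empty product (`M = 0`) equals `1`. -/
theorem stmt_13 (M : ℕ) :
    Sdef M 1 = (∏ j ∈ Finset.Icc 1 M, (2 * (j : ℚ) - 3)) / ((M.factorial : ℚ) * 2 ^ M) := by
  induction M with
  | zero => simp [Sdef.one_eq_sum_term, Sdef.term]
  | succ M ih =>
    rw [Sdef.succ_one_eq_mul, ih, prod_Icc_succ_top (by omega), Nat.factorial_succ]
    push_cast
    field_simp
    ring
end

section
/- For every m ≥ 1 and M ≥ 0: S_M(m) = ((2m−1)!/(m−1)!)·S_M(1). In particular, S_M(m) ≠ 0 for all m ≥ 1 and M ≥ 0. -/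
/-- Auxiliary signed double factorial `d(0) = -1`, `d(M+1) = (2M-1)·d(M)`. -/
def dd : ℕ → ℚ
  | 0 => -1
  | (M + 1) => (2 * (M : ℚ) - 1) * dd M

lemma dd_ne_zero : ∀ M, dd M ≠ 0 := by
  intro M
  induction M with
  | zero => norm_num [dd]
  | succ M ih =>
      rw [dd]
      refine mul_ne_zero ?_ ih
      intro h
      have h2 : ((2 * M : ℕ) : ℚ) = ((1 : ℕ) : ℚ) := by push_cast; linarith
      have h3 : 2 * M = 1 := by exact_mod_cast h2
      omega

/-- Term of the auxiliary sum. -/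
def bterm (k r : ℕ) : ℚ :=
  (-1 / 4 : ℚ) ^ r * (((k + 1 + r : ℕ) : ℚ) * ((2 * k + 2 * r + 2).choose (k + 1 + r) : ℚ))

/-- Auxiliary sum `B(k,M) = Σ_{r=0}^{M} bterm k r · C(M,r)`. -/
def Bsum (k M : ℕ) : ℚ :=
  ∑ r ∈ Finset.range (M + 1), bterm k r * ((M.choose r : ℕ) : ℚ)

lemma bterm_succ (k r : ℕ) : bterm k (r + 1) = (-1 / 4) * bterm (k + 1) r := by
  simp only [bterm]
  have h1 : 2 * k + 2 * (r + 1) + 2 = 2 * (k + 1) + 2 * r + 2 := by ring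
  have h2 : k + 1 + (r + 1) = (k + 1) + 1 + r := by ring
  rw [h1, h2]
  ring

lemma B_rec (k M : ℕ) : Bsum k (M + 1) = Bsum k M - (1 / 4) * Bsum (k + 1) M := by
  have expand : Bsum k (M + 1) =
      (∑ s ∈ Finset.range (M + 1), bterm k (s + 1) * (((M + 1).choose (s + 1) : ℕ) : ℚ))
        + bterm k 0 * (((M + 1).choose 0 : ℕ) : ℚ) := by
    rw [Bsum, Finset.sum_range_succ']
  have pascal : ∀ s, (((M + 1).choose (s + 1) : ℕ) : ℚ) =
      ((M.choose s : ℕ) : ℚ) + ((M.choose (s + 1) : ℕ) : ℚ) := by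
    intro s
    rw [Nat.choose_succ_succ]
    push_cast
    ring
  have split : ∑ s ∈ Finset.range (M + 1), bterm k (s + 1) * (((M + 1).choose (s + 1) : ℕ) : ℚ)
      = (∑ s ∈ Finset.range (M + 1), bterm k (s + 1) * ((M.choose s : ℕ) : ℚ))
        + ∑ s ∈ Finset.range (M + 1), bterm k (s + 1) * ((M.choose (s + 1) : ℕ) : ℚ) := by
    rw [← Finset.sum_add_distrib]
    apply Finset.sum_congr rfl
    intro s _
    rw [pascal s]
    ring
  have first : ∑ s ∈ Finset.range (M + 1), bterm k (s + 1) * ((M.choose s : ℕ) : ℚ)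
      = -(1 / 4) * Bsum (k + 1) M := by
    rw [Bsum, Finset.mul_sum]
    apply Finset.sum_congr rfl
    intro s _
    rw [bterm_succ]
    ring
  have second : ∑ s ∈ Finset.range (M + 1), bterm k (s + 1) * ((M.choose (s + 1) : ℕ) : ℚ)
      = Bsum k M - bterm k 0 * ((M.choose 0 : ℕ) : ℚ) := by
    have h1 : (∑ s ∈ Finset.range (M + 1), bterm k (s + 1) * ((M.choose (s + 1) : ℕ) : ℚ))
        + bterm k 0 * ((M.choose 0 : ℕ) : ℚ)
        = ∑ r ∈ Finset.range (M + 2), bterm k r * ((M.choose r : ℕ) : ℚ) :=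
      (Finset.sum_range_succ' (fun r => bterm k r * ((M.choose r : ℕ) : ℚ)) (M + 1)).symm
    have h2 : ∑ r ∈ Finset.range (M + 2), bterm k r * ((M.choose r : ℕ) : ℚ)
        = Bsum k M + bterm k (M + 1) * ((M.choose (M + 1) : ℕ) : ℚ) := by
      rw [Bsum, Finset.sum_range_succ]
    have h3 : M.choose (M + 1) = 0 := Nat.choose_eq_zero_of_lt (by omega)
    rw [h3] at h2
    push_cast at h2
    rw [mul_zero, add_zero] at h2
    rw [h2] at h1
    linarith
  rw [expand, split, first, second]
  simp [Nat.choose_zero_right]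
  ring

lemma fact_cast_ne (n : ℕ) : ((n.factorial : ℕ) : ℚ) ≠ 0 := by
  exact_mod_cast Nat.factorial_ne_zero n

lemma B_closed : ∀ M k, Bsum k M =
    -(dd M) * ((2 * k + 2).factorial : ℚ) /
      ((2 : ℚ) ^ M * ((k + M).factorial : ℚ) * (((k + 1).factorial : ℕ) : ℚ)) := by
  intro M
  induction M with
  | zero =>
      intro k
      simp only [Bsum, zero_add, Finset.range_one, Finset.sum_singleton, bterm, dd,
        Nat.choose_zero_right, pow_zero, Nat.add_zero, Nat.cast_one, mul_one]
      have hle : k + 1 ≤ 2 * k + 2 := by omega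
      rw [Nat.cast_choose ℚ hle]
      have hsub : 2 * k + 2 - (k + 1) = k + 1 := by omega
      rw [hsub]
      have hf : (((k + 1).factorial : ℕ) : ℚ) = ((k + 1 : ℕ) : ℚ) * ((k.factorial : ℕ) : ℚ) := by
        rw [Nat.factorial_succ]; push_cast; ring
      have h1 := fact_cast_ne k
      have h2 := fact_cast_ne (k + 1)
      field_simp [hf]
      simp only [hf, Nat.cast_add, Nat.cast_one]
  | succ M ih =>
      intro k
      rw [B_rec, ih k, ih (k + 1)]
      have e1 : ((k + (M + 1)).factorial : ℚ) = ((k + M + 1 : ℕ) : ℚ) * ((k + M).factorial : ℚ) := by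
        have : k + (M + 1) = (k + M) + 1 := by ring
        rw [this, Nat.factorial_succ]; push_cast; ring
      have e2 : ((2 * (k + 1) + 2).factorial : ℚ)
          = ((2 * k + 4 : ℕ) : ℚ) * ((2 * k + 3 : ℕ) : ℚ) * ((2 * k + 2).factorial : ℚ) := by
        have : 2 * (k + 1) + 2 = (2 * k + 3) + 1 := by ring
        rw [this, Nat.factorial_succ, Nat.factorial_succ]; push_cast; ring
      have e3 : (((k + 1 + 1).factorial : ℕ) : ℚ)
          = ((k + 2 : ℕ) : ℚ) * (((k + 1).factorial : ℕ) : ℚ) := by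
        rw [Nat.factorial_succ]; push_cast; ring
      have e4 : ((k + 1 + M).factorial : ℚ) = ((k + M + 1).factorial : ℚ) := by
        norm_num; ring_nf
      have e5 : ((k + M + 1).factorial : ℚ) = ((k + M + 1 : ℕ) : ℚ) * ((k + M).factorial : ℚ) := by
        rw [Nat.factorial_succ]; push_cast; ring
      rw [dd, e1, e2, e3, e4, e5]
      have h1 := fact_cast_ne (k + M)
      have h2 := fact_cast_ne (k + 1)
      have h3 : ((k + M + 1 : ℕ) : ℚ) ≠ 0 := by positivity
      have h4 : ((k + 2 : ℕ) : ℚ) ≠ 0 := by positivity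
      have h5 : (2 : ℚ) ^ M ≠ 0 := by positivity
      field_simp
      push_cast
      ring

lemma Sdef_eq_B (M k : ℕ) :
    Sdef M (k + 1) = ((k + M).factorial : ℚ) / (2 * ((M.factorial : ℕ) : ℚ)) * Bsum k M := by
  rw [Sdef, Bsum, Finset.mul_sum]
  apply Finset.sum_congr rfl
  intro r hr
  have hrM : r ≤ M := by
    have := Finset.mem_range.mp hr; omega
  have h1 : 2 * (k + 1) + 2 * r - 1 = 2 * (k + r) + 1 := by omega
  have h2 : k + 1 + r - 1 = k + r := by omega
  have h3 : k + 1 - 1 = k := by omega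
  rw [h1, h2, h3, bterm]
  have hle1 : k + r ≤ k + M := by omega
  have hle2 : r ≤ M := hrM
  have hle3 : k + 1 + r ≤ 2 * k + 2 * r + 2 := by omega
  rw [Nat.cast_choose ℚ hle1, Nat.cast_choose ℚ hle2, Nat.cast_choose ℚ hle3]
  have s1 : k + M - (k + r) = M - r := by omega
  have s2 : 2 * k + 2 * r + 2 - (k + 1 + r) = k + 1 + r := by omega
  rw [s1, s2]
  have e1 : ((2 * k + 2 * r + 2).factorial : ℚ)
      = ((2 * k + 2 * r + 2 : ℕ) : ℚ) * ((2 * (k + r) + 1).factorial : ℚ) := by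
    have : 2 * k + 2 * r + 2 = (2 * (k + r) + 1) + 1 := by ring
    rw [this, Nat.factorial_succ]; push_cast; ring_nf
  have e2 : (((k + 1 + r).factorial : ℕ) : ℚ)
      = ((k + r + 1 : ℕ) : ℚ) * (((k + r).factorial : ℕ) : ℚ) := by
    have : k + 1 + r = (k + r) + 1 := by ring
    rw [this, Nat.factorial_succ]; push_cast; ring
  rw [e1, e2]
  have n1 := fact_cast_ne (k + r)
  have n2 := fact_cast_ne r
  have n3 := fact_cast_ne (M - r)
  have n4 := fact_cast_ne M
  have n5 : ((k + r + 1 : ℕ) : ℚ) ≠ 0 := by positivity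
  field_simp
  push_cast
  ring

lemma Sdef_closed (M k : ℕ) :
    Sdef M (k + 1) = -(dd M) * ((2 * k + 2).factorial : ℚ) /
      ((2 : ℚ) ^ (M + 1) * ((M.factorial : ℕ) : ℚ) * (((k + 1).factorial : ℕ) : ℚ)) := by
  rw [Sdef_eq_B, B_closed]
  have n1 := fact_cast_ne (k + M)
  have n2 := fact_cast_ne M
  have n3 := fact_cast_ne (k + 1)
  have n5 : (2 : ℚ) ^ M ≠ 0 := by positivity
  field_simp
  ring

/-- For every `m ≥ 1` and `M ≥ 0`:
`S_M(m) = ((2m−1)!/(m−1)!)·S_M(1)`.  In particular, `S_M(m) ≠ 0` for all `m ≥ 1`,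
`M ≥ 0`. -/
theorem stmt_14 (m M : ℕ) (hm : 1 ≤ m) :
    Sdef M m = (((2 * m - 1).factorial : ℚ) / ((m - 1).factorial : ℚ)) * Sdef M 1 ∧
      Sdef M m ≠ 0 := by
  obtain ⟨k, rfl⟩ : ∃ k, m = k + 1 := ⟨m - 1, by omega⟩
  have h1 : 2 * (k + 1) - 1 = 2 * k + 1 := by omega
  have h2 : k + 1 - 1 = k := by omega
  have hS1 : Sdef M 1 = -(dd M) * ((2 * 0 + 2).factorial : ℚ) /
      ((2 : ℚ) ^ (M + 1) * ((M.factorial : ℕ) : ℚ) * (((0 + 1).factorial : ℕ) : ℚ)) :=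
    Sdef_closed M 0
  have hfact2 : ((2 * 0 + 2).factorial : ℚ) = 2 := by norm_num [Nat.factorial]
  have hfact1 : (((0 + 1).factorial : ℕ) : ℚ) = 1 := by norm_num [Nat.factorial]
  rw [hfact2, hfact1, mul_one] at hS1
  have hSm := Sdef_closed M k
  have e1 : ((2 * k + 2).factorial : ℚ)
      = ((2 * k + 2 : ℕ) : ℚ) * ((2 * k + 1).factorial : ℚ) := by
    rw [Nat.factorial_succ]; push_cast; ring
  have e2 : (((k + 1).factorial : ℕ) : ℚ) = ((k + 1 : ℕ) : ℚ) * ((k.factorial : ℕ) : ℚ) := by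
    rw [Nat.factorial_succ]; push_cast; ring
  have n1 := fact_cast_ne k
  have n2 := fact_cast_ne M
  have n3 := fact_cast_ne (2 * k + 1)
  have n4 : ((k + 1 : ℕ) : ℚ) ≠ 0 := by positivity
  have n5 : (2 : ℚ) ^ (M + 1) ≠ 0 := by positivity
  have n6 := dd_ne_zero M
  constructor
  · rw [hSm, hS1, h1, h2, e1, e2]
    field_simp
    push_cast
    ring
  · rw [hSm, e1, e2]
    apply div_ne_zero
    · apply mul_ne_zero
      · exact neg_ne_zero.mpr n6
      · apply mul_ne_zero
        · positivity
        · exact n3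
    · apply mul_ne_zero (mul_ne_zero n5 n2) (mul_ne_zero n4 n1)
end

section
/- For every m ≥ 2 and M ≥ 0: S_M(m) = 2(2m−1)·S_M(m−1). -/
open Finset

namespace Sdef

def summand (M n r : ℕ) : ℚ :=
  (-1 / 4 : ℚ) ^ r * ((2 * n + 2 * r + 1).factorial : ℚ) /
      ((r.factorial : ℚ) * ((n + r).factorial : ℚ)) *
    ((n + M).choose (n + r) : ℚ)

theorem succ_eq_sum_summand (M n : ℕ) :
    Sdef M (n + 1) = ∑ r ∈ range (M + 1), summand M n r := by
  refine sum_congr rfl fun r _ => ?_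
  rw [summand, show 2 * (n + 1) + 2 * r - 1 = 2 * n + 2 * r + 1 by omega,
    show n + 1 + r - 1 = n + r by omega, Nat.add_sub_cancel]

theorem summand_eq_zero_of_lt {M r : ℕ} (n : ℕ) (h : M < r) : summand M n r = 0 := by
  rw [summand, Nat.choose_eq_zero_of_lt (by omega), Nat.cast_zero, mul_zero]

theorem summand_succ_left (M n r : ℕ) :
    summand M (n + 1) r =
      2 * (2 * n + 2 * r + 3) * (n + M + 1) / (n + r + 1) * summand M n r := by
  have hchoose : ((n + M + 1).choose (n + r + 1) : ℚ) =
      (n + M + 1) * (n + M).choose (n + r) / (n + r + 1) := by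
    rw [eq_div_iff (by positivity)]
    exact_mod_cast (Nat.add_one_mul_choose_eq (n + M) (n + r)).symm
  rw [summand, summand, show 2 * (n + 1) + 2 * r + 1 = 2 * n + 2 * r + 1 + 1 + 1 by ring,
    show n + 1 + r = n + r + 1 by ring, show n + 1 + M = n + M + 1 by ring, hchoose]
  simp only [Nat.factorial_succ]
  push_cast
  field_simp
  ring

theorem summand_succ_right {M r : ℕ} (n : ℕ) (hr : r ≤ M) :
    summand M n (r + 1) =
      -((2 * n + 2 * r + 3) * ((M : ℚ) - r)) / (2 * (r + 1) * (n + r + 1)) *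
        summand M n r := by
  have hchoose : ((n + M).choose (n + r + 1) : ℚ) =
      (n + M).choose (n + r) * ((M : ℚ) - r) / (n + r + 1) := by
    rw [eq_div_iff (by positivity), ← Nat.cast_sub hr, show M - r = n + M - (n + r) by omega]
    exact_mod_cast Nat.choose_succ_right_eq (n + M) (n + r)
  rw [summand, summand, show 2 * n + 2 * (r + 1) + 1 = 2 * n + 2 * r + 1 + 1 + 1 by ring,
    show n + (r + 1) = n + r + 1 by ring, hchoose, pow_succ]
  simp only [Nat.factorial_succ]
  push_cast
  field_simp
  ring

theorem summand_succ_left_sub {M r : ℕ} (n : ℕ) (hr : r ≤ M) :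
    summand M (n + 1) r - 2 * (2 * n + 3) * summand M n r =
      4 * r * summand M n r - 4 * (r + 1 : ℕ) * summand M n (r + 1) := by
  rw [summand_succ_left, summand_succ_right n hr]
  push_cast
  field_simp
  ring

theorem add_two (M n : ℕ) : Sdef M (n + 2) = 2 * (2 * n + 3) * Sdef M (n + 1) := by
  have htelescope : ∑ r ∈ range (M + 1),
      (summand M (n + 1) r - 2 * (2 * n + 3) * summand M n r) = 0 := by
    rw [sum_congr rfl fun r hr => summand_succ_left_sub n (Nat.lt_succ_iff.mp (mem_range.mp hr)),
      sum_range_sub' (fun r => 4 * (r : ℚ) * summand M n r),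
      summand_eq_zero_of_lt n (Nat.lt_succ_self M)]
    simp
  rw [sum_sub_distrib, ← mul_sum, sub_eq_zero] at htelescope
  rw [succ_eq_sum_summand, succ_eq_sum_summand, htelescope]

end Sdef

/-- For every `m ≥ 2` and `M ≥ 0`: `S_M(m) = 2(2m−1)·S_M(m−1)`. -/
theorem stmt_15 (m M : ℕ) (hm : 2 ≤ m) :
    Sdef M m = 2 * (2 * (m : ℚ) - 1) * Sdef M (m - 1) := by
  obtain ⟨n, rfl⟩ : ∃ n, m = n + 2 := ⟨m - 2, by omega⟩
  rw [Sdef.add_two, show n + 2 - 1 = n + 1 by omega]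
  push_cast
  ring
end

section
/- For all integers M ≥ 1 and 1 ≤ q ≤ M: S_M(1) = (∏_{j=1}^{q} (2j−3) / 2^q) · Σ_{r=0}^{M−q} (−1/4)^r · (2r+1)! / ((r+q)!·r!) · C(M−q, r). -/
/-!
With `c_q(r) = (-1/4)^r (2r+1)! / ((r+q)! r!)`, both sides are binomial transforms
`Σ_r c_q(r) C(n, r)`, and `S_M(1)` is the one with `q = 0`, `n = M`. Pascal's rule turns the
transform of `c` at `n + 1` into the transform of `r ↦ c(r) + c(r+1)` at `n`, and the ratio
`c_q(r+1) / c_q(r) = -(2r+3) / (2(r+q+1))` gives `c_q(r) + c_q(r+1) = (2q-1)/2 · c_{q+1}(r)`.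
Going from `c_{j-1}` to `c_j` therefore pulls out the factor `(2j-3)/2`.
-/

open Finset

def binomialTransform {R : Type*} [CommSemiring R] (a : ℕ → R) (n : ℕ) : R :=
  ∑ r ∈ range (n + 1), a r * n.choose r

theorem binomialTransform_succ {R : Type*} [CommSemiring R] (a : ℕ → R) (n : ℕ) :
    binomialTransform a (n + 1) = binomialTransform (fun r => a r + a (r + 1)) n := by
  have hshift : ∑ r ∈ range (n + 1), a (r + 1) * n.choose (r + 1) + a 0
      = ∑ r ∈ range (n + 1), a r * n.choose r := by
    have := sum_range_succ' (fun r => a r * n.choose r) (n + 1)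
    rw [sum_range_succ, Nat.choose_succ_self, Nat.choose_zero_right, Nat.cast_zero, mul_zero,
      add_zero, Nat.cast_one, mul_one] at this
    exact this.symm
  unfold binomialTransform
  rw [sum_range_succ' _ (n + 1)]
  simp only [Nat.choose_succ_succ, Nat.cast_add, mul_add, add_mul, sum_add_distrib,
    Nat.choose_zero_right, Nat.cast_one, mul_one]
  rw [add_assoc, hshift, add_comm]

def centralCoeff (q r : ℕ) : ℚ :=
  (-1 / 4 : ℚ) ^ r * ((2 * r + 1).factorial : ℚ) / (((r + q).factorial : ℚ) * (r.factorial : ℚ))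

theorem centralCoeff_add_centralCoeff_succ (q r : ℕ) :
    centralCoeff q r + centralCoeff q (r + 1) = (2 * q - 1) / 2 * centralCoeff (q + 1) r := by
  unfold centralCoeff
  rw [show 2 * (r + 1) + 1 = 2 * r + 1 + 1 + 1 by ring, show r + 1 + q = r + q + 1 by ring,
    show r + (q + 1) = r + q + 1 by ring]
  simp only [Nat.factorial_succ, Nat.cast_mul, Nat.cast_add, Nat.cast_ofNat, Nat.cast_one]
  field_simp
  ring

theorem binomialTransform_centralCoeff_succ (q n : ℕ) :
    binomialTransform (centralCoeff q) (n + 1)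
      = (2 * q - 1) / 2 * binomialTransform (centralCoeff (q + 1)) n := by
  rw [binomialTransform_succ]
  simp only [binomialTransform, centralCoeff_add_centralCoeff_succ, mul_sum, mul_assoc]

theorem binomialTransform_centralCoeff_zero {M q : ℕ} (hqM : q ≤ M) :
    binomialTransform (centralCoeff 0) M
      = (∏ j ∈ Icc 1 q, (2 * (j : ℚ) - 3)) / 2 ^ q * binomialTransform (centralCoeff q) (M - q) := by
  induction q with
  | zero => simp
  | succ q ih =>
    rw [ih (by omega), show M - q = M - (q + 1) + 1 by omega,
      binomialTransform_centralCoeff_succ, prod_Icc_succ_top (by omega : 1 ≤ q + 1)]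
    push_cast
    ring

theorem Sdef_one_eq_binomialTransform (M : ℕ) :
    Sdef M 1 = binomialTransform (centralCoeff 0) M := by
  unfold Sdef binomialTransform centralCoeff
  refine sum_congr rfl fun r _ => ?_
  rw [show 2 * 1 + 2 * r - 1 = 2 * r + 1 by omega, Nat.add_sub_cancel_left, Nat.sub_self,
    zero_add, zero_add, add_zero, mul_comm ((r.factorial : ℚ))]

theorem stmt_16_general (M q : ℕ) (hqM : q ≤ M) :
    Sdef M 1 =
      (∏ j ∈ Finset.Icc 1 q, (2 * (j : ℚ) - 3)) / 2 ^ q *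
        ∑ r ∈ Finset.range (M - q + 1),
          (-1 / 4 : ℚ) ^ r * ((2 * r + 1).factorial : ℚ) /
              (((r + q).factorial : ℚ) * (r.factorial : ℚ)) *
            ((M - q).choose r : ℚ) := by
  rw [Sdef_one_eq_binomialTransform, binomialTransform_centralCoeff_zero hqM]
  rfl

/-- For all integers `M ≥ 1` and `1 ≤ q ≤ M`:
`S_M(1) = (∏_{j=1}^{q} (2j−3) / 2^q) · Σ_{r=0}^{M−q} (−1/4)^r · (2r+1)! /
((r+q)!·r!) · C(M−q, r)`. -/
theorem stmt_16 (M q : ℕ) (hM : 1 ≤ M) (hq1 : 1 ≤ q) (hqM : q ≤ M) :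
    Sdef M 1 =
      (∏ j ∈ Finset.Icc 1 q, (2 * (j : ℚ) - 3)) / 2 ^ q *
        ∑ r ∈ Finset.range (M - q + 1),
          (-1 / 4 : ℚ) ^ r * ((2 * r + 1).factorial : ℚ) /
              (((r + q).factorial : ℚ) * (r.factorial : ℚ)) *
            ((M - q).choose r : ℚ) :=
  stmt_16_general M q hqM
end

section
/- For all integers n, k, s with 1 ≤ s+1 ≤ k ≤ n, the determinant E_{k,n,s} built from the coefficients of the monic Hermite polynomials satisfies: E_{k,n,s} = 0 if k−s−1 is odd, and E_{k,n,s} = n! / ((n−k+s+1)!·((k−s−1)/2)!·2^{k−s−1}) if k−s−1 is even. -/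
open Polynomial Finset Matrix

lemma B_rec_s17 (n i : ℕ) :
    (hermiteMonic (n+2)).coeff i =
      (X * hermiteMonic (n+1)).coeff i - ((n:ℂ)+1)/2 * (hermiteMonic n).coeff i := by
  rw [hermiteMonic]
  simp [coeff_sub, coeff_C_mul]

lemma B_odd : ∀ n i, ¬ (2 ∣ (n + i)) → (hermiteMonic n).coeff i = 0 := by
  intro n
  induction n using Nat.strong_induction_on with
  | _ n IH =>
    match n with
    | 0 => intro i hi; rw [hermiteMonic, coeff_one, if_neg (by omega)]
    | 1 => intro i hi; rw [hermiteMonic, coeff_X, if_neg (by omega)]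
    | n + 2 =>
      intro i hi
      rw [B_rec_s17]
      match i with
      | 0 =>
        rw [mul_coeff_zero, coeff_X_zero, IH n (by omega) 0 (by omega)]
        ring
      | i + 1 =>
        rw [coeff_X_mul, IH (n+1) (by omega) i (by omega),
          IH n (by omega) (i+1) (by omega)]
        ring

lemma B_gt : ∀ n i, n < i → (hermiteMonic n).coeff i = 0 := by
  intro n
  induction n using Nat.strong_induction_on with
  | _ n IH =>
    match n with
    | 0 => intro i hi; rw [hermiteMonic, coeff_one, if_neg (by omega)]
    | 1 => intro i hi; rw [hermiteMonic, coeff_X, if_neg (by omega)]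
    | n + 2 =>
      intro i hi
      rw [B_rec_s17]
      obtain ⟨i', rfl⟩ : ∃ i', i = i' + 1 := ⟨i - 1, by omega⟩
      rw [coeff_X_mul, IH (n+1) (by omega) i' (by omega), IH n (by omega) (i'+1) (by omega)]
      ring

lemma factC (x : ℕ) : ((x+1).factorial : ℂ) = (x+1) * (x.factorial) := by
  rw [Nat.factorial_succ]; push_cast; ring

lemma factNZ (x : ℕ) : ((x.factorial : ℂ)) ≠ 0 := by
  exact_mod_cast x.factorial_ne_zero

lemma B_even : ∀ n i j, i + 2*j = n →
    (hermiteMonic n).coeff i * ((i.factorial : ℂ) * (j.factorial : ℂ) * 4^j) =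
      (-1)^j * (n.factorial : ℂ) := by
  intro n
  induction n using Nat.strong_induction_on with
  | _ n IH =>
    match n with
    | 0 =>
      intro i j h
      obtain ⟨rfl, rfl⟩ : i = 0 ∧ j = 0 := by omega
      rw [hermiteMonic, coeff_one, if_pos rfl]; norm_num [Nat.factorial]
    | 1 =>
      intro i j h
      obtain ⟨rfl, rfl⟩ : i = 1 ∧ j = 0 := by omega
      rw [hermiteMonic, coeff_X, if_pos rfl]; norm_num [Nat.factorial]
    | n + 2 =>
      intro i j h
      rw [B_rec_s17]
      match i, h with
      | 0, h =>
        obtain ⟨j', rfl⟩ : ∃ j', j = j' + 1 := ⟨j - 1, by omega⟩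
        obtain rfl : n = 2*j' := by omega
        rw [mul_coeff_zero, coeff_X_zero]
        have IH2 := IH (2*j') (by omega) 0 j' (by omega)
        rw [factC (2*j'+1), factC (2*j'), factC j']
        push_cast at IH2 ⊢
        linear_combination (-(((2*(j':ℂ))+1)/2)*(((j':ℂ))+1)*4) * IH2
      | Nat.succ i, h =>
        rw [coeff_X_mul]
        match j, h with
        | 0, h =>
          obtain rfl : i = n + 1 := by omega
          have IH1 := IH (n+1) (by omega) (n+1) 0 rfl
          rw [B_gt n (n+2) (by omega)]
          simp only [Nat.succ_eq_add_one]
          rw [factC (n+1)]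
          push_cast at IH1 ⊢
          linear_combination ((n:ℂ)+2) * IH1
        | Nat.succ j', h =>
          have IH1 := IH (n+1) (by omega) i (j'+1) (by omega)
          have IH2 := IH n (by omega) (i+1) j' (by omega)
          obtain rfl : n = i + 2*j' + 1 := by omega
          simp only [Nat.succ_eq_add_one] at IH1 IH2 ⊢
          rw [factC (i+2*j'+1), factC j'] at IH1
          rw [factC i] at IH2
          rw [show i+2*j'+1+2 = i+2*j'+1+1+1 from by ring, factC (i+2*j'+1+1),
            factC (i+2*j'+1), factC i, factC j']
          push_cast at IH1 IH2 ⊢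
          linear_combination ((i:ℂ)+1) * IH1 +
            (-((((i:ℂ)+2*(j':ℂ)+1)+1)/2)*(((j':ℂ))+1)*4) * IH2

noncomputable def Ment (a c : ℕ) (i j : ℕ) : ℂ :=
  if i = 0 then (hermiteMonic (a+j+2)).coeff c
  else if i ≤ j then (hermiteMonic (a+j+2)).coeff (a+i+1)
  else if j + 1 = i then 1 else 0

noncomputable def Mm (a c m : ℕ) : Matrix (Fin m) (Fin m) ℂ :=
  Matrix.of fun i j => Ment a c (i : ℕ) (j : ℕ)

lemma Ment_shift (a c c' i j : ℕ) (hi : i ≠ 0) :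
    Ment a c (i+1) (j+1) = Ment (a+1) c' i j := by
  unfold Ment
  rw [if_neg (by omega), if_neg hi]
  by_cases h : i ≤ j
  · rw [if_pos (by omega), if_pos h, show a+(j+1)+2 = a+1+j+2 from by ring,
      show a+(i+1)+1 = a+1+i+1 from by ring]
  · rw [if_neg (by omega), if_neg h]
    by_cases h2 : j + 1 = i
    · rw [if_pos (by omega), if_pos h2]
    · rw [if_neg (by omega), if_neg h2]

lemma Ment_shift0 (a c i j : ℕ) :
    Ment a c (i+1) (j+1) = Ment (a+1) (a+2) i j := by
  by_cases hi : i = 0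
  · subst hi
    unfold Ment
    rw [if_neg (by omega), if_pos (by omega), if_pos rfl,
      show a+(j+1)+2 = a+1+j+2 from by ring, show a+0+1+1 = a+2 from by ring]
  · exact Ment_shift a c (a+2) i j hi

lemma Ment_top (a c j : ℕ) : Ment a c 0 (j+1) = Ment (a+1) c 0 j := by
  unfold Ment
  rw [if_pos rfl, if_pos rfl, show a+(j+1)+2 = a+1+j+2 from by ring]

lemma Mm_det_rec (a c m : ℕ) :
    (Mm a c (m+2)).det =
      (hermiteMonic (a+2)).coeff c * (Mm (a+1) (a+2) (m+1)).det -
        (Mm (a+1) c (m+1)).det := by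
  rw [Matrix.det_succ_column_zero]
  rw [Fin.sum_univ_succ, Fin.sum_univ_succ]
  have h0 : (Mm a c (m+2)).submatrix (Fin.succAbove 0) Fin.succ = Mm (a+1) (a+2) (m+1) := by
    ext i j
    simp only [Matrix.submatrix_apply, Fin.succAbove_zero, Mm, Matrix.of_apply,
      Fin.val_succ]
    exact Ment_shift0 a c i j
  have h1 : (Mm a c (m+2)).submatrix (Fin.succAbove 1) Fin.succ = Mm (a+1) c (m+1) := by
    ext i j
    simp only [Matrix.submatrix_apply, Mm, Matrix.of_apply, Fin.val_succ]
    have hcoe : (((1 : Fin (m+2)).succAbove i : Fin (m+2)) : ℕ) =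
        if (i : ℕ) = 0 then 0 else (i : ℕ) + 1 := by
      rw [Fin.succAbove]
      by_cases hz : (i : ℕ) = 0
      · rw [if_pos (by rw [Fin.lt_def]; simp [hz]), if_pos hz]
        simp [hz]
      · rw [if_neg (by rw [Fin.lt_def, Fin.coe_castSucc, Fin.val_one]; omega), if_neg hz]
        rfl
    rw [hcoe]
    by_cases hz : (i : ℕ) = 0
    · rw [if_pos hz, hz]; exact Ment_top a c j
    · rw [if_neg hz]; exact Ment_shift a c c _ j hz
  rw [Fin.succ_zero_eq_one] 
  rw [h0, h1]
  have e00 : (Mm a c (m+2)) 0 0 = (hermiteMonic (a+2)).coeff c := by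
    simp [Mm, Ment]
  have e10 : (Mm a c (m+2)) 1 0 = 1 := by
    simp [Mm, Ment]
  have etail : ∀ i : Fin m, (Mm a c (m+2)) (Fin.succ (Fin.succ i)) 0 = 0 := by
    intro i
    simp only [Mm, Matrix.of_apply, Fin.val_succ, Ment, Fin.val_zero]
    split_ifs <;> simp_all
  rw [e00, e10]
  rw [Finset.sum_eq_zero (fun i _ => by rw [etail i]; ring)]
  simp
  ring

lemma Mm_det_sum : ∀ m a c, (Mm a c (m+1)).det =
    ∑ u ∈ Finset.range (m+1),
      (-1:ℂ)^u * (hermiteMonic (a+u+2)).coeff c * (Mm (a+u+1) (a+u+2) (m-u)).det := by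
  intro m
  induction m with
  | zero =>
    intro a c
    rw [Matrix.det_fin_one, Finset.sum_range_one]
    simp [Mm, Ment, Matrix.det_fin_zero]
  | succ m IHm =>
    intro a c
    rw [Mm_det_rec, Finset.sum_range_succ', IHm (a+1) c]
    have hneg : ∑ u ∈ Finset.range (m+1),
        (-1:ℂ)^(u+1) * (hermiteMonic (a+(u+1)+2)).coeff c *
          (Mm (a+(u+1)+1) (a+(u+1)+2) (m+1-(u+1))).det =
        -∑ u ∈ Finset.range (m+1),
        (-1:ℂ)^u * (hermiteMonic (a+1+u+2)).coeff c *
          (Mm (a+1+u+1) (a+1+u+2) (m-u)).det := by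
      rw [← Finset.sum_neg_distrib]
      apply Finset.sum_congr rfl
      intro u hu
      rw [show a+(u+1)+2 = a+1+u+2 from by ring, show a+(u+1)+1 = a+1+u+1 from by ring,
        show m+1-(u+1) = m-u from by omega]
      ring
    rw [hneg]
    simp only [Nat.add_zero, Nat.sub_zero, pow_zero, one_mul]
    ring

lemma B_even_div (i j : ℕ) :
    (hermiteMonic (i+2*j)).coeff i =
      (-1)^j * ((i+2*j).factorial : ℂ) /
        ((i.factorial : ℂ) * (j.factorial : ℂ) * 4^j) := by
  rw [eq_div_iff (mul_ne_zero (mul_ne_zero (factNZ i) (factNZ j))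
    (pow_ne_zero _ (by norm_num)))]
  exact B_even (i+2*j) i j rfl

noncomputable def dv (a m : ℕ) : ℂ :=
  if 2 ∣ m then ((a+m+1).factorial : ℂ) /
    (((a+1).factorial : ℂ) * ((m/2).factorial : ℂ) * 2^m) else 0

lemma sumPairs (f : ℕ → ℂ) (p : ℕ) :
    ∑ u ∈ Finset.range (2*p), f u = ∑ j ∈ Finset.range p, (f (2*j) + f (2*j+1)) := by
  induction p with
  | zero => simp
  | succ p IH =>
    rw [Finset.sum_range_succ, ← IH, show 2*(p+1) = (2*p+1)+1 from by ring,
      Finset.sum_range_succ, Finset.sum_range_succ]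
    ring

lemma choose_sum (p : ℕ) (hp : p ≠ 0) :
    ∑ j ∈ Finset.range p, (-1:ℂ)^j * (p.choose (j+1) : ℂ) = 1 := by
  have h := Int.alternating_sum_range_choose (n := p)
  rw [if_neg hp, Finset.sum_range_succ'] at h
  have h2 : ∑ j ∈ Finset.range p, (-1:ℤ)^j * (p.choose (j+1) : ℤ) = 1 := by
    have hh : ∑ j ∈ Finset.range p, (-1:ℤ)^(j+1) * (p.choose (j+1) : ℤ) =
        -∑ j ∈ Finset.range p, (-1:ℤ)^j * (p.choose (j+1) : ℤ) := by
      rw [← Finset.sum_neg_distrib]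
      apply Finset.sum_congr rfl
      intro u hu; ring
    rw [hh] at h
    simp at h
    omega
  exact_mod_cast h2

lemma Mm_dval : ∀ m a, (Mm a (a+1) m).det = dv a m := by
  intro m
  induction m using Nat.strong_induction_on with
  | _ m IH =>
    match m with
    | 0 =>
      intro a
      rw [show (Mm a (a+1) 0).det = 1 from Matrix.det_fin_zero]
      rw [dv, if_pos (by omega)]
      norm_num [Nat.factorial]
      rw [div_self (mul_ne_zero (Nat.cast_add_one_ne_zero a) (factNZ a))]
    | m + 1 =>
      intro a
      rw [Mm_det_sum m a (a+1)]
      have hrw : ∀ u ∈ Finset.range (m+1),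
          (-1:ℂ)^u * (hermiteMonic (a+u+2)).coeff (a+1) * (Mm (a+u+1) (a+u+2) (m-u)).det =
          (-1:ℂ)^u * (hermiteMonic (a+u+1+1)).coeff (a+1) * dv (a+u+1) (m-u) := by
        intro u hu
        rw [show a+u+2 = a+u+1+1 from by ring, IH (m-u) (by omega) (a+u+1)]
      rw [Finset.sum_congr rfl hrw]
      rcases Nat.even_or_odd (m+1) with he | ho
      · -- even case
        obtain ⟨p, hp⟩ : ∃ p, m+1 = 2*p := by
          obtain ⟨r, hr⟩ := he; exact ⟨r, by omega⟩
        have hp0 : p ≠ 0 := by omega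
        rw [hp, sumPairs]
        have hterm : ∀ j ∈ Finset.range p,
            ((-1:ℂ)^(2*j) * (hermiteMonic (a+(2*j)+1+1)).coeff (a+1) * dv (a+(2*j)+1) (m-(2*j)) +
             (-1:ℂ)^(2*j+1) * (hermiteMonic (a+(2*j+1)+1+1)).coeff (a+1) * dv (a+(2*j+1)+1) (m-(2*j+1)))
            = ((-1:ℂ)^j * (p.choose (j+1) : ℂ)) *
              (((a+2*p+1).factorial : ℂ) /
                (((a+1).factorial : ℂ) * ((p.factorial) : ℂ) * 4^p)) := by
          intro j hj
          rw [Finset.mem_range] at hj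
          obtain ⟨q, rfl⟩ : ∃ q, p = j+1+q := ⟨p-1-j, by omega⟩
          rw [B_odd (a+2*j+1+1) (a+1) (by omega)]
          simp only [mul_zero, zero_mul, zero_add]
          rw [show a+(2*j+1)+1+1 = (a+1)+2*(j+1) from by ring]
          rw [B_even_div (a+1) (j+1)]
          rw [show m-(2*j+1) = 2*q from by omega]
          rw [dv, if_pos ⟨q, rfl⟩]
          rw [show a+(2*j+1)+1+(2*q)+1 = a+2*(j+1+q)+1 from by ring]
          rw [show a+(2*j+1)+1+1 = (a+1)+2*(j+1) from by ring]
          rw [Nat.mul_div_cancel_left q (by norm_num : 0 < 2)]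
          rw [Nat.cast_choose ℂ (show j+1 ≤ j+1+q from by omega)]
          rw [show j+1+q-(j+1) = q from by omega]
          rw [show ((-1:ℂ))^(2*j+1) = -1 from by rw [pow_succ, pow_mul]; norm_num]
          rw [show ((2:ℂ))^(2*q) = 4^q from by rw [pow_mul]; norm_num]
          have n1 := factNZ (a+1)
          have n2 := factNZ (j+1)
          have n3 := factNZ q
          have n4 := factNZ ((a+1)+2*(j+1))
          have n5 := factNZ (j+1+q)
          have n6 : (4:ℂ) ≠ 0 := by norm_num
          field_simp
          ring
        rw [Finset.sum_congr rfl hterm, ← Finset.sum_mul, choose_sum p hp0, one_mul]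
        rw [dv, if_pos ⟨p, rfl⟩]
        rw [Nat.mul_div_cancel_left p (by norm_num : 0 < 2)]
        rw [show ((2:ℂ))^(2*p) = 4^p from by rw [pow_mul]; norm_num]
      · -- odd case
        obtain ⟨r, hr⟩ := ho
        rw [dv, if_neg (by omega)]
        apply Finset.sum_eq_zero
        intro u hu
        rw [Finset.mem_range] at hu
        rcases Nat.even_or_odd u with h2 | h2
        · obtain ⟨t, ht⟩ := h2
          rw [B_odd (a+u+1+1) (a+1) (by omega)]
          ring
        · obtain ⟨t, ht⟩ := h2
          rw [dv, if_neg (by omega)]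
          ring


/-- For all integers `n, k, s` with `1 ≤ s+1 ≤ k ≤ n`, the determinant
`E_{k,n,s}` built from the coefficients of the monic Hermite polynomials satisfies:
`E_{k,n,s} = 0` if `k−s−1` is odd, and
`E_{k,n,s} = n! / ((n−k+s+1)!·((k−s−1)/2)!·2^{k−s−1})` if `k−s−1` is even. -/
theorem stmt_17 (n k s : ℕ) (hsk : s + 1 ≤ k) (hkn : k ≤ n) :
    (Odd (k - s - 1) → EDet (fun m i => (hermiteMonic m).coeff i) k n s = 0) ∧
    (Even (k - s - 1) →
      EDet (fun m i => (hermiteMonic m).coeff i) k n s =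
        (n.factorial : ℂ) /
          (((n - k + s + 1).factorial : ℂ) * (((k - s - 1) / 2).factorial : ℂ) *
            2 ^ (k - s - 1))) := by
  have hE : EDet (fun m i => (hermiteMonic m).coeff i) k n s =
      (Mm (n-k+s) ((n-k+s)+1) (k-s-1)).det := by
    unfold EDet Mm
    congr 1
    ext i j
    simp only [Matrix.of_apply, Ment]
    by_cases h0 : (i:ℕ) = 0
    · rw [if_pos h0, if_pos (show (i:ℕ) ≤ (j:ℕ) from by omega), h0]
    · rw [if_neg h0]
  rw [hE, Mm_dval]
  have hm : n - k + s + (k - s - 1) + 1 = n := by omega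
  constructor
  · intro hodd
    obtain ⟨r, hr⟩ := hodd
    rw [dv, if_neg (by omega)]
  · intro heven
    obtain ⟨r, hr⟩ := heven
    rw [dv, if_pos (by omega), hm]
end

section
/- For every m ≥ 1, let A be the m×m matrix with rational entries A(i,j) = (−1)^{j−i+1}/(j−i+1)! for j ≥ i−1 (so A(i,i−1) = 1 and A(i,i) = −1) and A(i,j) = 0 for j < i−1. Then det A = (−1)^m/m!. -/
/-!
`A` is the minor of the upper triangular Toeplitz matrix `T(e^{-X})` of size `m + 1` obtained by
deleting its last row and first column. Truncated triangular Toeplitz matrices multiply like the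
power series they come from (they represent multiplication on `R⟦X⟧ ⧸ (X ^ n)`), so
`T(e^{-X})⁻¹ = T(e^X)`, and by Cramer's rule the minor is `(-1)^m` times the corner entry `1/m!`
of `T(e^X)`.
-/

open Finset Matrix PowerSeries

namespace PowerSeries

variable {R : Type*} [CommRing R]

noncomputable def toeplitz (n : ℕ) (φ : R⟦X⟧) : Matrix (Fin n) (Fin n) R :=
  of fun i j => if i ≤ j then coeff ((j : ℕ) - i) φ else 0

variable {n : ℕ} {φ ψ : R⟦X⟧}

theorem toeplitz_apply (i j : Fin n) :
    toeplitz n φ i j = if i ≤ j then coeff ((j : ℕ) - i) φ else 0 :=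
  rfl

theorem toeplitz_isUpperTriangular : (toeplitz n φ).IsUpperTriangular := fun _ _ hji =>
  if_neg (not_le.mpr hji)

theorem det_toeplitz : (toeplitz n φ).det = constantCoeff φ ^ n := by
  rw [det_of_isUpperTriangular toeplitz_isUpperTriangular]
  simp [toeplitz_apply]

theorem toeplitz_one : toeplitz n (1 : R⟦X⟧) = 1 := by
  ext i j
  simp only [toeplitz_apply, coeff_one, one_apply, Fin.le_iff_val_le_val, Fin.ext_iff]
  split_ifs <;> first | rfl | omega

theorem toeplitz_mul : toeplitz n (φ * ψ) = toeplitz n φ * toeplitz n ψ := by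
  ext i k
  simp only [toeplitz_apply, mul_apply, ite_mul, zero_mul, mul_ite, mul_zero,
    Fin.le_iff_val_le_val, ← ite_and]
  rw [Fin.sum_univ_eq_sum_range
      (fun j => if j ≤ k ∧ (i : ℕ) ≤ j then coeff (j - i) φ * coeff (k - j) ψ else 0),
    ← sum_filter]
  split_ifs with hik
  · have hIco : {j ∈ range n | j ≤ (k : ℕ) ∧ (i : ℕ) ≤ j} = Ico (i : ℕ) (k + 1) := by
      ext j
      simp only [mem_filter, mem_Ico, mem_range]
      omega
    rw [hIco, sum_Ico_eq_sum_range, coeff_mul, Nat.sum_antidiagonal_eq_sum_range_succ_mk]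
    refine sum_congr (by congr 1; omega) fun t _ => ?_
    congr 3 <;> omega
  · refine (sum_eq_zero fun j hj => ?_).symm
    simp only [mem_filter] at hj
    omega

theorem det_toeplitz_submatrix_castSucc_succ (h : φ * ψ = 1) :
    ((toeplitz (n + 1) φ).submatrix Fin.castSucc Fin.succ).det =
      (-1) ^ n * constantCoeff φ ^ (n + 1) * coeff n ψ := by
  have hadj : adjugate (toeplitz (n + 1) φ) = constantCoeff φ ^ (n + 1) • toeplitz (n + 1) ψ :=
    calc adjugate (toeplitz (n + 1) φ)
        = adjugate (toeplitz (n + 1) φ) * (toeplitz (n + 1) φ * toeplitz (n + 1) ψ) := by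
          rw [← toeplitz_mul, h, toeplitz_one, mul_one]
      _ = constantCoeff φ ^ (n + 1) • toeplitz (n + 1) ψ := by
          rw [← mul_assoc, adjugate_mul, smul_mul_assoc, one_mul, det_toeplitz]
  have hentry := congrFun (congrFun hadj 0) (Fin.last n)
  rw [adjugate_fin_succ_eq_det_submatrix, Fin.succAbove_last, Fin.succAbove_zero,
    Matrix.smul_apply, smul_eq_mul, toeplitz_apply, if_pos (Fin.zero_le _), Fin.val_last,
    Fin.val_zero, Nat.sub_zero, add_zero] at hentry
  rw [mul_assoc, ← hentry, ← mul_assoc, ← mul_pow, neg_one_mul, neg_neg, one_pow, one_mul]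

theorem coeff_evalNegHom_exp (n : ℕ) :
    coeff n (evalNegHom (exp ℚ)) = (-1) ^ n / n.factorial := by
  simp [evalNegHom, coeff_rescale, coeff_exp, div_eq_mul_inv]

end PowerSeries

theorem stmt_18_general (m : ℕ) (A : Matrix (Fin m) (Fin m) ℚ)
    (hA0 : ∀ i j : Fin m, (j : ℕ) + 1 < (i : ℕ) → A i j = 0)
    (hA : ∀ i j : Fin m, (i : ℕ) ≤ (j : ℕ) + 1 →
      A i j = (-1 : ℚ) ^ ((j : ℕ) + 1 - (i : ℕ)) / (((j : ℕ) + 1 - (i : ℕ)).factorial : ℚ)) :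
    A.det = (-1 : ℚ) ^ m / (m.factorial : ℚ) := by
  have hA' : A = (toeplitz (m + 1) (evalNegHom (exp ℚ))).submatrix Fin.castSucc Fin.succ := by
    ext i j
    simp only [submatrix_apply, toeplitz_apply, Fin.le_iff_val_le_val, Fin.val_castSucc,
      Fin.val_succ]
    by_cases hij : (i : ℕ) ≤ j + 1
    · rw [hA i j hij, if_pos hij, coeff_evalNegHom_exp]
    · rw [hA0 i j (by omega), if_neg hij]
  have hexp : evalNegHom (exp ℚ) * exp ℚ = 1 := by rw [mul_comm, exp_mul_exp_neg_eq_one]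
  rw [hA', det_toeplitz_submatrix_castSucc_succ hexp, ← coeff_zero_eq_constantCoeff_apply,
    coeff_evalNegHom_exp, coeff_exp]
  simp [div_eq_mul_inv]

/-- For every `m ≥ 1`, let `A` be the `m×m` matrix with rational entries
`A(i,j) = (−1)^{j−i+1}/(j−i+1)!` for `j ≥ i−1` (so `A(i,i−1) = 1` and `A(i,i) = −1`)
and `A(i,j) = 0` for `j < i−1`.  Then `det A = (−1)^m/m!`. -/
theorem stmt_18 (m : ℕ) (hm : 1 ≤ m) (A : Matrix (Fin m) (Fin m) ℚ)
    (hA0 : ∀ i j : Fin m, (j : ℕ) + 1 < (i : ℕ) → A i j = 0)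
    (hA : ∀ i j : Fin m, (i : ℕ) ≤ (j : ℕ) + 1 →
      A i j = (-1 : ℚ) ^ ((j : ℕ) + 1 - (i : ℕ)) / (((j : ℕ) + 1 - (i : ℕ)).factorial : ℚ)) :
    A.det = (-1 : ℚ) ^ m / (m.factorial : ℚ) :=
  stmt_18_general m A hA0 hA
end
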